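/- arXiv:1506.03045 — 8 statements merged into one kernel-verified Lean document; each statement's English description precedes it below -/
import Mathlib

section
/- Let S be a nonempty set, (Y,d) a complete metric space, and ε ≥ 0. Suppose h : S → Y, f : Y → Y, g : S → S, and φ : S → [0,∞) are mappings satisfying d(f(h(g(x))), h(x)) ≤ φ(x) for all x ∈ S, d(f(x), f(y)) ≤ ε·d(x,y) for all x,y ∈ Y, and Φ(x) := Σ_{n=0}^{∞} εⁿ·φ(gⁿ(x)) < ∞ for all x ∈ S. Then for every x ∈ S the limit H(x) := lim_{n→∞} (fⁿ ∘ h ∘ gⁿ)(x) exists, and the mapping H : S → Y defined in this way is the unique mapping such that f ∘ H ∘ g = H and d(h(x), H(x)) ≤ Φ(x) for all x ∈ S. -/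
/-- Forti-type fixed point lemma (Lemma 2.1): existence, invariance,
estimate and uniqueness of the limit mapping `H`. -/
theorem forti_lemma {S : Type*} [Nonempty S] {Y : Type*} [MetricSpace Y] [CompleteSpace Y]
    (ε : ℝ) (hε : 0 ≤ ε) (h : S → Y) (f : Y → Y) (g : S → S) (φ : S → ℝ)
    (hφ0 : ∀ x, 0 ≤ φ x)
    (h1 : ∀ x, dist (f (h (g x))) (h x) ≤ φ x)
    (h2 : ∀ u v : Y, dist (f u) (f v) ≤ ε * dist u v)
    (h3 : ∀ x, Summable (fun n : ℕ => ε ^ n * φ (g^[n] x))) :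
    ∃ H : S → Y,
      (∀ x, Filter.Tendsto (fun n : ℕ => f^[n] (h (g^[n] x))) Filter.atTop (nhds (H x))) ∧
      (∀ x, f (H (g x)) = H x) ∧
      (∀ x, dist (h x) (H x) ≤ ∑' n : ℕ, ε ^ n * φ (g^[n] x)) ∧
      ∀ G : S → Y, (∀ x, f (G (g x)) = G x) →
        (∀ x, dist (h x) (G x) ≤ ∑' n : ℕ, ε ^ n * φ (g^[n] x)) → G = H := by
  classical
  -- f is continuous (Lipschitz)
  have hflip : LipschitzWith ε.toNNReal f := by
    apply LipschitzWith.of_dist_le_mul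
    intro u v
    rw [Real.coe_toNNReal ε hε]
    exact h2 u v
  have hfcont : Continuous f := hflip.continuous
  -- iterates of f are ε^n-Lipschitz
  have hfn : ∀ n (u v : Y), dist (f^[n] u) (f^[n] v) ≤ ε ^ n * dist u v := by
    intro n
    induction n with
    | zero => intro u v; simp
    | succ n ih =>
      intro u v
      rw [Function.iterate_succ_apply', Function.iterate_succ_apply']
      calc dist (f (f^[n] u)) (f (f^[n] v)) ≤ ε * dist (f^[n] u) (f^[n] v) := h2 _ _
        _ ≤ ε * (ε ^ n * dist u v) := mul_le_mul_of_nonneg_left (ih u v) hε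
        _ = ε ^ (n + 1) * dist u v := by ring
  have gc : ∀ (n : ℕ) (x : S), g^[n] (g x) = g (g^[n] x) := fun n x => by
    rw [← Function.iterate_succ_apply, Function.iterate_succ_apply']
  set a : S → ℕ → Y := fun x n => f^[n] (h (g^[n] x)) with ha
  have hstep : ∀ x n, dist (a x n) (a x (n + 1)) ≤ ε ^ n * φ (g^[n] x) := by
    intro x n
    have e1 : a x (n + 1) = f^[n] (f (h (g (g^[n] x)))) := by
      simp only [ha, Function.iterate_succ_apply, gc]
    rw [e1]
    calc dist (f^[n] (h (g^[n] x))) (f^[n] (f (h (g (g^[n] x)))))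
        ≤ ε ^ n * dist (h (g^[n] x)) (f (h (g (g^[n] x)))) := hfn n _ _
      _ ≤ ε ^ n * φ (g^[n] x) := by
          apply mul_le_mul_of_nonneg_left _ (pow_nonneg hε n)
          rw [dist_comm]
          exact h1 (g^[n] x)
  have hcauchy : ∀ x, CauchySeq (a x) :=
    fun x => cauchySeq_of_dist_le_of_summable _ (hstep x) (h3 x)
  choose H hH using fun x => cauchySeq_tendsto_of_complete (hcauchy x)
  have hinv : ∀ x, f (H (g x)) = H x := by
    intro x
    have e : (fun n => f (a (g x) n)) = fun n => a x (n + 1) := by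
      funext n
      simp only [ha, Function.iterate_succ_apply', gc]
    have t1 : Filter.Tendsto (fun n => f (a (g x) n)) Filter.atTop (nhds (f (H (g x)))) :=
      (hfcont.tendsto _).comp (hH (g x))
    have t2 : Filter.Tendsto (fun n => a x (n + 1)) Filter.atTop (nhds (H x)) :=
      (hH x).comp (Filter.tendsto_add_atTop_nat 1)
    rw [e] at t1
    exact tendsto_nhds_unique t1 t2
  have hbound : ∀ x, dist (h x) (H x) ≤ ∑' n : ℕ, ε ^ n * φ (g^[n] x) := by
    intro x
    have h0 : a x 0 = h x := by simp [ha]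
    have := dist_le_tsum_of_dist_le_of_tendsto₀ _ (hstep x) (h3 x) (hH x)
    rwa [h0] at this
  refine ⟨H, hH, hinv, hbound, ?_⟩
  intro G hG1 hG2
  -- both G and H satisfy G x = f^[n] (G (g^[n] x))
  have iterinv : ∀ (F : S → Y), (∀ x, f (F (g x)) = F x) →
      ∀ (n : ℕ) x, F x = f^[n] (F (g^[n] x)) := by
    intro F hF n
    induction n with
    | zero => intro x; simp
    | succ n ih =>
      intro x
      rw [ih x, ← hF (g^[n] x), Function.iterate_succ_apply f,
        Function.iterate_succ_apply' g]
  funext x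
  -- tail of the series tends to 0
  set d : ℕ → ℝ := fun k => ε ^ k * φ (g^[k] x) with hd
  have htail : Filter.Tendsto (fun n => ∑' k, d (k + n)) Filter.atTop (nhds 0) :=
    tendsto_sum_nat_add d
  have hdist : ∀ n : ℕ, dist (G x) (H x) ≤ 2 * ∑' k, d (k + n) := by
    intro n
    have hGx := iterinv G hG1 n x
    have hHx := iterinv H hinv n x
    have key : ε ^ n * ∑' k, ε ^ k * φ (g^[k] (g^[n] x)) = ∑' k, d (k + n) := by
      rw [← tsum_mul_left]
      congr 1
      funext k
      rw [hd]
      simp only [← Function.iterate_add_apply g k n x, pow_add]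
      ring
    have hb : dist (G (g^[n] x)) (H (g^[n] x)) ≤ 2 * ∑' k, ε ^ k * φ (g^[k] (g^[n] x)) := by
      calc dist (G (g^[n] x)) (H (g^[n] x))
          ≤ dist (G (g^[n] x)) (h (g^[n] x)) + dist (h (g^[n] x)) (H (g^[n] x)) :=
            dist_triangle _ _ _
        _ ≤ (∑' k, ε ^ k * φ (g^[k] (g^[n] x))) + ∑' k, ε ^ k * φ (g^[k] (g^[n] x)) := by
            gcongr
            · rw [dist_comm]; exact hG2 (g^[n] x)
            · exact hbound (g^[n] x)
        _ = 2 * ∑' k, ε ^ k * φ (g^[k] (g^[n] x)) := by ring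
    calc dist (G x) (H x) = dist (f^[n] (G (g^[n] x))) (f^[n] (H (g^[n] x))) := by
          rw [← hGx, ← hHx]
      _ ≤ ε ^ n * dist (G (g^[n] x)) (H (g^[n] x)) := hfn n _ _
      _ ≤ ε ^ n * (2 * ∑' k, ε ^ k * φ (g^[k] (g^[n] x))) :=
          mul_le_mul_of_nonneg_left hb (pow_nonneg hε n)
      _ = 2 * ∑' k, d (k + n) := by rw [← key]; ring
  have h2t : Filter.Tendsto (fun n => 2 * ∑' k, d (k + n)) Filter.atTop (nhds 0) := by
    simpa using htail.const_mul 2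
  have : dist (G x) (H x) ≤ 0 := ge_of_tendsto' h2t hdist
  have := le_antisymm this dist_nonneg
  exact eq_of_dist_eq_zero this
end

section
/- Let X be a normed algebra over ℂ and Y a Banach algebra over ℂ. Let Λ₀ ⊆ ℂ be a bounded set with the property that every additive function g : ℂ → Y that is bounded on Λ₀ is continuous. If f : X → Y is an additive function such that f(λx) = λf(x) for all x ∈ X and all λ ∈ Λ₀, then f is ℂ-linear. -/
open Cardinal in
/-- there exists a `ℚ`-linear "coordinate" on `ℝ` killing one basis element
and sending another to 1; used to build discontinuous additive maps. -/
lemma exists_two_basis_elements :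
    ∃ b b' : Module.Basis.ofVectorSpaceIndex ℚ ℝ, b ≠ b' := by
  have hrank : Module.rank ℚ ℝ = continuum := Real.rank_rat_real
  have hmk : #(Module.Basis.ofVectorSpaceIndex ℚ ℝ) = Module.rank ℚ ℝ :=
    (Module.Basis.ofVectorSpace ℚ ℝ).mk_eq_rank''
  have h1 : (1 : Cardinal) < #(Module.Basis.ofVectorSpaceIndex ℚ ℝ) := by
    rw [hmk, hrank]; exact_mod_cast nat_lt_continuum 1
  have : Nontrivial (Module.Basis.ofVectorSpaceIndex ℚ ℝ) :=
    Cardinal.one_lt_iff_nontrivial.mp h1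
  obtain ⟨b, b', h⟩ := this
  exact ⟨b, b', h⟩

/-- Lemma 2.2: an additive map `f : X → Y` between complex normed algebras that is
`λ`-homogeneous for all `λ` in a bounded set `Λ₀` on which boundedness of additive
functions `ℂ → Y` implies continuity, is `ℂ`-linear. -/
theorem additive_hom_on_bounded_set_is_linear
    {X Y : Type*} [NormedRing X] [NormedAlgebra ℂ X]
    [NormedRing Y] [NormedAlgebra ℂ Y] [CompleteSpace Y]
    (Λ₀ : Set ℂ) (hbd : Bornology.IsBounded Λ₀)
    (hprop : ∀ g : ℂ → Y, (∀ s t : ℂ, g (s + t) = g s + g t) →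
      (∃ C : ℝ, ∀ μ ∈ Λ₀, ‖g μ‖ ≤ C) → Continuous g)
    (f : X → Y) (hadd : ∀ x y : X, f (x + y) = f x + f y)
    (hhom : ∀ x : X, ∀ μ ∈ Λ₀, f (μ • x) = μ • f x) :
    ∀ (c : ℂ) (x : X), f (c • x) = c • f x := by
  intro c x
  -- the additive map λ ↦ f (λ • x)
  have gadd : ∀ s t : ℂ, f ((s + t) • x) = f (s • x) + f (t • x) := by
    intro s t; rw [add_smul, hadd]
  obtain ⟨R, hR⟩ := hbd.exists_norm_le
  have gbd : ∃ C : ℝ, ∀ μ ∈ Λ₀, ‖f (μ • x)‖ ≤ C := by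
    refine ⟨R * ‖f x‖, fun μ hμ => ?_⟩
    rw [hhom x μ hμ]
    calc ‖μ • f x‖ ≤ ‖μ‖ * ‖f x‖ := norm_smul_le μ (f x)
      _ ≤ R * ‖f x‖ := by
        exact mul_le_mul_of_nonneg_right (hR μ hμ) (norm_nonneg _)
  have gcont : Continuous (fun lam : ℂ => f (lam • x)) := hprop _ gadd gbd
  set G : ℂ →+ Y := AddMonoidHom.mk' (fun lam : ℂ => f (lam • x)) gadd with hG
  have gl := G.toRealLinearMap gcont
  have glapp : ∀ lam : ℂ, G.toRealLinearMap gcont lam = f (lam • x) := by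
    intro lam; rfl
  by_cases hcase : ∃ μ₀ ∈ Λ₀, μ₀.im ≠ 0
  · obtain ⟨μ₀, hμ₀, him⟩ := hcase
    -- write c = a • 1 + b • μ₀ with a b real
    set b : ℝ := c.im / μ₀.im with hb
    set a : ℝ := c.re - b * μ₀.re with ha
    have hc : c = a • (1 : ℂ) + b • μ₀ := by
      apply Complex.ext <;> simp [ha, hb, Complex.real_smul] <;>
        field_simp
    have := glapp c
    rw [hc] at this ⊢
    rw [map_add, map_smul, map_smul, glapp, glapp] at this
    rw [← this, one_smul, hhom x μ₀ hμ₀]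
    simp only [add_smul, smul_assoc, mul_smul, Complex.coe_smul, one_smul]
  · -- Λ₀ ⊆ ℝ; derive a contradiction from the existence of a discontinuous
    -- additive map ℂ → Y, unless f (c • x) = c • f x.
    push_neg at hcase
    by_contra hne
    set y : Y := f (c • x) - c • f x with hy
    have hy0 : y ≠ 0 := sub_ne_zero.mpr hne
    obtain ⟨i0, i1, hii⟩ := exists_two_basis_elements
    set B := Module.Basis.ofVectorSpace ℚ ℝ with hB
    set φ : ℝ → Y := fun t => ((B.coord i0 t : ℚ) : ℝ) • y with hφ
    have φadd : ∀ s t : ℝ, φ (s + t) = φ s + φ t := by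
      intro s t; simp [hφ, add_smul]
    set g : ℂ → Y := fun lam => φ lam.im with hg
    have gadd2 : ∀ s t : ℂ, g (s + t) = g s + g t := by
      intro s t; simp [hg, Complex.add_im, φadd]
    have gbd2 : ∃ C : ℝ, ∀ μ ∈ Λ₀, ‖g μ‖ ≤ C := by
      refine ⟨0, fun μ hμ => ?_⟩
      have : μ.im = 0 := hcase μ hμ
      simp [hg, this, hφ]
    have gcont2 : Continuous g := hprop g gadd2 gbd2
    have φcont : Continuous φ := by
      have he : φ = fun t : ℝ => g (t * Complex.I) := by
        funext t; simp only [hg, Complex.mul_im, Complex.ofReal_re,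
          Complex.I_im, Complex.ofReal_im, Complex.I_re, mul_one, mul_zero,
          add_zero]
      rw [he]
      exact gcont2.comp (Complex.continuous_ofReal.mul continuous_const)
    set Φ : ℝ →+ Y := AddMonoidHom.mk' φ φadd with hΦ
    have Φlapp : ∀ t : ℝ, Φ.toRealLinearMap φcont t = φ t := by
      intro t; rfl
    have hlin : ∀ t : ℝ, φ t = t • φ 1 := by
      intro t
      have : Φ.toRealLinearMap φcont t = t • Φ.toRealLinearMap φcont 1 := by
        rw [← map_smul]; norm_num
      rwa [Φlapp, Φlapp] at this
    -- φ (i1) = 0, i1 ≠ 0 ⇒ φ 1 = 0 ⇒ φ (i0) = 0, but φ (i0) = y ≠ 0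
    have hco : ∀ j : Module.Basis.ofVectorSpaceIndex ℚ ℝ, B j = (j : ℝ) := fun j =>
      Module.Basis.ofVectorSpace_apply_self ℚ ℝ j
    have hrep1 : B.repr ((i1 : ℝ)) i0 = 0 := by
      rw [← hco i1, Module.Basis.repr_self, Finsupp.single_apply_eq_zero]
      intro h; exact absurd h.symm hii.symm
    have hφi1 : φ (i1 : ℝ) = 0 := by
      simp [hφ, Module.Basis.coord_apply, hrep1]
    have hi1ne : (i1 : ℝ) ≠ 0 := by
      have := B.ne_zero i1
      rwa [hco i1] at this
    have hφ1 : φ 1 = 0 := by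
      have := hlin (i1 : ℝ)
      rw [hφi1] at this
      rcases smul_eq_zero.mp this.symm with h | h
      · exact absurd h hi1ne
      · exact h
    have hrep0 : B.repr ((i0 : ℝ)) i0 = 1 := by
      rw [← hco i0, Module.Basis.repr_self, Finsupp.single_apply]
      simp
    have hφi0 : φ (i0 : ℝ) = y := by
      simp [hφ, Module.Basis.coord_apply, hrep0]
    rw [hlin, hφ1, smul_zero] at hφi0
    exact hy0 hφi0.symm
end

section
/- Let X be a Banach algebra. Let φ, ψ : X² → [0,∞) and f : X → X with f(0) = 0 satisfy ‖f(xyx) − f(x)yx − xf(y)x − xyf(x)‖ ≤ ψ(x,y) and ‖f(2x+y) + f(x+2y) − f(3x) − f(3y)‖ ≤ φ(x,y) for all x,y ∈ X. Assume that there exists 0 < L < 1 such that (1/2)φ(2x,2y) ≤ L·φ(x,y) and lim_{k→∞} 8^{-k} ψ(2ᵏx, 2ᵏy) = 0 for all x,y ∈ X. Then there exists a unique Jordan triple derivation H : X → X such that ‖f(x) − H(x)‖ ≤ Φ(x)/(2 − 2L) for all x ∈ X, where Φ(x) = φ(x/2, 0) + φ(−x/2, 0) + φ(x/2, −x/2)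 + φ(−x/3, 2x/3). -/
open Filter

private noncomputable def Phi {X : Type*} [Zero X] [SMul ℝ X] (φ : X → X → ℝ) (x : X) : ℝ :=
  φ (((1 : ℝ) / 2) • x) 0 + φ ((-(1 : ℝ) / 2) • x) 0 +
    φ (((1 : ℝ) / 2) • x) ((-(1 : ℝ) / 2) • x) +
    φ ((-(1 : ℝ) / 3) • x) (((2 : ℝ) / 3) • x)

private lemma additive_of_E {V W : Type*} [AddCommGroup V] [Module ℝ V] [AddCommGroup W]
    {H : V → W} (h0 : H 0 = 0)
    (hE : ∀ x y : V, H ((2:ℝ)•x + y) + H (x + (2:ℝ)•y) = H ((3:ℝ)•x) + H ((3:ℝ)•y)) :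
    ∀ x y : V, H (x + y) = H x + H y := by
  have P : ∀ u v : V, H u + H v = H ((2:ℝ)•u - v) + H ((2:ℝ)•v - u) := by
    intro u v
    have := hE (((1:ℝ)/3)•((2:ℝ)•u - v)) (((1:ℝ)/3)•((2:ℝ)•v - u))
    rw [show (2:ℝ)•(((1:ℝ)/3)•((2:ℝ)•u - v)) + ((1:ℝ)/3)•((2:ℝ)•v - u) = u from by module,
        show ((1:ℝ)/3)•((2:ℝ)•u - v) + (2:ℝ)•(((1:ℝ)/3)•((2:ℝ)•v - u)) = v from by module,
        show (3:ℝ)•(((1:ℝ)/3)•((2:ℝ)•u - v)) = (2:ℝ)•u - v from by module,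
        show (3:ℝ)•(((1:ℝ)/3)•((2:ℝ)•v - u)) = (2:ℝ)•v - u from by module] at this
    exact this
  have ha : ∀ u : V, H u = H ((2:ℝ)•u) + H (-u) := by
    intro u
    have := P u 0
    rw [h0, add_zero, sub_zero, smul_zero, zero_sub] at this
    exact this
  have odd : ∀ w : V, H (-w) = - H w := by
    intro w
    have h1 := ha (((1:ℝ)/2)•w)
    have h2 := ha (-(((1:ℝ)/2)•w))
    rw [show (2:ℝ)•(((1:ℝ)/2)•w) = w from by module] at h1
    rw [show (2:ℝ)•(-(((1:ℝ)/2)•w)) = -w from by module, neg_neg] at h2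
    rw [h2] at h1
    have hz : H (-w) + H w = 0 := by
      rw [eq_comm, ← sub_eq_zero] at h1
      rw [← h1]; abel
    exact eq_neg_of_add_eq_zero_left hz
  have double : ∀ u : V, H ((2:ℝ)•u) = H u + H u := by
    intro u
    have h1 := ha u
    rw [odd u] at h1
    have h2 := eq_sub_of_add_eq h1.symm
    rw [h2]; abel
  have hv : ∀ x y : V, H (x+y) + H (x+y) = H ((3:ℝ)•y - x) + H ((3:ℝ)•x - y) := by
    intro x y
    have h3 := P (x+y) ((2:ℝ)•y)
    have h4 := P (x+y) ((2:ℝ)•x)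
    rw [show (2:ℝ)•(x+y) - (2:ℝ)•y = (2:ℝ)•x from by module,
        show (2:ℝ)•((2:ℝ)•y) - (x+y) = (3:ℝ)•y - x from by module] at h3
    rw [show (2:ℝ)•(x+y) - (2:ℝ)•x = (2:ℝ)•y from by module,
        show (2:ℝ)•((2:ℝ)•x) - (x+y) = (3:ℝ)•x - y from by module] at h4
    have hsum : (H (x+y) + H ((2:ℝ)•y)) + (H (x+y) + H ((2:ℝ)•x)) =
        (H ((2:ℝ)•x) + H ((3:ℝ)•y - x)) + (H ((2:ℝ)•y) + H ((3:ℝ)•x - y)) := by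
      rw [h3, h4]
    rw [← sub_eq_zero] at hsum ⊢
    rw [← hsum]; abel
  intro x y
  have hv' := hv (((1:ℝ)/8)•((3:ℝ)•y + x)) (((1:ℝ)/8)•((3:ℝ)•x + y))
  rw [show ((1:ℝ)/8)•((3:ℝ)•y + x) + ((1:ℝ)/8)•((3:ℝ)•x + y) = ((1:ℝ)/2)•(x+y) from by module,
      show (3:ℝ)•(((1:ℝ)/8)•((3:ℝ)•x + y)) - ((1:ℝ)/8)•((3:ℝ)•y + x) = x from by module,
      show (3:ℝ)•(((1:ℝ)/8)•((3:ℝ)•y + x)) - ((1:ℝ)/8)•((3:ℝ)•x + y) = y from by module] at hv'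
  calc H (x+y) = H ((2:ℝ)•(((1:ℝ)/2)•(x+y))) := by
        rw [show (2:ℝ)•(((1:ℝ)/2)•(x+y)) = x + y from by module]
    _ = H (((1:ℝ)/2)•(x+y)) + H (((1:ℝ)/2)•(x+y)) := double _
    _ = H x + H y := hv'

/-- Theorem 2.7: existence of a unique Jordan triple derivation `H` near `f`. -/
theorem stability_jordan_triple_derivation
    {X : Type*} [NormedRing X] [NormedAlgebra ℝ X] [CompleteSpace X]
    (f : X → X) (φ ψ : X → X → ℝ)
    (hφ0 : ∀ x y : X, 0 ≤ φ x y) (hψ0 : ∀ x y : X, 0 ≤ ψ x y)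
    (hf0 : f 0 = 0)
    (h1 : ∀ x y : X, ‖f (x * y * x) - f x * y * x - x * f y * x - x * y * f x‖ ≤ ψ x y)
    (h2 : ∀ x y : X, ‖f (2 * x + y) + f (x + 2 * y) - f (3 * x) - f (3 * y)‖ ≤ φ x y)
    (L : ℝ) (hL0 : 0 < L) (hL1 : L < 1)
    (hφL : ∀ x y : X, (1 / 2) * φ (2 * x) (2 * y) ≤ L * φ x y)
    (hψlim : ∀ x y : X,
      Filter.Tendsto (fun k : ℕ => ((8 : ℝ) ^ k)⁻¹ * ψ ((2 : X) ^ k * x) ((2 : X) ^ k * y))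
        Filter.atTop (nhds 0)) :
    ∃! H : X → X,
      ((∀ x y : X, H (x + y) = H x + H y) ∧
        ∀ x y : X, H (x * y * x) = H x * y * x + x * H y * x + x * y * H x) ∧
      ∀ x : X, ‖f x - H x‖ ≤
        (φ (((1 : ℝ) / 2) • x) 0 + φ ((-(1 : ℝ) / 2) • x) 0 +
          φ (((1 : ℝ) / 2) • x) ((-(1 : ℝ) / 2) • x) +
          φ ((-(1 : ℝ) / 3) • x) (((2 : ℝ) / 3) • x)) / (2 - 2 * L) := by
  haveI : Nonempty X := ⟨0⟩
  have m2 : ∀ x : X, (2 : X) * x = (2:ℝ) • x := fun x => by rw [Algebra.smul_def, map_ofNat]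
  have m3 : ∀ x : X, (3 : X) * x = (3:ℝ) • x := fun x => by rw [Algebra.smul_def, map_ofNat]
  have mp2 : ∀ (k : ℕ) (x : X), (2:X)^k * x = ((2:ℝ)^k) • x := fun k x => by
    rw [Algebra.smul_def, map_pow, map_ofNat]
  -- φ doubling
  have hφ2 : ∀ a b : X, φ ((2:ℝ)•a) ((2:ℝ)•b) ≤ 2*L*φ a b := by
    intro a b
    have := hφL a b
    rw [m2, m2] at this
    linarith
  have hφpow : ∀ (n : ℕ) (a b : X), φ ((2:ℝ)^n • a) ((2:ℝ)^n • b) ≤ (2*L)^n * φ a b := by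
    intro n
    induction n with
    | zero => intro a b; simp
    | succ n ih =>
      intro a b
      have e : ∀ c : X, (2:ℝ)^(n+1) • c = (2:ℝ)^n • ((2:ℝ)•c) := fun c => by
        rw [smul_smul, ← pow_succ]
      rw [e a, e b]
      calc φ ((2:ℝ)^n • ((2:ℝ)•a)) ((2:ℝ)^n • ((2:ℝ)•b)) ≤ (2*L)^n * φ ((2:ℝ)•a) ((2:ℝ)•b) :=
            ih _ _
        _ ≤ (2*L)^n * (2*L*φ a b) := by
            apply mul_le_mul_of_nonneg_left (hφ2 a b) (by positivity)
        _ = (2*L)^(n+1) * φ a b := by ring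
  have Φ0 : ∀ x : X, 0 ≤ Phi φ x := by
    intro x
    have a1 := hφ0 (((1:ℝ)/2)•x) 0
    have a2 := hφ0 ((-(1:ℝ)/2)•x) 0
    have a3 := hφ0 (((1:ℝ)/2)•x) ((-(1:ℝ)/2)•x)
    have a4 := hφ0 ((-(1:ℝ)/3)•x) (((2:ℝ)/3)•x)
    unfold Phi; linarith
  have hΦ2 : ∀ x : X, Phi φ ((2:ℝ)•x) ≤ (2*L) * Phi φ x := by
    intro x
    have t1 := hφ2 (((1:ℝ)/2)•x) 0
    have t2 := hφ2 ((-(1:ℝ)/2)•x) 0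
    have t3 := hφ2 (((1:ℝ)/2)•x) ((-(1:ℝ)/2)•x)
    have t4 := hφ2 ((-(1:ℝ)/3)•x) (((2:ℝ)/3)•x)
    rw [smul_zero, smul_comm] at t1 t2
    rw [smul_comm (2:ℝ) ((1:ℝ)/2), smul_comm (2:ℝ) (-(1:ℝ)/2)] at t3
    rw [smul_comm (2:ℝ) (-(1:ℝ)/3), smul_comm (2:ℝ) ((2:ℝ)/3)] at t4
    unfold Phi; linarith
  have hΦpow : ∀ (n : ℕ) (x : X), Phi φ ((2:ℝ)^n • x) ≤ (2*L)^n * Phi φ x := by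
    intro n
    induction n with
    | zero => intro x; simp
    | succ n ih =>
      intro x
      rw [show (2:ℝ)^(n+1) • x = (2:ℝ)^n • ((2:ℝ)•x) from by rw [smul_smul, ← pow_succ]]
      calc Phi φ ((2:ℝ)^n • ((2:ℝ)•x)) ≤ (2*L)^n * Phi φ ((2:ℝ)•x) := ih _
        _ ≤ (2*L)^n * (2*L * Phi φ x) := mul_le_mul_of_nonneg_left (hΦ2 x) (by positivity)
        _ = (2*L)^(n+1) * Phi φ x := by ring
  -- key estimate
  have key : ∀ x : X, ‖f x + f x - f ((2:ℝ)•x)‖ ≤ Phi φ x := by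
    intro x
    have A := h2 (((1:ℝ)/2)•x) 0
    simp only [mul_zero, add_zero, hf0, sub_zero] at A
    rw [show (2:X)*(((1:ℝ)/2)•x) = x from by rw [m2]; module,
        show (3:X)*(((1:ℝ)/2)•x) = ((3:ℝ)/2)•x from by rw [m3]; module] at A
    have B := h2 ((-(1:ℝ)/2)•x) 0
    simp only [mul_zero, add_zero, hf0, sub_zero] at B
    rw [show (2:X)*((-(1:ℝ)/2)•x) = -x from by rw [m2]; module,
        show (3:X)*((-(1:ℝ)/2)•x) = (-(3:ℝ)/2)•x from by rw [m3]; module] at B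
    have C := h2 (((1:ℝ)/2)•x) ((-(1:ℝ)/2)•x)
    rw [show (2:X)*(((1:ℝ)/2)•x) + (-(1:ℝ)/2)•x = ((1:ℝ)/2)•x from by rw [m2]; module,
        show ((1:ℝ)/2)•x + (2:X)*((-(1:ℝ)/2)•x) = (-(1:ℝ)/2)•x from by rw [m2]; module,
        show (3:X)*(((1:ℝ)/2)•x) = ((3:ℝ)/2)•x from by rw [m3]; module,
        show (3:X)*((-(1:ℝ)/2)•x) = (-(3:ℝ)/2)•x from by rw [m3]; module] at C
    have D := h2 ((-(1:ℝ)/3)•x) (((2:ℝ)/3)•x)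
    rw [show (2:X)*((-(1:ℝ)/3)•x) + ((2:ℝ)/3)•x = 0 from by rw [m2]; module,
        show (-(1:ℝ)/3)•x + (2:X)*(((2:ℝ)/3)•x) = x from by rw [m2]; module,
        show (3:X)*((-(1:ℝ)/3)•x) = -x from by rw [m3]; module,
        show (3:X)*(((2:ℝ)/3)•x) = (2:ℝ)•x from by rw [m3]; module, hf0, zero_add] at D
    set a := f x + f (((1:ℝ)/2)•x) - f (((3:ℝ)/2)•x) with hadef
    set b := f (-x) + f ((-(1:ℝ)/2)•x) - f ((-(3:ℝ)/2)•x) with hbdef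
    set c := f (((1:ℝ)/2)•x) + f ((-(1:ℝ)/2)•x) - f (((3:ℝ)/2)•x) - f ((-(3:ℝ)/2)•x) with hcdef
    set d := f x - f (-x) - f ((2:ℝ)•x) with hddef
    have comb : f x + f x - f ((2:ℝ)•x) = a + b - c + d := by
      rw [hadef, hbdef, hcdef, hddef]; abel
    have n1 : ‖a + b - c + d‖ ≤ ‖a‖ + ‖b‖ + ‖c‖ + ‖d‖ := by
      calc ‖a + b - c + d‖ ≤ ‖a + b - c‖ + ‖d‖ := norm_add_le _ _
        _ ≤ (‖a + b‖ + ‖c‖) + ‖d‖ := add_le_add (norm_sub_le _ _) le_rfl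
        _ ≤ ‖a‖ + ‖b‖ + ‖c‖ + ‖d‖ := by
            have := norm_add_le a b; linarith
    rw [comb]
    unfold Phi
    linarith
  -- approximating sequence
  set g : ℕ → X → X := fun n x => ((2:ℝ)^n)⁻¹ • f ((2:ℝ)^n • x) with hgdef
  have hgd : ∀ (n : ℕ) (x : X), ‖g (n+1) x - g n x‖ ≤ (Phi φ x / 2) * L^n := by
    intro n x
    have hpne : ((2:ℝ)^(n+1)) ≠ 0 := by positivity
    have hs : ((2:ℝ)^n)⁻¹ • f ((2:ℝ)^n • x) = ((2:ℝ)^(n+1))⁻¹ • ((2:ℝ) • f ((2:ℝ)^n • x)) := by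
      rw [smul_smul]
      congr 1
      rw [pow_succ]
      field_simp
    have e : g (n+1) x - g n x
        = ((2:ℝ)^(n+1))⁻¹ • (f ((2:ℝ)•((2:ℝ)^n • x)) - ((2:ℝ) • f ((2:ℝ)^n • x))) := by
      simp only [hgdef]
      rw [hs, ← smul_sub, smul_smul, ← pow_succ']
    rw [e, norm_smul]
    have hnorm : ‖((2:ℝ)^(n+1))⁻¹‖ = ((2:ℝ)^(n+1))⁻¹ := by
      rw [Real.norm_eq_abs, abs_of_pos (by positivity)]
    rw [hnorm]
    have hb : ‖f ((2:ℝ)•((2:ℝ)^n • x)) - (2:ℝ) • f ((2:ℝ)^n • x)‖ ≤ (2*L)^n * Phi φ x := by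
      calc ‖f ((2:ℝ)•((2:ℝ)^n • x)) - (2:ℝ) • f ((2:ℝ)^n • x)‖
          = ‖f ((2:ℝ)^n • x) + f ((2:ℝ)^n • x) - f ((2:ℝ)•((2:ℝ)^n • x))‖ := by
            rw [← norm_neg]
            congr 1
            module
        _ ≤ Phi φ ((2:ℝ)^n • x) := key _
        _ ≤ (2*L)^n * Phi φ x := hΦpow n x
    calc ((2:ℝ)^(n+1))⁻¹ * ‖f ((2:ℝ)•((2:ℝ)^n • x)) - (2:ℝ) • f ((2:ℝ)^n • x)‖
        ≤ ((2:ℝ)^(n+1))⁻¹ * ((2*L)^n * Phi φ x) := by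
          apply mul_le_mul_of_nonneg_left hb (by positivity)
      _ = (Phi φ x / 2) * L^n := by
          rw [mul_pow]
          field_simp
          ring
  have hdist : ∀ (x : X) (n : ℕ), dist (g n x) (g (n+1) x) ≤ (Phi φ x / 2) * L^n := by
    intro x n
    rw [dist_eq_norm, norm_sub_rev]
    exact hgd n x
  have hcau : ∀ x : X, CauchySeq (fun n => g n x) :=
    fun x => cauchySeq_of_le_geometric L (Phi φ x / 2) hL1 (hdist x)
  set H : X → X := fun x => limUnder atTop (fun n => g n x) with hHdef
  have hHt : ∀ x : X, Tendsto (fun n => g n x) atTop (nhds (H x)) :=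
    fun x => (hcau x).tendsto_limUnder
  have hbound : ∀ x : X, ‖f x - H x‖ ≤ Phi φ x / (2 - 2*L) := by
    intro x
    have h0 : g 0 x = f x := by simp [hgdef]
    have := dist_le_of_le_geometric_of_tendsto₀ L (Phi φ x / 2) hL1 (hdist x) (hHt x)
    rw [h0, dist_eq_norm] at this
    calc ‖f x - H x‖ ≤ Phi φ x / 2 / (1 - L) := this
      _ = Phi φ x / (2 - 2*L) := by
          rw [div_div]
          ring_nf
  -- H satisfies the additive functional equation
  have hLpow : Tendsto (fun n : ℕ => L^n) atTop (nhds 0) :=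
    tendsto_pow_atTop_nhds_zero_of_lt_one hL0.le hL1
  have hEH : ∀ x y : X, H ((2:ℝ)•x + y) + H (x + (2:ℝ)•y) = H ((3:ℝ)•x) + H ((3:ℝ)•y) := by
    intro x y
    have ht : Tendsto (fun n => (g n ((2:ℝ)•x + y) + g n (x + (2:ℝ)•y)) -
        (g n ((3:ℝ)•x) + g n ((3:ℝ)•y))) atTop
        (nhds ((H ((2:ℝ)•x + y) + H (x + (2:ℝ)•y)) - (H ((3:ℝ)•x) + H ((3:ℝ)•y)))) :=
      ((hHt _).add (hHt _)).sub ((hHt _).add (hHt _))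
    have hbnd : ∀ n : ℕ, ‖(g n ((2:ℝ)•x + y) + g n (x + (2:ℝ)•y)) -
        (g n ((3:ℝ)•x) + g n ((3:ℝ)•y))‖ ≤ φ x y * L^n := by
      intro n
      have e1 : (2:ℝ)^n • ((2:ℝ)•x + y) = (2:X)*((2:ℝ)^n • x) + (2:ℝ)^n • y := by
        rw [m2]; module
      have e2 : (2:ℝ)^n • (x + (2:ℝ)•y) = (2:ℝ)^n • x + (2:X)*((2:ℝ)^n • y) := by
        rw [m2]; module
      have e3 : (2:ℝ)^n • ((3:ℝ)•x) = (3:X)*((2:ℝ)^n • x) := by rw [m3]; module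
      have e4 : (2:ℝ)^n • ((3:ℝ)•y) = (3:X)*((2:ℝ)^n • y) := by rw [m3]; module
      have keq : (g n ((2:ℝ)•x + y) + g n (x + (2:ℝ)•y)) -
          (g n ((3:ℝ)•x) + g n ((3:ℝ)•y)) = ((2:ℝ)^n)⁻¹ •
          (f ((2:X)*((2:ℝ)^n • x) + (2:ℝ)^n • y) + f ((2:ℝ)^n • x + (2:X)*((2:ℝ)^n • y)) -
           f ((3:X)*((2:ℝ)^n • x)) - f ((3:X)*((2:ℝ)^n • y))) := by
        simp only [hgdef, e1, e2, e3, e4, smul_add, smul_sub]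
        abel
      rw [keq, norm_smul, Real.norm_eq_abs, abs_of_pos (by positivity : (0:ℝ) < ((2:ℝ)^n)⁻¹)]
      calc ((2:ℝ)^n)⁻¹ *
          ‖f ((2:X)*((2:ℝ)^n • x) + (2:ℝ)^n • y) + f ((2:ℝ)^n • x + (2:X)*((2:ℝ)^n • y)) -
           f ((3:X)*((2:ℝ)^n • x)) - f ((3:X)*((2:ℝ)^n • y))‖
          ≤ ((2:ℝ)^n)⁻¹ * φ ((2:ℝ)^n • x) ((2:ℝ)^n • y) := by
            apply mul_le_mul_of_nonneg_left (h2 _ _) (by positivity)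
        _ ≤ ((2:ℝ)^n)⁻¹ * ((2*L)^n * φ x y) := by
            apply mul_le_mul_of_nonneg_left (hφpow n x y) (by positivity)
        _ = φ x y * L^n := by
            rw [mul_pow]
            field_simp
    have hz : Tendsto (fun n => (g n ((2:ℝ)•x + y) + g n (x + (2:ℝ)•y)) -
        (g n ((3:ℝ)•x) + g n ((3:ℝ)•y))) atTop (nhds 0) := by
      apply squeeze_zero_norm hbnd
      simpa using hLpow.const_mul (φ x y)
    have := tendsto_nhds_unique ht hz
    rw [sub_eq_zero] at this
    exact this
  have hH0 : H 0 = 0 := by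
    have hg0 : (fun n => g n 0) = fun _ : ℕ => (0:X) := by
      funext n
      simp [hgdef, hf0]
    have := hHt 0
    rw [hg0] at this
    exact tendsto_nhds_unique this tendsto_const_nhds
  have hadd : ∀ x y : X, H (x + y) = H x + H y := additive_of_E hH0 hEH
  -- H is a Jordan triple derivation
  have hjordan : ∀ x y : X, H (x*y*x) = H x * y * x + x * H y * x + x * y * H x := by
    intro x y
    have h3n : Tendsto (fun n : ℕ => 3*n) atTop atTop :=
      tendsto_atTop_mono (fun n => by show n ≤ 3*n; omega) tendsto_id
    have ht1 : Tendsto (fun n => g (3*n) (x*y*x)) atTop (nhds (H (x*y*x))) :=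
      (hHt (x*y*x)).comp h3n
    have ht2 : Tendsto (fun n => g n x * y * x + x * g n y * x + x * y * g n x) atTop
        (nhds (H x * y * x + x * H y * x + x * y * H x)) := by
      apply Tendsto.add
      apply Tendsto.add
      · exact ((hHt x).mul tendsto_const_nhds).mul tendsto_const_nhds
      · exact (tendsto_const_nhds.mul (hHt y)).mul tendsto_const_nhds
      · exact tendsto_const_nhds.mul (hHt x)
    have hbnd : ∀ n : ℕ, ‖g (3*n) (x*y*x) - (g n x * y * x + x * g n y * x + x * y * g n x)‖
        ≤ ((8:ℝ)^n)⁻¹ * ψ ((2:ℝ)^n • x) ((2:ℝ)^n • y) := by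
      intro n
      have hs0 : (0:ℝ) < (2:ℝ)^n := by positivity
      have e0 : (8:ℝ)^n = ((2:ℝ)^n)^3 := by
        rw [show (8:ℝ) = 2^3 from by norm_num, ← pow_mul, mul_comm, pow_mul]
      have hs3 : (2:ℝ)^(3*n) = ((2:ℝ)^n)^3 := by rw [← pow_mul, mul_comm]
      have e1 : g (3*n) (x*y*x) = (((2:ℝ)^n)^3)⁻¹ •
          f (((2:ℝ)^n • x) * ((2:ℝ)^n • y) * ((2:ℝ)^n • x)) := by
        have harg : ((2:ℝ)^n)^3 • (x*y*x) =
            ((2:ℝ)^n • x) * ((2:ℝ)^n • y) * ((2:ℝ)^n • x) := by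
          simp only [smul_mul_assoc, mul_smul_comm, smul_smul]
          match_scalars
          ring
        simp only [hgdef, hs3, harg]
      have e2 : g n x * y * x = (((2:ℝ)^n)^3)⁻¹ •
          (f ((2:ℝ)^n • x) * ((2:ℝ)^n • y) * ((2:ℝ)^n • x)) := by
        simp only [hgdef, smul_mul_assoc, mul_smul_comm, smul_smul]
        match_scalars
        field_simp
      have e3 : x * g n y * x = (((2:ℝ)^n)^3)⁻¹ •
          (((2:ℝ)^n • x) * f ((2:ℝ)^n • y) * ((2:ℝ)^n • x)) := by
        simp only [hgdef, smul_mul_assoc, mul_smul_comm, smul_smul]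
        match_scalars
        field_simp
      have e4 : x * y * g n x = (((2:ℝ)^n)^3)⁻¹ •
          (((2:ℝ)^n • x) * ((2:ℝ)^n • y) * f ((2:ℝ)^n • x)) := by
        simp only [hgdef, smul_mul_assoc, mul_smul_comm, smul_smul]
        match_scalars
        field_simp
      have keq : g (3*n) (x*y*x) - (g n x * y * x + x * g n y * x + x * y * g n x) =
          (((2:ℝ)^n)^3)⁻¹ •
          (f (((2:ℝ)^n • x) * ((2:ℝ)^n • y) * ((2:ℝ)^n • x)) -
           f ((2:ℝ)^n • x) * ((2:ℝ)^n • y) * ((2:ℝ)^n • x) -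
           ((2:ℝ)^n • x) * f ((2:ℝ)^n • y) * ((2:ℝ)^n • x) -
           ((2:ℝ)^n • x) * ((2:ℝ)^n • y) * f ((2:ℝ)^n • x)) := by
        rw [e1, e2, e3, e4, smul_sub, smul_sub, smul_sub]
        abel
      rw [keq, norm_smul, Real.norm_eq_abs, abs_of_pos (by positivity), e0]
      apply mul_le_mul_of_nonneg_left (h1 _ _) (by positivity)
    have hz : Tendsto (fun n => g (3*n) (x*y*x) -
        (g n x * y * x + x * g n y * x + x * y * g n x)) atTop (nhds 0) := by
      apply squeeze_zero_norm hbnd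
      have := hψlim x y
      simp only [mp2] at this
      exact this
    have := tendsto_nhds_unique (ht1.sub ht2) hz
    rw [sub_eq_zero] at this
    exact this
  -- scaling of additive maps
  have hscale : ∀ (K : X → X), (∀ x y : X, K (x + y) = K x + K y) →
      ∀ (n : ℕ) (x : X), K ((2:ℝ)^n • x) = (2:ℝ)^n • K x := by
    intro K hK n
    induction n with
    | zero => intro x; simp
    | succ n ih =>
      intro x
      have e : (2:ℝ)^(n+1) • x = (2:ℝ)^n • ((2:ℝ)•x) := by rw [smul_smul, ← pow_succ]
      rw [e, ih ((2:ℝ)•x), two_smul, hK, ← two_smul ℝ (K x), smul_smul, ← pow_succ]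
  have h22L : 0 < 2 - 2*L := by linarith
  refine ⟨H, ⟨⟨hadd, hjordan⟩, fun x => hbound x⟩, ?_⟩
  rintro K ⟨⟨hKadd, -⟩, hKb⟩
  funext x
  have hn : ∀ n : ℕ, ‖K x - H x‖ ≤ (2 * Phi φ x / (2 - 2*L)) * L^n := by
    intro n
    have hp : (0:ℝ) < (2:ℝ)^n := by positivity
    have e : K x - H x = ((2:ℝ)^n)⁻¹ • (K ((2:ℝ)^n • x) - H ((2:ℝ)^n • x)) := by
      rw [hscale K hKadd n x, hscale H hadd n x, ← smul_sub, smul_smul,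
        inv_mul_cancel₀ (ne_of_gt hp), one_smul]
    rw [e, norm_smul, Real.norm_eq_abs, abs_of_pos (by positivity)]
    have tri : ‖K ((2:ℝ)^n • x) - H ((2:ℝ)^n • x)‖ ≤
        ‖f ((2:ℝ)^n • x) - K ((2:ℝ)^n • x)‖ + ‖f ((2:ℝ)^n • x) - H ((2:ℝ)^n • x)‖ := by
      have := dist_triangle (K ((2:ℝ)^n • x)) (f ((2:ℝ)^n • x)) (H ((2:ℝ)^n • x))
      rw [dist_eq_norm, dist_eq_norm, dist_eq_norm] at this
      rwa [norm_sub_rev (K _) (f _)] at this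
    have hKb' : ‖f ((2:ℝ)^n • x) - K ((2:ℝ)^n • x)‖ ≤ Phi φ ((2:ℝ)^n • x) / (2 - 2*L) :=
      hKb ((2:ℝ)^n • x)
    have hHb' : ‖f ((2:ℝ)^n • x) - H ((2:ℝ)^n • x)‖ ≤ Phi φ ((2:ℝ)^n • x) / (2 - 2*L) :=
      hbound ((2:ℝ)^n • x)
    have hΦn := hΦpow n x
    calc ((2:ℝ)^n)⁻¹ * ‖K ((2:ℝ)^n • x) - H ((2:ℝ)^n • x)‖
        ≤ ((2:ℝ)^n)⁻¹ * (2 * (Phi φ ((2:ℝ)^n • x) / (2 - 2*L))) := by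
          apply mul_le_mul_of_nonneg_left (by linarith) (by positivity)
      _ ≤ ((2:ℝ)^n)⁻¹ * (2 * (((2*L)^n * Phi φ x) / (2 - 2*L))) := by
          apply mul_le_mul_of_nonneg_left _ (by positivity)
          apply mul_le_mul_of_nonneg_left _ (by norm_num)
          exact (div_le_div_iff_of_pos_right h22L).mpr hΦn
      _ = (2 * Phi φ x / (2 - 2*L)) * L^n := by
          rw [mul_pow]
          field_simp
  have hzz : Tendsto (fun n : ℕ => (2 * Phi φ x / (2 - 2*L)) * L^n) atTop (nhds 0) := by
    simpa using hLpow.const_mul (2 * Phi φ x / (2 - 2*L))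
  have hle : ‖K x - H x‖ ≤ 0 := ge_of_tendsto' hzz hn
  exact sub_eq_zero.mp (norm_le_zero_iff.mp hle)
end

section
/- Let X be a semiprime Banach algebra with unit element 1. Let φ, ψ : X² → [0,∞) and f : X → X with f(0) = 0 satisfy ‖f(xyx) − f(x)yx − xf(y)x − xyf(x)‖ ≤ ψ(x,y) and ‖f(2x+y) + f(x+2y) − f(3x) − f(3y)‖ ≤ φ(x,y) for all x,y ∈ X. Assume that there exists 0 < L < 1 such that (1/2)φ(2x,2y) ≤ L·φ(x,y), lim_{k→∞} 8^{-k} ψ(2ᵏx, 2ᵏy) = 0, and lim_{k→∞} 4^{-k} ψ(2ᵏx, y) = 0 for all x,y ∈ X. Then f itself is a derivation. -/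
private lemma sp_flip {X : Type*} [Ring X]
    (hsp : ∀ a : X, (∀ x : X, a * x * a = 0) → a = 0)
    {c d : X} (h : ∀ x, c * x * d = 0) : ∀ x, d * x * c = 0 := by
  intro x
  apply hsp
  intro y
  calc d * x * c * y * (d * x * c) = d * x * (c * y * d) * (x * c) := by noncomm_ring
    _ = 0 := by rw [h y]; noncomm_ring

private lemma sp_half {X : Type*} [Ring X]
    (hsp : ∀ a : X, (∀ x : X, a * x * a = 0) → a = 0)
    (htf : ∀ z : X, z + z = 0 → z = 0)
    {u k : X} (H : ∀ x, u * x * k + k * x * u = 0) : ∀ x, u * x * k = 0 := by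
  have Hw : ∀ w : X, u * w * k = -(k * w * u) := fun w => eq_neg_of_add_eq_zero_left (H w)
  have Hw' : ∀ w : X, k * w * u = -(u * w * k) := fun w => eq_neg_of_add_eq_zero_right (H w)
  intro x
  apply hsp
  intro y
  have c1 : u * x * k * y * (k * x * u) = -(u * x * k * y * (u * x * k)) := by
    rw [Hw' x, mul_neg]
  have c2 : u * x * k * y * (u * x * k) = u * x * k * y * (k * x * u) := by
    calc u * x * k * y * (u * x * k) = u * x * (k * y * u) * (x * k) := by noncomm_ring
      _ = u * x * (-(u * y * k)) * (x * k) := by rw [Hw' y]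
      _ = -(u * x * (u * (y * k * x) * k)) := by noncomm_ring
      _ = -(u * x * (-(k * (y * k * x) * u))) := by rw [Hw (y * k * x)]
      _ = u * x * k * y * (k * x * u) := by noncomm_ring
  have h2 : u * x * k * y * (u * x * k) = -(u * x * k * y * (u * x * k)) := c2.trans c1
  apply htf
  nth_rewrite 1 [h2]
  exact neg_add_cancel _

private lemma ending {X : Type*} [Ring X]
    (hsp : ∀ a : X, (∀ x : X, a * x * a = 0) → a = 0)
    (htf : ∀ z : X, z + z = 0 → z = 0)
    (e u fe fu : X)
    (hEU : ∀ x, e * x * u = 0)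
    (heu : e * u = 0)
    (hc : ∀ r, e * r = r * e)
    (hl1 : fe * u + e * fu + fu * e + u * fe = 0)
    (hE3 : e * e + e * e = -(e * fu)) : e = 0 := by
  have hc2 : ∀ w, (e * e) * w = w * (e * e) := fun w => by
    rw [mul_assoc, hc w, ← mul_assoc, hc w, mul_assoc]
  have t1 : e * (fe * u) = 0 := by rw [← mul_assoc]; exact hEU fe
  have t4 : e * (u * fe) = 0 := by rw [← mul_assoc, heu, zero_mul]
  have l2 : e * (e * fu) + e * (fu * e) = 0 := by
    have h := congrArg (fun z => e * z) hl1
    simp only [mul_add, mul_zero, t1, t4, zero_add, add_zero] at h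
    exact h
  have hfu2 : fu * (e * e) + fu * (e * e) = 0 := by
    have h1 : e * (fu * e) = fu * (e * e) := by
      rw [← mul_assoc, hc fu, mul_assoc]
    have h2 : e * (e * fu) = fu * (e * e) := by
      rw [← mul_assoc, hc2 fu]
    rw [h1, h2] at l2
    exact l2
  have hfu0 : fu * (e * e) = 0 := htf _ hfu2
  have heefu : (e * e) * fu = 0 := by rw [hc2 fu]; exact hfu0
  have he3 : e * (e * e) = 0 := by
    apply htf
    have h := congrArg (fun z => e * z) hE3
    simp only [mul_add, mul_neg] at h
    rw [show e * (e * fu) = e * e * fu from (mul_assoc e e fu).symm, heefu, neg_zero] at h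
    exact h
  have he2 : e * e = 0 := by
    apply hsp
    intro x
    calc (e * e) * x * (e * e) = (x * (e * e)) * (e * e) := by rw [hc2 x]
      _ = x * (e * (e * (e * e))) := by rw [mul_assoc, mul_assoc]
      _ = 0 := by
          rw [show e * (e * (e * e)) = e * e * (e * e) from (mul_assoc e e (e*e)).symm]
          rw [mul_assoc e e (e*e), he3, mul_zero, mul_zero]
  apply hsp
  intro x
  calc e * x * e = (x * e) * e := by rw [hc x]
    _ = x * (e * e) := by rw [mul_assoc]
    _ = 0 := by rw [he2, mul_zero]

private lemma bresar {X : Type*} [Ring X]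
    (hsp : ∀ a : X, (∀ x : X, a * x * a = 0) → a = 0)
    (htf : ∀ z : X, z + z = 0 → z = 0)
    (f : X → X)
    (hadd : ∀ x y, f (x + y) = f x + f y)
    (ht : ∀ x y, f (x*y*x) = f x * y * x + x * f y * x + x * y * f x) :
    ∀ a b, f (a*b) = f a * b + a * f b := by
  have hf0 : f 0 = 0 := by
    have h := hadd 0 0
    simp only [add_zero] at h
    exact left_eq_add.mp h
  have hsub : ∀ p q, f (p - q) = f p - f q := by
    intro p q
    have h := hadd (p - q) q
    rw [sub_add_cancel] at h
    exact eq_sub_of_add_eq h.symm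
  have hf1 : f 1 = 0 := by
    have h := ht 1 1
    simp only [mul_one, one_mul] at h
    rw [add_assoc] at h
    exact htf _ (left_eq_add.mp h)
  have hL1 : ∀ a b c, f (a*b*c + c*b*a) =
      f a*b*c + a*f b*c + a*b*f c + f c*b*a + c*f b*a + c*b*f a := by
    intro a b c
    have h3 := ht (a+c) b
    rw [hadd a c] at h3
    have expand : f ((a+c)*b*(a+c)) = f (a*b*a) + f (a*b*c + c*b*a) + f (c*b*c) := by
      rw [show (a+c)*b*(a+c) = a*b*a + (a*b*c + c*b*a) + c*b*c from by noncomm_ring,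
        hadd, hadd]
    rw [expand, ht a b, ht c b] at h3
    linear_combination (norm := noncomm_ring) h3
  have hanti : ∀ a b, f (a*b) + f (b*a) = f a * b + a * f b + f b * a + b * f a := by
    intro a b
    have h := hL1 a b 1
    simp only [mul_one, one_mul, hf1, mul_zero, zero_mul, add_zero, zero_add] at h
    rw [hadd] at h
    linear_combination (norm := noncomm_ring) h
  have hW : ∀ a b x, (f (a*b) - f a*b - a*f b)*x*(b*a) + (a*b)*x*(f (b*a) - f b*a - b*f a)
      + (f (b*a) - f b*a - b*f a)*x*(a*b) + (b*a)*x*(f (a*b) - f a*b - a*f b) = 0 := by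
    intro a b x
    have hA := hL1 (a*b) x (b*a)
    have hB : f ((a*b)*x*(b*a) + (b*a)*x*(a*b)) = f (a*(b*x*b)*a) + f (b*(a*x*a)*b) := by
      rw [show (a*b)*x*(b*a) + (b*a)*x*(a*b) = a*(b*x*b)*a + b*(a*x*a)*b from by noncomm_ring,
        hadd]
    have hEq := hB.symm.trans hA
    rw [ht a (b*x*b), ht b (a*x*a), ht b x, ht a x] at hEq
    linear_combination (norm := noncomm_ring) hEq.symm
  have hKey : ∀ a b x, (f (a*b) - f a*b - a*f b)*x*(b*a - a*b)
      + (b*a - a*b)*x*(f (a*b) - f a*b - a*f b) = 0 := by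
    intro a b x
    have h1 := hW a b x
    have h2 := hanti a b
    linear_combination (norm := noncomm_ring) h1 - (a*b*x) * h2 - h2 * (x*(a*b))
  have hδk : ∀ a b, ∀ x, (f (a*b) - f a*b - a*f b) * x * (b*a - a*b) = 0 :=
    fun a b => sp_half hsp htf (hKey a b)
  -- polarization in the first variable
  have hP1 : ∀ a b c x, (f (a*b) - f a*b - a*f b) * x * (b*c - c*b) = 0 := by
    intro a b c x
    have base := hδk (a+c) b x
    rw [show (a+c)*b = a*b + c*b from by noncomm_ring, hadd (a*b) (c*b), hadd a c] at base
    have cross : (f (a*b) - f a*b - a*f b) * x * (b*c - c*b)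
        + (f (c*b) - f c*b - c*f b) * x * (b*a - a*b) = 0 := by
      linear_combination (norm := noncomm_ring) base - hδk a b x - hδk c b x
    have hMneg : (f (a*b) - f a*b - a*f b) * x * (b*c - c*b)
        = -((f (c*b) - f c*b - c*f b) * x * (b*a - a*b)) := eq_neg_of_add_eq_zero_left cross
    have hF2 := sp_flip hsp (hδk c b)
    apply hsp
    intro z
    nth_rewrite 2 [hMneg]
    rw [mul_neg, neg_eq_zero]
    rw [show (f (a*b) - f a*b - a*f b) * x * (b*c - c*b) * z
          * ((f (c*b) - f c*b - c*f b) * x * (b*a - a*b))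
        = (f (a*b) - f a*b - a*f b) * x
          * (((b*c - c*b) * z * (f (c*b) - f c*b - c*f b)) * (x * (b*a - a*b)))
      from by noncomm_ring, hF2 z]
    noncomm_ring
  -- polarization in the second variable
  have hP2 : ∀ a b c d x, (f (a*b) - f a*b - a*f b) * x * (d*c - c*d) = 0 := by
    intro a b c d x
    have base := hP1 a (b+d) c x
    rw [show a*(b+d) = a*b + a*d from by noncomm_ring, hadd (a*b) (a*d), hadd b d] at base
    have cross : (f (a*b) - f a*b - a*f b) * x * (d*c - c*d)
        + (f (a*d) - f a*d - a*f d) * x * (b*c - c*b) = 0 := by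
      linear_combination (norm := noncomm_ring) base - hP1 a b c x - hP1 a d c x
    have hMneg : (f (a*b) - f a*b - a*f b) * x * (d*c - c*d)
        = -((f (a*d) - f a*d - a*f d) * x * (b*c - c*b)) := eq_neg_of_add_eq_zero_left cross
    have hF2 := sp_flip hsp (fun w => hP1 a d c w)
    apply hsp
    intro z
    nth_rewrite 2 [hMneg]
    rw [mul_neg, neg_eq_zero]
    rw [show (f (a*b) - f a*b - a*f b) * x * (d*c - c*d) * z
          * ((f (a*d) - f a*d - a*f d) * x * (b*c - c*b))
        = (f (a*b) - f a*b - a*f b) * x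
          * (((d*c - c*d) * z * (f (a*d) - f a*d - a*f d)) * (x * (b*c - c*b)))
      from by noncomm_ring, hF2 z]
    noncomm_ring
  -- centrality
  have hcen : ∀ a b r, (f (a*b) - f a*b - a*f b) * r = r * (f (a*b) - f a*b - a*f b) := by
    intro a b r
    have he1 : ∀ w, (f (a*b) - f a*b - a*f b) * w
        * ((f (a*b) - f a*b - a*f b) * r - r * (f (a*b) - f a*b - a*f b)) = 0 :=
      fun w => hP2 a b r (f (a*b) - f a*b - a*f b) w
    have hee : ∀ w, (f (a*b) - f a*b - a*f b) * w * ((f (a*b) - f a*b - a*f b) * r)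
        - (f (a*b) - f a*b - a*f b) * w * (r * (f (a*b) - f a*b - a*f b)) = 0 := by
      intro w
      calc (f (a*b) - f a*b - a*f b) * w * ((f (a*b) - f a*b - a*f b) * r)
            - (f (a*b) - f a*b - a*f b) * w * (r * (f (a*b) - f a*b - a*f b))
          = (f (a*b) - f a*b - a*f b) * w
            * ((f (a*b) - f a*b - a*f b) * r - r * (f (a*b) - f a*b - a*f b)) := by noncomm_ring
        _ = 0 := he1 w
    have hg : (f (a*b) - f a*b - a*f b) * r - r * (f (a*b) - f a*b - a*f b) = 0 := by
      apply hsp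
      intro x
      calc ((f (a*b) - f a*b - a*f b) * r - r * (f (a*b) - f a*b - a*f b)) * x
            * ((f (a*b) - f a*b - a*f b) * r - r * (f (a*b) - f a*b - a*f b))
          = ((f (a*b) - f a*b - a*f b) * (r*x) * ((f (a*b) - f a*b - a*f b) * r)
              - (f (a*b) - f a*b - a*f b) * (r*x) * (r * (f (a*b) - f a*b - a*f b)))
            - r * ((f (a*b) - f a*b - a*f b) * x * ((f (a*b) - f a*b - a*f b) * r)
              - (f (a*b) - f a*b - a*f b) * x * (r * (f (a*b) - f a*b - a*f b))) := by noncomm_ring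
        _ = 0 := by rw [hee (r*x), hee x]; noncomm_ring
    exact sub_eq_zero.mp hg
  -- conclusion
  intro a b
  have hmain : f (a*b) - f a*b - a*f b = 0 := by
    apply ending hsp htf (f (a*b) - f a*b - a*f b) (b*a - a*b)
        (f (f (a*b) - f a*b - a*f b)) (f (b*a - a*b))
        (hδk a b) ?heu (hcen a b) ?hl1 ?hE3
    case heu =>
      have h := hδk a b 1
      rwa [mul_one] at h
    case hl1 =>
      have heu : (f (a*b) - f a*b - a*f b) * (b*a - a*b) = 0 := by
        have h := hδk a b 1; rwa [mul_one] at h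
      have hue : (b*a - a*b) * (f (a*b) - f a*b - a*f b) = 0 := by
        have h := sp_flip hsp (hδk a b) 1; rwa [mul_one] at h
      have h := hL1 (f (a*b) - f a*b - a*f b) 1 (b*a - a*b)
      simp only [mul_one, one_mul, hf1, mul_zero, zero_mul, add_zero, zero_add] at h
      rw [heu, hue, add_zero, hf0] at h
      linear_combination (norm := noncomm_ring) h.symm
    case hE3 =>
      have hcomm' : ∀ c d : X, (f (a*b) - f a*b - a*f b) * (d*c - c*d) = 0 := by
        intro c d
        have h := hP2 a b c d 1
        rwa [mul_one] at h
      have hfu : f (b*a - a*b) = f (b*a) - f (a*b) := hsub (b*a) (a*b)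
      have hE2 : (f (a*b) - f a*b - a*f b) + (f (a*b) - f a*b - a*f b)
          = -(f (b*a - a*b)) - f a*b - a*f b + f b*a + b*f a := by
        rw [hfu]
        have h2 := hanti a b
        linear_combination (norm := noncomm_ring) h2
      calc (f (a*b) - f a*b - a*f b) * (f (a*b) - f a*b - a*f b)
            + (f (a*b) - f a*b - a*f b) * (f (a*b) - f a*b - a*f b)
          = (f (a*b) - f a*b - a*f b)
            * ((f (a*b) - f a*b - a*f b) + (f (a*b) - f a*b - a*f b)) := by noncomm_ring
        _ = (f (a*b) - f a*b - a*f b)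
            * (-(f (b*a - a*b)) - f a*b - a*f b + f b*a + b*f a) := by rw [hE2]
        _ = -((f (a*b) - f a*b - a*f b) * f (b*a - a*b))
            - (f (a*b) - f a*b - a*f b) * (f a * b - b * f a)
            - (f (a*b) - f a*b - a*f b) * (a * f b - f b * a) := by noncomm_ring
        _ = -((f (a*b) - f a*b - a*f b) * f (b*a - a*b)) := by
            rw [hcomm' b (f a), hcomm' (f b) a]; noncomm_ring
  linear_combination (norm := noncomm_ring) hmain

open Filter

/-- Theorem 2.8: on a unital semiprime Banach algebra, under the stated stability
hypotheses, `f` itself is a derivation. -/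
theorem hyperstability_derivation_semiprime_II
    {X : Type*} [NormedRing X] [NormedAlgebra ℝ X] [CompleteSpace X]
    (hsemiprime : ∀ a : X, (∀ x : X, a * x * a = 0) → a = 0)
    (f : X → X) (φ ψ : X → X → ℝ)
    (hφ0 : ∀ x y : X, 0 ≤ φ x y) (hψ0 : ∀ x y : X, 0 ≤ ψ x y)
    (hf0 : f 0 = 0)
    (h1 : ∀ x y : X, ‖f (x * y * x) - f x * y * x - x * f y * x - x * y * f x‖ ≤ ψ x y)
    (h2 : ∀ x y : X, ‖f (2 * x + y) + f (x + 2 * y) - f (3 * x) - f (3 * y)‖ ≤ φ x y)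
    (L : ℝ) (hL0 : 0 < L) (hL1 : L < 1)
    (hφL : ∀ x y : X, (1 / 2) * φ (2 * x) (2 * y) ≤ L * φ x y)
    (hψlim1 : ∀ x y : X,
      Filter.Tendsto (fun k : ℕ => ((8 : ℝ) ^ k)⁻¹ * ψ ((2 : X) ^ k * x) ((2 : X) ^ k * y))
        Filter.atTop (nhds 0))
    (hψlim2 : ∀ x y : X,
      Filter.Tendsto (fun k : ℕ => ((4 : ℝ) ^ k)⁻¹ * ψ ((2 : X) ^ k * x) y)
        Filter.atTop (nhds 0)) :
    (∀ x y : X, f (x + y) = f x + f y) ∧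
      ∀ x y : X, f (x * y) = f x * y + x * f y := by
  -- 2-torsion freeness
  have htf : ∀ z : X, z + z = 0 → z = 0 := by
    intro z h
    have h2z : (2:ℝ) • z = 0 := by rw [two_smul]; exact h
    calc z = (1/2:ℝ) • ((2:ℝ) • z) := by rw [smul_smul]; norm_num
      _ = 0 := by rw [h2z, smul_zero]
  -- numerals as real smul
  have hsm2 : ∀ x : X, (2:X) * x = (2:ℝ) • x := by
    intro x; rw [Algebra.smul_def, map_ofNat]
  have hsm3 : ∀ x : X, (3:X) * x = (3:ℝ) • x := by
    intro x; rw [Algebra.smul_def, map_ofNat]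
  have hpow2 : ∀ (k : ℕ) (x : X), (2:X)^k * x = ((2:ℝ)^k) • x := by
    intro k x; rw [Algebra.smul_def, map_pow, map_ofNat]
  have h2' : ∀ x y : X, ‖f ((2:ℝ)•x + y) + f (x + (2:ℝ)•y) - f ((3:ℝ)•x) - f ((3:ℝ)•y)‖ ≤ φ x y := by
    intro x y; have h := h2 x y; rwa [hsm2, hsm2, hsm3, hsm3] at h
  have hφ2 : ∀ x y : X, φ ((2:ℝ)•x) ((2:ℝ)•y) ≤ 2*L*φ x y := by
    intro x y; have h := hφL x y; rw [hsm2, hsm2] at h; linarith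
  have hφpow : ∀ (n : ℕ) (x y : X), φ ((2:ℝ)^n • x) ((2:ℝ)^n • y) ≤ (2*L)^n * φ x y := by
    intro n
    induction n with
    | zero => intro x y; simp
    | succ n ih =>
      intro x y
      have e1 : (2:ℝ)^(n+1) • x = (2:ℝ)^n • ((2:ℝ)•x) := by
        rw [smul_smul, pow_succ]
      have e2 : (2:ℝ)^(n+1) • y = (2:ℝ)^n • ((2:ℝ)•y) := by
        rw [smul_smul, pow_succ]
      rw [e1, e2]
      calc φ ((2:ℝ)^n • ((2:ℝ)•x)) ((2:ℝ)^n • ((2:ℝ)•y)) ≤ (2*L)^n * φ ((2:ℝ)•x) ((2:ℝ)•y) :=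
            ih ((2:ℝ)•x) ((2:ℝ)•y)
        _ ≤ (2*L)^n * (2*L*φ x y) := by
            apply mul_le_mul_of_nonneg_left (hφ2 x y) (by positivity)
        _ = (2*L)^(n+1) * φ x y := by ring
  -- the basic "Q" estimate
  have hQ : ∀ u t : X, ‖f (u + t) + f (u + (2:ℝ)•t) - f u - f (u + (3:ℝ)•t)‖
      ≤ φ ((1/3:ℝ)•u) ((1/3:ℝ)•u + t) := by
    intro u t
    have h := h2' ((1/3:ℝ)•u) ((1/3:ℝ)•u + t)
    have e1 : (2:ℝ)•((1/3:ℝ)•u) + ((1/3:ℝ)•u + t) = u + t := by module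
    have e2 : (1/3:ℝ)•u + (2:ℝ)•((1/3:ℝ)•u + t) = u + (2:ℝ)•t := by module
    have e3 : (3:ℝ)•((1/3:ℝ)•u) = u := by module
    have e4 : (3:ℝ)•((1/3:ℝ)•u + t) = u + (3:ℝ)•t := by module
    rwa [e1, e2, e3, e4] at h
  -- the Jensen-type estimate
  have hJ : ∀ a h : X, ‖f (a + (4:ℝ)•h) + f a - f (a + (2:ℝ)•h) - f (a + (2:ℝ)•h)‖
      ≤ φ ((1/3:ℝ)•a) ((1/3:ℝ)•a + h) + φ ((1/3:ℝ)•(a+h)) ((1/3:ℝ)•(a+h) + h) := by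
    intro a h
    have q1 := hQ a h
    have q2 := hQ (a + h) h
    have e1 : a + h + h = a + (2:ℝ)•h := by module
    have e2 : a + h + (2:ℝ)•h = a + (3:ℝ)•h := by module
    have e3 : a + h + (3:ℝ)•h = a + (4:ℝ)•h := by module
    rw [e1, e2, e3] at q2
    have key : f (a + (4:ℝ)•h) + f a - f (a + (2:ℝ)•h) - f (a + (2:ℝ)•h)
        = -(f (a + h) + f (a + (2:ℝ)•h) - f a - f (a + (3:ℝ)•h))
          - (f (a + (2:ℝ)•h) + f (a + (3:ℝ)•h) - f (a + h) - f (a + (4:ℝ)•h)) := by abel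
    rw [key]
    calc ‖-(f (a + h) + f (a + (2:ℝ)•h) - f a - f (a + (3:ℝ)•h))
          - (f (a + (2:ℝ)•h) + f (a + (3:ℝ)•h) - f (a + h) - f (a + (4:ℝ)•h))‖
        ≤ ‖-(f (a + h) + f (a + (2:ℝ)•h) - f a - f (a + (3:ℝ)•h))‖
          + ‖f (a + (2:ℝ)•h) + f (a + (3:ℝ)•h) - f (a + h) - f (a + (4:ℝ)•h)‖ :=
          norm_sub_le _ _
      _ ≤ φ ((1/3:ℝ)•a) ((1/3:ℝ)•a + h) + φ ((1/3:ℝ)•(a+h)) ((1/3:ℝ)•(a+h) + h) := by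
          rw [norm_neg]; exact add_le_add q1 q2
  -- approximate additivity
  set Cb : X → X → ℝ := fun p q =>
    (φ ((1/3:ℝ)•(0:X)) ((1/3:ℝ)•(0:X) + (1/4:ℝ)•(p+q))
      + φ ((1/3:ℝ)•((0:X)+(1/4:ℝ)•(p+q))) ((1/3:ℝ)•((0:X)+(1/4:ℝ)•(p+q)) + (1/4:ℝ)•(p+q)))
    + (φ ((1/3:ℝ)•p) ((1/3:ℝ)•p + (1/4:ℝ)•(q-p))
      + φ ((1/3:ℝ)•(p+(1/4:ℝ)•(q-p))) ((1/3:ℝ)•(p+(1/4:ℝ)•(q-p)) + (1/4:ℝ)•(q-p))) with hCb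
  have hC : ∀ p q : X, ‖f (p + q) - f p - f q‖ ≤ Cb p q := by
    intro p q
    have j1 := hJ 0 ((1/4:ℝ)•(p+q))
    have j2 := hJ p ((1/4:ℝ)•(q-p))
    have e1 : (0:X) + (4:ℝ)•((1/4:ℝ)•(p+q)) = p + q := by module
    have e2 : (0:X) + (2:ℝ)•((1/4:ℝ)•(p+q)) = (1/2:ℝ)•(p+q) := by module
    rw [e1, e2] at j1
    have e3 : p + (4:ℝ)•((1/4:ℝ)•(q-p)) = q := by module
    have e4 : p + (2:ℝ)•((1/4:ℝ)•(q-p)) = (1/2:ℝ)•(p+q) := by module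
    rw [e3, e4] at j2
    have key : f (p+q) - f p - f q
        = (f (p+q) + f 0 - f ((1/2:ℝ)•(p+q)) - f ((1/2:ℝ)•(p+q)))
          - (f q + f p - f ((1/2:ℝ)•(p+q)) - f ((1/2:ℝ)•(p+q))) := by rw [hf0]; abel
    rw [key, hCb]
    exact le_trans (norm_sub_le _ _) (add_le_add j1 j2)
  -- scaled approximate additivity
  have hCn : ∀ (n : ℕ) (p q : X),
      ‖f ((2:ℝ)^n • (p + q)) - f ((2:ℝ)^n • p) - f ((2:ℝ)^n • q)‖ ≤ (2*L)^n * Cb p q := by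
    intro n p q
    have h := hC ((2:ℝ)^n • p) ((2:ℝ)^n • q)
    rw [← smul_add] at h
    -- bound the four φ-terms
    have b1 : φ ((1/3:ℝ)•(0:X)) ((1/3:ℝ)•(0:X) + (1/4:ℝ)•((2:ℝ)^n•p+(2:ℝ)^n•q))
        ≤ (2*L)^n * φ ((1/3:ℝ)•(0:X)) ((1/3:ℝ)•(0:X) + (1/4:ℝ)•(p+q)) := by
      have hh := hφpow n ((1/3:ℝ)•(0:X)) ((1/3:ℝ)•(0:X) + (1/4:ℝ)•(p+q))
      have e1 : (1/3:ℝ)•(0:X) = (2:ℝ)^n • ((1/3:ℝ)•(0:X)) := by module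
      have e2 : (1/3:ℝ)•(0:X) + (1/4:ℝ)•((2:ℝ)^n•p+(2:ℝ)^n•q)
          = (2:ℝ)^n • ((1/3:ℝ)•(0:X) + (1/4:ℝ)•(p+q)) := by module
      rw [e2]
      nth_rewrite 1 [e1]
      exact hh
    have b2 : φ ((1/3:ℝ)•((0:X)+(1/4:ℝ)•((2:ℝ)^n•p+(2:ℝ)^n•q)))
          ((1/3:ℝ)•((0:X)+(1/4:ℝ)•((2:ℝ)^n•p+(2:ℝ)^n•q)) + (1/4:ℝ)•((2:ℝ)^n•p+(2:ℝ)^n•q))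
        ≤ (2*L)^n * φ ((1/3:ℝ)•((0:X)+(1/4:ℝ)•(p+q)))
          ((1/3:ℝ)•((0:X)+(1/4:ℝ)•(p+q)) + (1/4:ℝ)•(p+q)) := by
      have hh := hφpow n ((1/3:ℝ)•((0:X)+(1/4:ℝ)•(p+q)))
        ((1/3:ℝ)•((0:X)+(1/4:ℝ)•(p+q)) + (1/4:ℝ)•(p+q))
      have e1 : (1/3:ℝ)•((0:X)+(1/4:ℝ)•((2:ℝ)^n•p+(2:ℝ)^n•q))
          = (2:ℝ)^n • ((1/3:ℝ)•((0:X)+(1/4:ℝ)•(p+q))) := by module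
      have e2 : (1/3:ℝ)•((0:X)+(1/4:ℝ)•((2:ℝ)^n•p+(2:ℝ)^n•q)) + (1/4:ℝ)•((2:ℝ)^n•p+(2:ℝ)^n•q)
          = (2:ℝ)^n • ((1/3:ℝ)•((0:X)+(1/4:ℝ)•(p+q)) + (1/4:ℝ)•(p+q)) := by module
      rw [e2, e1]
      exact hh
    have b3 : φ ((1/3:ℝ)•((2:ℝ)^n•p)) ((1/3:ℝ)•((2:ℝ)^n•p) + (1/4:ℝ)•((2:ℝ)^n•q-(2:ℝ)^n•p))
        ≤ (2*L)^n * φ ((1/3:ℝ)•p) ((1/3:ℝ)•p + (1/4:ℝ)•(q-p)) := by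
      have hh := hφpow n ((1/3:ℝ)•p) ((1/3:ℝ)•p + (1/4:ℝ)•(q-p))
      have e1 : (1/3:ℝ)•((2:ℝ)^n•p) = (2:ℝ)^n • ((1/3:ℝ)•p) := by module
      have e2 : (1/3:ℝ)•((2:ℝ)^n•p) + (1/4:ℝ)•((2:ℝ)^n•q-(2:ℝ)^n•p)
          = (2:ℝ)^n • ((1/3:ℝ)•p + (1/4:ℝ)•(q-p)) := by module
      rw [e2, e1]
      exact hh
    have b4 : φ ((1/3:ℝ)•((2:ℝ)^n•p+(1/4:ℝ)•((2:ℝ)^n•q-(2:ℝ)^n•p)))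
          ((1/3:ℝ)•((2:ℝ)^n•p+(1/4:ℝ)•((2:ℝ)^n•q-(2:ℝ)^n•p)) + (1/4:ℝ)•((2:ℝ)^n•q-(2:ℝ)^n•p))
        ≤ (2*L)^n * φ ((1/3:ℝ)•(p+(1/4:ℝ)•(q-p)))
          ((1/3:ℝ)•(p+(1/4:ℝ)•(q-p)) + (1/4:ℝ)•(q-p)) := by
      have hh := hφpow n ((1/3:ℝ)•(p+(1/4:ℝ)•(q-p)))
        ((1/3:ℝ)•(p+(1/4:ℝ)•(q-p)) + (1/4:ℝ)•(q-p))
      have e1 : (1/3:ℝ)•((2:ℝ)^n•p+(1/4:ℝ)•((2:ℝ)^n•q-(2:ℝ)^n•p))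
          = (2:ℝ)^n • ((1/3:ℝ)•(p+(1/4:ℝ)•(q-p))) := by module
      have e2 : (1/3:ℝ)•((2:ℝ)^n•p+(1/4:ℝ)•((2:ℝ)^n•q-(2:ℝ)^n•p)) + (1/4:ℝ)•((2:ℝ)^n•q-(2:ℝ)^n•p)
          = (2:ℝ)^n • ((1/3:ℝ)•(p+(1/4:ℝ)•(q-p)) + (1/4:ℝ)•(q-p)) := by module
      rw [e2, e1]
      exact hh
    rw [hCb] at h ⊢
    simp only [] at h ⊢
    calc ‖f ((2:ℝ)^n • (p + q)) - f ((2:ℝ)^n • p) - f ((2:ℝ)^n • q)‖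
        ≤ _ := h
      _ ≤ (2*L)^n * φ ((1/3:ℝ)•(0:X)) ((1/3:ℝ)•(0:X) + (1/4:ℝ)•(p+q))
          + (2*L)^n * φ ((1/3:ℝ)•((0:X)+(1/4:ℝ)•(p+q)))
              ((1/3:ℝ)•((0:X)+(1/4:ℝ)•(p+q)) + (1/4:ℝ)•(p+q))
          + ((2*L)^n * φ ((1/3:ℝ)•p) ((1/3:ℝ)•p + (1/4:ℝ)•(q-p))
          + (2*L)^n * φ ((1/3:ℝ)•(p+(1/4:ℝ)•(q-p)))
              ((1/3:ℝ)•(p+(1/4:ℝ)•(q-p)) + (1/4:ℝ)•(q-p))) := by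
          exact add_le_add (add_le_add b1 b2) (add_le_add b3 b4)
      _ = (2*L)^n * _ := by ring
  -- the approximating sequence
  set F : ℕ → X → X := fun n x => ((2:ℝ)^n)⁻¹ • f ((2:ℝ)^n • x) with hF
  have hnorminv : ∀ (m : ℕ), ‖(((2:ℝ)^m)⁻¹)‖ = ((2:ℝ)^m)⁻¹ := by
    intro m
    rw [Real.norm_eq_abs, abs_of_pos]
    positivity
  have hFcauchy : ∀ x : X, CauchySeq (fun n => F n x) := by
    intro x
    apply cauchySeq_of_le_geometric L (Cb x x / 2) hL1
    intro n
    rw [dist_eq_norm]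
    have e : F n x - F (n+1) x
        = ((2:ℝ)^(n+1))⁻¹ • (-(f ((2:ℝ)^n • (x+x)) - f ((2:ℝ)^n • x) - f ((2:ℝ)^n • x))) := by
      simp only [hF]
      rw [show (2:ℝ)^n • (x+x) = (2:ℝ)^(n+1) • x from by
        rw [smul_add, pow_succ]; module]
      match_scalars <;> (field_simp; try ring)
    rw [e, norm_smul, hnorminv, norm_neg]
    have hb := hCn n x x
    have h2pos : (0:ℝ) < ((2:ℝ)^(n+1))⁻¹ := by positivity
    calc ((2:ℝ)^(n+1))⁻¹ * ‖f ((2:ℝ)^n • (x+x)) - f ((2:ℝ)^n • x) - f ((2:ℝ)^n • x)‖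
        ≤ ((2:ℝ)^(n+1))⁻¹ * ((2*L)^n * Cb x x) := by
          exact mul_le_mul_of_nonneg_left hb (le_of_lt h2pos)
      _ = Cb x x / 2 * L^n := by
          rw [mul_pow, pow_succ]
          have : (2:ℝ)^n ≠ 0 := by positivity
          field_simp
  choose D hD using fun x => cauchySeq_tendsto_of_complete (hFcauchy x)
  -- D is additive
  have hDadd : ∀ p q : X, D (p + q) = D p + D q := by
    intro p q
    have t1 : Tendsto (fun n => F n (p+q) - F n p - F n q) atTop
        (nhds (D (p+q) - D p - D q)) := ((hD (p+q)).sub (hD p)).sub (hD q)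
    have t2 : Tendsto (fun n => F n (p+q) - F n p - F n q) atTop (nhds 0) := by
      apply squeeze_zero_norm (a := fun n => L^n * Cb p q)
      · intro n
        have e : F n (p+q) - F n p - F n q
            = ((2:ℝ)^n)⁻¹ • (f ((2:ℝ)^n • (p+q)) - f ((2:ℝ)^n • p) - f ((2:ℝ)^n • q)) := by
          simp only [hF]
          module
        rw [e, norm_smul, hnorminv]
        have hb := hCn n p q
        have h2pos : (0:ℝ) < ((2:ℝ)^n)⁻¹ := by positivity
        calc ((2:ℝ)^n)⁻¹ * ‖f ((2:ℝ)^n • (p+q)) - f ((2:ℝ)^n • p) - f ((2:ℝ)^n • q)‖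
            ≤ ((2:ℝ)^n)⁻¹ * ((2*L)^n * Cb p q) := mul_le_mul_of_nonneg_left hb (le_of_lt h2pos)
          _ = L^n * Cb p q := by
              rw [mul_pow]
              have : (2:ℝ)^n ≠ 0 := by positivity
              field_simp
      · simpa using (tendsto_pow_atTop_nhds_zero_of_lt_one hL0.le hL1).mul_const (Cb p q)
    have h0 := tendsto_nhds_unique t1 t2
    rw [sub_sub, sub_eq_zero] at h0
    exact h0
  have hmono3 : Tendsto (fun k : ℕ => 3*k) atTop atTop := by
    apply StrictMono.tendsto_atTop
    intro a b hab; dsimp only; omega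
  have hmono2 : Tendsto (fun k : ℕ => 2*k) atTop atTop := by
    apply StrictMono.tendsto_atTop
    intro a b hab; dsimp only; omega
  have hD3k : ∀ z : X, Tendsto (fun k => F (3*k) z) atTop (nhds (D z)) :=
    fun z => (hD z).comp hmono3
  have hD2k : ∀ z : X, Tendsto (fun k => F (2*k) z) atTop (nhds (D z)) :=
    fun z => (hD z).comp hmono2
  -- triple identity for D
  have htD : ∀ x y : X, D (x*y*x) = D x * y * x + x * D y * x + x * y * D x := by
    intro x y
    have t1 : Tendsto (fun k => F (3*k) (x*y*x) - F k x * y * x - x * F k y * x - x * y * F k x)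
        atTop (nhds (D (x*y*x) - D x * y * x - x * D y * x - x * y * D x)) :=
      (((hD3k (x*y*x)).sub (((hD x).mul_const y).mul_const x)).sub
        (((hD y).const_mul x).mul_const x)).sub ((hD x).const_mul (x*y))
    have t2 : Tendsto (fun k => F (3*k) (x*y*x) - F k x * y * x - x * F k y * x - x * y * F k x)
        atTop (nhds 0) := by
      apply squeeze_zero_norm
        (a := fun k => ((8:ℝ)^k)⁻¹ * ψ ((2:X)^k * x) ((2:X)^k * y)) _ (hψlim1 x y)
      intro k
      have hb := h1 ((2:ℝ)^k • x) ((2:ℝ)^k • y)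
      rw [hpow2, hpow2]
      have e : F (3*k) (x*y*x) - F k x * y * x - x * F k y * x - x * y * F k x
          = ((8:ℝ)^k)⁻¹ • (f (((2:ℝ)^k•x) * ((2:ℝ)^k•y) * ((2:ℝ)^k•x))
            - f ((2:ℝ)^k•x) * ((2:ℝ)^k•y) * ((2:ℝ)^k•x)
            - ((2:ℝ)^k•x) * f ((2:ℝ)^k•y) * ((2:ℝ)^k•x)
            - ((2:ℝ)^k•x) * ((2:ℝ)^k•y) * f ((2:ℝ)^k•x)) := by
        simp only [hF]
        rw [show ((2:ℝ)^k•x) * ((2:ℝ)^k•y) * ((2:ℝ)^k•x) = (2:ℝ)^(3*k) • (x*y*x) from by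
          simp only [smul_mul_assoc, mul_smul_comm, smul_smul]; match_scalars; ring]
        rw [show ((8:ℝ)^k)⁻¹ = ((2:ℝ)^(3*k))⁻¹ from by
          rw [show (8:ℝ) = 2^3 from by norm_num, ← pow_mul]]
        simp only [smul_sub, smul_mul_assoc, mul_smul_comm, smul_smul]
        match_scalars <;> (field_simp; try ring)
      rw [e, norm_smul]
      rw [show ‖(((8:ℝ)^k)⁻¹)‖ = ((8:ℝ)^k)⁻¹ from by
        rw [Real.norm_eq_abs, abs_of_pos]; positivity]
      exact mul_le_mul_of_nonneg_left hb (by positivity)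
    have h0 := tendsto_nhds_unique t1 t2
    linear_combination (norm := noncomm_ring) h0
  -- f coincides with D
  have hfD : ∀ w : X, f w = D w := by
    have key : ∀ x y : X, x * f y * x = x * D y * x := by
      intro x y
      have t1 : Tendsto (fun k => F (2*k) (x*y*x) - F k x * y * x - x * f y * x - x * y * F k x)
          atTop (nhds (D (x*y*x) - D x * y * x - x * f y * x - x * y * D x)) :=
        (((hD2k (x*y*x)).sub (((hD x).mul_const y).mul_const x)).sub
          tendsto_const_nhds).sub ((hD x).const_mul (x*y))
      have t2 : Tendsto (fun k => F (2*k) (x*y*x) - F k x * y * x - x * f y * x - x * y * F k x)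
          atTop (nhds 0) := by
        apply squeeze_zero_norm
          (a := fun k => ((4:ℝ)^k)⁻¹ * ψ ((2:X)^k * x) y) _ (hψlim2 x y)
        intro k
        have hb := h1 ((2:ℝ)^k • x) y
        rw [hpow2]
        have e : F (2*k) (x*y*x) - F k x * y * x - x * f y * x - x * y * F k x
            = ((4:ℝ)^k)⁻¹ • (f (((2:ℝ)^k•x) * y * ((2:ℝ)^k•x))
              - f ((2:ℝ)^k•x) * y * ((2:ℝ)^k•x)
              - ((2:ℝ)^k•x) * f y * ((2:ℝ)^k•x)
              - ((2:ℝ)^k•x) * y * f ((2:ℝ)^k•x)) := by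
          simp only [hF]
          rw [show ((2:ℝ)^k•x) * y * ((2:ℝ)^k•x) = (2:ℝ)^(2*k) • (x*y*x) from by
            simp only [smul_mul_assoc, mul_smul_comm, smul_smul]; match_scalars; ring]
          rw [show ((4:ℝ)^k)⁻¹ = ((2:ℝ)^(2*k))⁻¹ from by
            rw [show (4:ℝ) = 2^2 from by norm_num, ← pow_mul]]
          simp only [smul_sub, smul_mul_assoc, mul_smul_comm, smul_smul]
          match_scalars <;> (field_simp; try ring)
        rw [e, norm_smul]
        rw [show ‖(((4:ℝ)^k)⁻¹)‖ = ((4:ℝ)^k)⁻¹ from by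
          rw [Real.norm_eq_abs, abs_of_pos]; positivity]
        exact mul_le_mul_of_nonneg_left hb (by positivity)
      have h0 := tendsto_nhds_unique t1 t2
      have hT := htD x y
      linear_combination (norm := noncomm_ring) hT - h0
    intro w
    have h := key 1 w
    simpa using h
  have hfadd : ∀ x y : X, f (x + y) = f x + f y := by
    intro x y; rw [hfD, hfD, hfD]; exact hDadd x y
  have htriplef : ∀ x y : X, f (x*y*x) = f x * y * x + x * f y * x + x * y * f x := by
    intro x y; simp only [hfD]; exact htD x y
  exact ⟨hfadd, bresar hsemiprime htf f hfadd htriplef⟩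
end

section
/- Let n₀ be a positive integer and let X, Y be vector spaces over ℂ. Suppose f : X → Y is an additive mapping. Then f is ℂ-linear if and only if f(λx) = λf(x) for all x ∈ X and all λ ∈ T¹_{n₀}. -/
/-- Lemma 2.9: an additive mapping between complex vector spaces is `ℂ`-linear
iff it is `μ`-homogeneous for all `μ` in `T¹_{n₀} = {e^{iθ} : 0 ≤ θ ≤ 2π/n₀}`. -/
theorem additive_linear_iff_homogeneous_on_arc
    (n₀ : ℕ) (hn₀ : 0 < n₀)
    {X Y : Type*} [AddCommGroup X] [Module ℂ X] [AddCommGroup Y] [Module ℂ Y]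
    (f : X → Y) (hadd : ∀ x y : X, f (x + y) = f x + f y) :
    (∀ (c : ℂ) (x : X), f (c • x) = c • f x) ↔
      (∀ (x : X) (μ : ℂ),
        (∃ t : ℝ, 0 ≤ t ∧ t ≤ 2 * Real.pi / n₀ ∧ μ = Complex.exp (t * Complex.I)) →
        f (μ • x) = μ • f x) := by
  constructor
  · intro h x μ _
    exact h μ x
  · intro h c x
    have pi_pos := Real.pi_pos
    have hf0 : f 0 = 0 := (AddMonoidHom.mk' f hadd).map_zero
    have hnsmul : ∀ (n : ℕ) (y : X), f (n • y) = n • f y := by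
      intro n y
      induction n with
      | zero => simpa using hf0
      | succ k ih => rw [succ_nsmul, succ_nsmul, hadd, ih]
    set P : ℂ → Prop := fun μ => ∀ x : X, f (μ • x) = μ • f x with hP
    have hmul : ∀ μ ν, P μ → P ν → P (μ * ν) := by
      intro μ ν hμ hν x
      rw [mul_smul, hμ, hν, mul_smul]
    have hpow : ∀ (μ : ℂ) (n : ℕ), P μ → P (μ ^ n) := by
      intro μ n hμ
      induction n with
      | zero => intro x; simp
      | succ k ih => simpa [pow_succ] using hmul _ _ ih hμ
    have harc : ∀ t : ℝ, 0 ≤ t → t ≤ 2 * Real.pi / n₀ → P (Complex.exp (t * Complex.I)) := by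
      intro t ht ht' x
      exact h x _ ⟨t, ht, ht', rfl⟩
    have hcirc_nn : ∀ t : ℝ, 0 ≤ t → P (Complex.exp (t * Complex.I)) := by
      intro t ht
      set m : ℕ := ⌈t * n₀ / (2 * Real.pi)⌉₊ + 1 with hm
      have hmpos : (0:ℝ) < m := by positivity
      have hmge : t * n₀ / (2 * Real.pi) ≤ m := by
        have := Nat.le_ceil (t * n₀ / (2 * Real.pi))
        push_cast [hm]
        linarith
      clear_value m
      have h1 : t / m ≤ 2 * Real.pi / n₀ := by
        rw [div_le_div_iff₀ hmpos (by positivity)]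
        calc t * n₀ = (t * n₀ / (2 * Real.pi)) * (2 * Real.pi) := by field_simp
          _ ≤ m * (2 * Real.pi) := mul_le_mul_of_nonneg_right hmge (by positivity)
          _ = 2 * Real.pi * m := by ring
      have h0 : (0:ℝ) ≤ t / m := by positivity
      have key : Complex.exp (t * Complex.I) = Complex.exp ((t / m : ℝ) * Complex.I) ^ m := by
        rw [← Complex.exp_nat_mul]
        congr 1
        have hm0 : (m:ℂ) ≠ 0 := by exact_mod_cast hmpos.ne'
        push_cast
        field_simp
      rw [key]
      exact hpow _ m (harc _ h0 h1)
    have hcirc : ∀ t : ℝ, P (Complex.exp (t * Complex.I)) := by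
      intro t
      set k : ℕ := ⌈|t|⌉₊ with hk
      have hnn : 0 ≤ t + 2 * Real.pi * k := by
        have h1 : |t| ≤ (k:ℝ) := Nat.le_ceil _
        have h2 : (k:ℝ) ≤ 2 * Real.pi * k := by
          nlinarith [(Nat.cast_nonneg k : (0:ℝ) ≤ k), Real.pi_gt_three]
        have := neg_abs_le t
        linarith
      have key : Complex.exp ((t + 2 * Real.pi * k : ℝ) * Complex.I)
          = Complex.exp (t * Complex.I) := by
        push_cast
        rw [add_mul, Complex.exp_add]
        have h1 : Complex.exp ((2 * (Real.pi:ℂ) * k) * Complex.I) = 1 := by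
          have := Complex.exp_int_mul_two_pi_mul_I (k : ℤ)
          push_cast at this
          rw [show (2 * (Real.pi:ℂ) * k) * Complex.I
              = (k:ℂ) * (2 * Real.pi * Complex.I) by ring]
          exact this
        rw [h1, mul_one]
      rw [← key]
      exact hcirc_nn _ hnn
    have hI : P Complex.I := by
      have h2 := hcirc (Real.pi / 2)
      rw [show ((Real.pi / 2 : ℝ) : ℂ) * Complex.I = ((Real.pi:ℂ)/2) * Complex.I by push_cast; ring,
        Complex.exp_mul_I, Complex.cos_pi_div_two, Complex.sin_pi_div_two, zero_add, one_mul] at h2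
      exact h2
    -- real scalars of absolute value at most 2
    have hsmall : ∀ r : ℝ, |r| ≤ 2 → P (r : ℂ) := by
      intro r hr x
      set θ : ℝ := Real.arccos (r / 2) with hθ
      obtain ⟨ha, hb⟩ := abs_le.mp hr
      have hcos : Real.cos θ = r / 2 := Real.cos_arccos (by linarith) (by linarith)
      have hsum : (r:ℂ) = Complex.exp ((θ:ℝ) * Complex.I) + Complex.exp (((-θ:ℝ):ℂ) * Complex.I) := by
        push_cast
        rw [Complex.exp_mul_I, Complex.exp_mul_I, Complex.cos_neg, Complex.sin_neg,
          ← Complex.ofReal_cos, hcos]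
        push_cast
        ring
      rw [hsum, add_smul, hadd, hcirc θ x, add_smul]
      congr 1
      have hg := hcirc (-θ) x
      push_cast at hg ⊢
      exact hg
    -- all real scalars
    have hreal : ∀ r : ℝ, P (r : ℂ) := by
      intro r x
      set n : ℕ := ⌈|r|⌉₊ + 1 with hn
      have hnp : (0:ℝ) < n := by positivity
      have hb : |r / n| ≤ 2 := by
        rw [abs_div, abs_of_pos hnp, div_le_iff₀ hnp]
        have h1 : |r| ≤ (⌈|r|⌉₊ : ℝ) := Nat.le_ceil _
        have h2 : ((⌈|r|⌉₊ : ℕ) : ℝ) ≤ (n : ℝ) := by push_cast [hn]; linarith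
        nlinarith
      have hn0 : (n:ℝ) ≠ 0 := hnp.ne'
      clear_value n
      have hcast : ((r / (n:ℝ) : ℝ):ℂ) * (n:ℂ) = (r:ℂ) := by
        push_cast
        exact div_mul_cancel₀ _ (by exact_mod_cast hn0)
      have hsplit : (r:ℂ) • x = ((r / (n:ℝ) : ℝ):ℂ) • ((n:ℂ) • x) := by
        rw [smul_smul, hcast]
      rw [hsplit, hsmall _ hb, Nat.cast_smul_eq_nsmul, hnsmul, ← Nat.cast_smul_eq_nsmul ℂ,
        smul_smul, hcast]
    -- conclude
    have hc : c = (c.re : ℂ) + (c.im : ℂ) * Complex.I := (Complex.re_add_im c).symm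
    rw [hc, add_smul, hadd, hreal c.re x, mul_smul, hreal c.im _, hI x, add_smul, mul_smul]
end

section
/- Let n₀ be a positive integer and let X, Y be vector spaces over ℂ. A mapping f : X → Y satisfies f(2μx + μy) + f(μx + 2μy) = μ[f(3x) + f(3y)] for all x,y ∈ X and all μ ∈ T¹_{n₀} if and only if f is ℂ-linear. -/
/-- Lemma 2.10: a mapping `f` between complex vector spaces satisfies
`f(2μx+μy) + f(μx+2μy) = μ(f(3x)+f(3y))` for all `x, y` and all `μ ∈ T¹_{n₀}`
iff `f` is `ℂ`-linear. -/
theorem functional_equation_iff_linear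
    (n₀ : ℕ) (hn₀ : 0 < n₀)
    {X Y : Type*} [AddCommGroup X] [Module ℂ X] [AddCommGroup Y] [Module ℂ Y]
    (f : X → Y) :
    (∀ (x y : X) (μ : ℂ),
      (∃ t : ℝ, 0 ≤ t ∧ t ≤ 2 * Real.pi / n₀ ∧ μ = Complex.exp (t * Complex.I)) →
      f ((2 * μ) • x + μ • y) + f (μ • x + (2 * μ) • y) =
        μ • (f ((3 : ℂ) • x) + f ((3 : ℂ) • y))) ↔
    ((∀ x y : X, f (x + y) = f x + f y) ∧ ∀ (c : ℂ) (x : X), f (c • x) = c • f x) := by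
  have hπ := Real.pi_pos
  have hn₀' : (0:ℝ) < (n₀:ℝ) := by exact_mod_cast hn₀
  constructor
  · intro H
    -- cancellation of doubling in Y
    have half : ∀ a b : Y, a + a = b + b → a = b := by
      intro a b h
      have h2 : (2:ℂ) • a = (2:ℂ) • b := by rw [two_smul, two_smul]; exact h
      calc a = (2:ℂ)⁻¹ • ((2:ℂ) • a) := by
              rw [smul_smul, inv_mul_cancel₀ (by norm_num : (2:ℂ) ≠ 0), one_smul]
        _ = (2:ℂ)⁻¹ • ((2:ℂ) • b) := by rw [h2]
        _ = b := by rw [smul_smul, inv_mul_cancel₀ (by norm_num : (2:ℂ) ≠ 0), one_smul]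
    have harc : ∀ t : ℝ, 0 ≤ t → t ≤ 2 * Real.pi / n₀ → ∀ x y : X,
        f ((2 * Complex.exp (t * Complex.I)) • x + Complex.exp (t * Complex.I) • y)
          + f (Complex.exp (t * Complex.I) • x + (2 * Complex.exp (t * Complex.I)) • y)
          = Complex.exp (t * Complex.I) • (f ((3:ℂ) • x) + f ((3:ℂ) • y)) := by
      intro t h0 h2 x y
      exact H x y _ ⟨t, h0, h2, rfl⟩
    -- μ = 1 case
    have h1 : ∀ x y : X, f ((2:ℂ) • x + y) + f (x + (2:ℂ) • y)
        = f ((3:ℂ) • x) + f ((3:ℂ) • y) := by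
      intro x y
      have h := harc 0 le_rfl (by positivity) x y
      simpa using h
    -- f 0 = 0
    have hf0 : f 0 = 0 := by
      set μ := Complex.exp ((Real.pi / n₀ : ℝ) * Complex.I) with hμ
      have hμ1 : μ ≠ 1 := by
        intro h
        rw [hμ, Complex.exp_eq_one_iff] at h
        obtain ⟨k, hk⟩ := h
        have hk' : ((Real.pi / n₀ : ℝ) : ℂ) * Complex.I
            = (((k : ℝ) * (2 * Real.pi) : ℝ) : ℂ) * Complex.I := by
          rw [hk]; push_cast; ring
        have hk2 : (Real.pi / n₀ : ℝ) = (k : ℝ) * (2 * Real.pi) := by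
          have := mul_right_cancel₀ Complex.I_ne_zero hk'
          exact_mod_cast this
        have hd0 : (0:ℝ) < Real.pi / n₀ := by positivity
        have hdπ : Real.pi / n₀ ≤ Real.pi := by
          rw [div_le_iff₀ hn₀']
          nlinarith [hn₀', (by exact_mod_cast hn₀ : (1:ℝ) ≤ (n₀:ℝ))]
        have hk0 : (0:ℤ) < k := by
          by_contra hc
          push_neg at hc
          have : ((k:ℝ)) ≤ 0 := by exact_mod_cast hc
          nlinarith
        have hk1 : k < 1 := by
          by_contra hc
          push_neg at hc
          have : (1:ℝ) ≤ (k:ℝ) := by exact_mod_cast hc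
          nlinarith
        omega
      have h := harc (Real.pi / n₀) (by positivity)
        (by rw [div_le_div_iff₀ hn₀' hn₀']; nlinarith) (0 : X) (0 : X)
      simp only [smul_zero, add_zero] at h
      -- h : f 0 + f 0 = μ • (f 0 + f 0)
      have hv : ((1:ℂ) - μ) • (f 0 + f 0) = 0 := by
        rw [sub_smul, one_smul, ← h, sub_self]
      have hv0 : f 0 + f 0 = 0 := by
        have hne : (1:ℂ) - μ ≠ 0 := sub_ne_zero.mpr (Ne.symm hμ1)
        have := congrArg (fun z => ((1:ℂ) - μ)⁻¹ • z) hv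
        simpa [smul_smul, inv_mul_cancel₀ hne] using this
      exact half (f 0) 0 (by simpa using hv0)
    -- key substitution: E a b
    have E : ∀ a b : X, f a + f b = f ((2:ℂ) • a - b) + f ((2:ℂ) • b - a) := by
      intro a b
      have h := h1 ((3:ℂ)⁻¹ • ((2:ℂ) • a - b)) ((3:ℂ)⁻¹ • ((2:ℂ) • b - a))
      rw [show (2:ℂ) • ((3:ℂ)⁻¹ • ((2:ℂ) • a - b)) + (3:ℂ)⁻¹ • ((2:ℂ) • b - a) = a by
            module,
          show (3:ℂ)⁻¹ • ((2:ℂ) • a - b) + (2:ℂ) • ((3:ℂ)⁻¹ • ((2:ℂ) • b - a)) = b by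
            module,
          show (3:ℂ) • ((3:ℂ)⁻¹ • ((2:ℂ) • a - b)) = (2:ℂ) • a - b by module,
          show (3:ℂ) • ((3:ℂ)⁻¹ • ((2:ℂ) • b - a)) = (2:ℂ) • b - a by module] at h
      exact h
    -- oddness
    have hodd : ∀ a : X, f (-a) = - f a := by
      have hodd2 : ∀ a : X, f ((2:ℂ) • a) + f (-((2:ℂ) • a)) = 0 := by
        intro a
        have e1 := E a 0
        have e2 := E (-a) 0
        rw [show (2:ℂ) • a - 0 = (2:ℂ) • a by abel, show (2:ℂ) • (0:X) - a = -a by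
              rw [smul_zero, zero_sub]] at e1
        rw [show (2:ℂ) • (-a) - 0 = -((2:ℂ) • a) by rw [smul_neg]; abel,
            show (2:ℂ) • (0:X) - (-a) = a by rw [smul_zero, zero_sub, neg_neg]] at e2
        rw [hf0, add_zero] at e1 e2
        -- e1 : f a = f (2a) + f (-a); e2 : f (-a) = f (-(2a)) + f a
        linear_combination (norm := abel1) -e1 - e2
      intro a
      have h := hodd2 ((2:ℂ)⁻¹ • a)
      rw [show (2:ℂ) • ((2:ℂ)⁻¹ • a) = a by module] at h
      linear_combination (norm := abel1) h
    -- doubling and tripling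
    have L2 : ∀ a : X, f ((2:ℂ) • a) = f a + f a := by
      intro a
      have e1 := E a 0
      rw [show (2:ℂ) • a - 0 = (2:ℂ) • a by abel,
          show (2:ℂ) • (0:X) - a = -a by rw [smul_zero, zero_sub], hf0, add_zero,
          hodd] at e1
      -- e1 : f a = f (2a) + -(f a)
      linear_combination (norm := abel1) -e1
    have L3 : ∀ a : X, f ((3:ℂ) • a) = f a + f a + f a := by
      intro a
      have h := h1 a 0
      simp only [smul_zero, add_zero, hf0] at h
      rw [L2] at h
      exact h.symm
    -- key: f(2a+b) = 2 f a + f b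
    have hkey : ∀ a b : X, f ((2:ℂ) • a + b) = f a + f a + f b := by
      intro a b
      have e := E a (-b)
      rw [show (2:ℂ) • a - (-b) = (2:ℂ) • a + b by abel,
          show (2:ℂ) • (-b) - a = -(a + (2:ℂ) • b) by rw [smul_neg]; abel,
          hodd, hodd] at e
      -- e : f a + -(f b) = f (2a+b) + -(f (a+2b))
      have p := h1 a b
      rw [L3, L3] at p
      -- p : f(2a+b) + f(a+2b) = (fa+fa+fa) + (fb+fb+fb)
      apply half
      linear_combination (norm := abel1) p - e
    -- additivity
    have hadd : ∀ x y : X, f (x + y) = f x + f y := by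
      intro x y
      have h := hkey ((2:ℂ)⁻¹ • x) y
      rw [show (2:ℂ) • ((2:ℂ)⁻¹ • x) = x by module] at h
      have h2 := L2 ((2:ℂ)⁻¹ • x)
      rw [show (2:ℂ) • ((2:ℂ)⁻¹ • x) = x by module] at h2
      rw [h, h2]
    -- homogeneity on the arc
    have Larc : ∀ t : ℝ, 0 ≤ t → t ≤ 2 * Real.pi / n₀ → ∀ z : X,
        f (Complex.exp (t * Complex.I) • z) = Complex.exp (t * Complex.I) • f z := by
      intro t h0 h2 z
      set μ := Complex.exp ((t:ℝ) * Complex.I) with hμ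
      have h := harc t h0 h2 ((3:ℂ)⁻¹ • z) ((3:ℂ)⁻¹ • z)
      rw [show (2 * μ) • ((3:ℂ)⁻¹ • z) + μ • ((3:ℂ)⁻¹ • z) = μ • z by module,
          show μ • ((3:ℂ)⁻¹ • z) + (2 * μ) • ((3:ℂ)⁻¹ • z) = μ • z by module,
          show (3:ℂ) • ((3:ℂ)⁻¹ • z) = z by module] at h
      apply half
      rw [h, smul_add]
    -- homogeneity for powers of arc elements
    have Lpow : ∀ (k : ℕ) (t : ℝ), 0 ≤ t → t ≤ 2 * Real.pi / n₀ → ∀ z : X,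
        f ((Complex.exp (t * Complex.I)) ^ k • z)
          = (Complex.exp (t * Complex.I)) ^ k • f z := by
      intro k
      induction k with
      | zero => intro t h0 h2 z; simp
      | succ k ih =>
        intro t h0 h2 z
        rw [pow_succ', mul_smul, Larc t h0 h2, ih t h0 h2, mul_smul]
    -- homogeneity on the whole circle (nonneg angles)
    have Lcirc : ∀ θ : ℝ, 0 ≤ θ → ∀ z : X,
        f (Complex.exp ((θ:ℝ) * Complex.I) • z)
          = Complex.exp ((θ:ℝ) * Complex.I) • f z := by
      intro θ hθ z
      obtain ⟨m, hm⟩ := exists_nat_gt (θ / (2 * Real.pi / n₀))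
      have hc : (0:ℝ) < 2 * Real.pi / n₀ := by positivity
      have hm0 : 0 < m := by
        by_contra hc'
        push_neg at hc'
        interval_cases m
        simp at hm
        nlinarith [div_nonneg hθ hc.le]
      have hmR : (0:ℝ) < (m:ℝ) := by exact_mod_cast hm0
      set t := θ / m with ht
      have ht0 : 0 ≤ t := div_nonneg hθ hmR.le
      have ht2 : t ≤ 2 * Real.pi / n₀ := by
        rw [ht, div_le_iff₀ hmR]
        have := (div_lt_iff₀ hc).mp hm
        nlinarith
      have htm : (m:ℝ) * t = θ := by
        rw [ht]; field_simp
      have e : Complex.exp ((θ:ℝ) * Complex.I)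
          = (Complex.exp ((t:ℝ) * Complex.I)) ^ m := by
        rw [← Complex.exp_nat_mul]
        congr 1
        rw [← htm]; push_cast; ring
      rw [e]
      exact Lpow m t ht0 ht2 z
    -- homogeneity for all unit complex numbers
    have Lunit : ∀ μ : ℂ, ‖μ‖ = 1 → ∀ z : X, f (μ • z) = μ • f z := by
      intro μ hμ z
      have harg : Complex.exp ((μ.arg : ℝ) * Complex.I) = μ := by
        have := Complex.norm_mul_exp_arg_mul_I μ
        rwa [hμ, Complex.ofReal_one, one_mul] at this
      have hθ : (0:ℝ) ≤ μ.arg + 2 * Real.pi := by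
        nlinarith [Complex.neg_pi_lt_arg μ]
      have he : Complex.exp (((μ.arg + 2 * Real.pi : ℝ) : ℂ) * Complex.I) = μ := by
        rw [show (((μ.arg + 2 * Real.pi : ℝ) : ℂ) * Complex.I)
            = (μ.arg : ℂ) * Complex.I + 2 * (Real.pi:ℂ) * Complex.I by push_cast; ring,
          Complex.exp_add, Complex.exp_two_pi_mul_I, mul_one, harg]
      have := Lcirc (μ.arg + 2 * Real.pi) hθ z
      rwa [he] at this
    -- homogeneity for reals in [0, 2]
    have Lsmall : ∀ s : ℝ, 0 ≤ s → s ≤ 2 → ∀ z : X,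
        f ((s:ℂ) • z) = (s:ℂ) • f z := by
      intro s hs0 hs2 z
      set θ := Real.arccos (s / 2) with hθ
      have hcos : Real.cos θ = s / 2 := Real.cos_arccos (by linarith) (by linarith)
      set μ := Complex.exp ((θ:ℝ) * Complex.I) with hμ
      have habs : ∀ u : ℝ, ‖Complex.exp ((u:ℝ) * Complex.I)‖ = 1 := by
        intro u
        rw [Complex.norm_exp]
        simp
      have hsum : μ + Complex.exp (((-θ : ℝ):ℂ) * Complex.I) = (s:ℂ) := by
        rw [hμ, Complex.exp_mul_I, Complex.exp_mul_I]
        push_cast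
        rw [Complex.cos_neg, Complex.sin_neg]
        rw [show (Complex.cos θ + Complex.sin θ * Complex.I)
            + (Complex.cos θ + -Complex.sin θ * Complex.I) = 2 * Complex.cos θ by ring]
        rw [show (Complex.cos (θ:ℂ)) = ((Real.cos θ : ℝ) : ℂ) by
              rw [Complex.ofReal_cos], hcos]
        push_cast
        ring
      have hz : (s:ℂ) • z = μ • z + Complex.exp (((-θ : ℝ):ℂ) * Complex.I) • z := by
        rw [← add_smul, hsum]
      rw [hz, hadd, Lunit μ (by rw [hμ]; exact habs θ) z,
          Lunit _ (habs (-θ)) z, ← add_smul, hsum]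
    -- homogeneity for naturals
    have hnat : ∀ (n : ℕ) (z : X), f ((n:ℂ) • z) = (n:ℂ) • f z := by
      intro n
      induction n with
      | zero => intro z; simp [hf0]
      | succ n ih =>
        intro z
        rw [show ((n+1 : ℕ):ℂ) • z = (n:ℂ) • z + z by push_cast; rw [add_smul, one_smul],
          hadd, ih]
        push_cast
        rw [add_smul, one_smul]
    -- homogeneity for nonnegative reals
    have Lreal : ∀ r : ℝ, 0 ≤ r → ∀ z : X, f ((r:ℂ) • z) = (r:ℂ) • f z := by
      intro r hr z
      obtain ⟨n, hn⟩ := exists_nat_gt (r / 2)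
      have hn0 : 0 < n := by
        by_contra hc
        push_neg at hc
        interval_cases n
        simp at hn
        nlinarith
      have hnR : (0:ℝ) < (n:ℝ) := by exact_mod_cast hn0
      set s := r / n with hs
      have hs0 : 0 ≤ s := div_nonneg hr hnR.le
      have hs2 : s ≤ 2 := by
        rw [hs, div_le_iff₀ hnR]
        nlinarith
      have hns' : (n:ℝ) * s = r := by
        rw [hs]; field_simp
      have hns : (r:ℂ) = (n:ℂ) * (s:ℂ) := by
        rw [← hns']; push_cast; ring
      rw [hns, mul_smul, hnat, Lsmall s hs0 hs2, mul_smul]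
    refine ⟨hadd, ?_⟩
    intro c x
    rcases eq_or_ne c 0 with hc | hc
    · simp [hc, hf0]
    · set r := ‖c‖ with hr
      have hr0 : 0 < r := by
        rw [hr]; exact norm_pos_iff.mpr hc
      set μ := c / (r:ℂ) with hμd
      have hμabs : ‖μ‖ = 1 := by
        rw [hμd, norm_div, Complex.norm_real, Real.norm_of_nonneg hr0.le, ← hr, div_self hr0.ne']
      have hcr : c = (r:ℂ) * μ := by
        rw [hμd, mul_div_cancel₀]
        exact_mod_cast hr0.ne'
      rw [hcr, mul_smul, Lreal r hr0.le, Lunit μ hμabs, mul_smul]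
  · rintro ⟨hadd, hsmul⟩ x y μ _
    simp only [hadd, hsmul]
    module
end

section
/- Let n₀ be a positive integer and let X be a semiprime complex Banach algebra with identity. Let φ, ψ : X² → [0,∞) and f : X → X with f(0) = 0 satisfy ‖f(xyx) − f(x)yx − xf(y)x − xyf(x)‖ ≤ ψ(x,y) for all x,y ∈ X, and ‖f(2μx + μy) + f(μx + 2μy) − μ[f(3x) + f(3y)]‖ ≤ φ(x,y) for all x,y ∈ X and all μ ∈ T¹_{n₀}. Assume that there exists 0 < L < 1 such that (1/2)φ(2x,2y) ≤ L·φ(x,y), lim_{k→∞} 8^{-k} ψ(2ᵏx, 2ᵏy) = 0, and lim_{k→∞} 4^{-k} ψ(2ᵏx, y) = 0 for all x,y ∈ X. Then f itself is a linear derivation, i.e. f is ℂ-linear and f(xy) = f(x)y + xf(y) for all x,y ∈ X. -/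
open Filter

noncomputable def pfun {X : Type*} [AddCommGroup X] [Module ℂ X] (φ : X → X → ℝ) (u : X) : ℝ :=
  φ (((2:ℂ)/3)•u) ((-(1:ℂ)/3)•u)

noncomputable def qfun {X : Type*} [AddCommGroup X] [Module ℂ X] (φ : X → X → ℝ) (u : X) : ℝ :=
  pfun φ ((2⁻¹:ℂ)•u) + pfun φ (-((2⁻¹:ℂ)•u))

noncomputable def χfun {X : Type*} [AddCommGroup X] [Module ℂ X] (φ : X → X → ℝ) (u : X) : ℝ :=
  qfun φ u + pfun φ u

noncomputable def sfun {X : Type*} [AddCommGroup X] [Module ℂ X] (f : X → X) (k : ℕ) (x : X) : X :=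
  ((2:ℂ)^k)⁻¹ • f (((2:ℂ)^k) • x)

theorem aux_sandwich {X : Type*} [Ring X]
    (hsp : ∀ a : X, (∀ x : X, a * x * a = 0) → a = 0)
    (a : X) (h : ∀ x : X, x * a * x = 0) : a = 0 := by
  have hlin : ∀ u w : X, u * a * w + w * a * u = 0 := by
    intro u w
    have h0 := h (u + w)
    have he : (u + w) * a * (u + w) = u*a*u + (u*a*w + w*a*u) + w*a*w := by noncomm_ring
    rw [he, h u, h w, zero_add, add_zero] at h0
    exact h0
  have key : ∀ x : X, a * x * a = 0 := by
    intro x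
    apply hsp
    intro y
    have e1 : (a*x*a) * y * (a*x*a) = a * (x*a*y*a*x) * a := by noncomm_ring
    have e2 : x*a*y*a*x = (x*a*y) * a * x := by noncomm_ring
    have e3 : (x*a*y) * a * x = -(x * a * (x*a*y)) :=
      eq_neg_of_add_eq_zero_left (hlin (x*a*y) x)
    have e4 : x * a * (x*a*y) = (x*a*x) * (a*y) := by noncomm_ring
    rw [e1, e2, e3, e4, h x, zero_mul, neg_zero, mul_zero, zero_mul]
  exact hsp a key

/-- auxiliary: the "derivation defect". -/
def DD {X : Type*} [Ring X] (f : X → X) (a b : X) : X := f (a*b) - f a * b - a * f b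
/-- auxiliary: commutator. -/
def CC {X : Type*} [Ring X] (a b : X) : X := a*b - b*a

theorem aux_lemmaA {X : Type*} [Ring X]
    (hsp : ∀ a : X, (∀ x : X, a * x * a = 0) → a = 0)
    (hhalf : ∀ t : X, t + t = 0 → t = 0)
    (a b : X) (h : ∀ z : X, a * z * b + b * z * a = 0) :
    ∀ z : X, a * z * b = 0 := by
  have hflip : ∀ w : X, a * w * b = -(b * w * a) := fun w =>
    eq_neg_of_add_eq_zero_left (h w)
  intro z
  apply hsp
  intro y
  have cA : (a*z*b) * y * (a*z*b) = b*(z*b*y*a*z)*a := by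
    have e3 : (a*z*b) * y * (a*z*b) = (a*z*b) * y * (-(b*z*a)) :=
      congrArg (fun t => (a*z*b) * y * t) (hflip z)
    have e4 : (a*z*b) * y * (-(b*z*a)) = -((a*(z*b*y)*b) * (z*a)) := by noncomm_ring
    have e5 : -((a*(z*b*y)*b) * (z*a)) = -((-(b*(z*b*y)*a)) * (z*a)) :=
      congrArg (fun t => -(t * (z*a))) (hflip (z*b*y))
    have e6 : -((-(b*(z*b*y)*a)) * (z*a)) = b*(z*b*y*a*z)*a := by noncomm_ring
    exact ((e3.trans e4).trans e5).trans e6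
  have cB : (a*z*b) * y * (a*z*b) = -(b*(z*b*y*a*z)*a) := by
    have e1 : (a*z*b) * y * (a*z*b) = a*(z*b*y*a*z)*b := by noncomm_ring
    exact e1.trans (hflip (z*b*y*a*z))
  have hz : b*(z*b*y*a*z)*a = 0 := by
    apply hhalf
    nth_rewrite 2 [cA.symm.trans cB]
    exact add_neg_cancel _
  rw [cA, hz]

theorem aux_bresar {X : Type*} [Ring X]
    (hsp : ∀ a : X, (∀ x : X, a * x * a = 0) → a = 0)
    (hhalf : ∀ t : X, t + t = 0 → t = 0)
    (f : X → X)
    (hadd : ∀ x y : X, f (x + y) = f x + f y)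
    (htriple : ∀ x z : X, f (x * z * x) = f x * z * x + x * f z * x + x * z * f x) :
    ∀ x y : X, f (x * y) = f x * y + x * f y := by
  have hhalfEq : ∀ t s : X, t + t = s + s → t = s := by
    intro t s h
    have := hhalf (t - s) (by rw [sub_add_sub_comm, h, sub_self])
    exact sub_eq_zero.mp this
  have hf1 : f 1 = 0 := by
    have h := htriple 1 1
    simp only [mul_one, one_mul] at h
    apply hhalf
    have h2 : (0:X) + f 1 = (f 1 + f 1) + f 1 := by rw [zero_add]; exact h
    exact (add_right_cancel h2).symm
  have hT' : ∀ a b z : X, f (a*z*b + b*z*a) =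
      f a*z*b + a*f z*b + a*z*f b + f b*z*a + b*f z*a + b*z*f a := by
    intro a b z
    have h2 := htriple (a+b) z
    rw [hadd a b] at h2
    rw [show (a+b)*z*(a+b) = (a*z*a + b*z*b) + (a*z*b + b*z*a) by noncomm_ring,
        hadd (a*z*a + b*z*b) (a*z*b + b*z*a), hadd (a*z*a) (b*z*b),
        htriple a z, htriple b z] at h2
    have h3 : f (a*z*b + b*z*a) =
        (f a + f b) * z * (a + b) + (a + b) * f z * (a + b) + (a + b) * z * (f a + f b)
        - (f a * z * a + a * f z * a + a * z * f a) - (f b * z * b + b * f z * b + b * z * f b) := by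
      rw [← h2]; abel
    rw [h3]; noncomm_ring
  have hJ : ∀ a b : X, f (a*b) + f (b*a) = f a*b + a*f b + f b*a + b*f a := by
    intro a b
    have h := hT' a b 1
    simp only [mul_one, one_mul, hf1, mul_zero, zero_mul, add_zero, zero_add] at h
    rw [hadd] at h
    exact h
  have hanti : ∀ a b : X, DD f a b = - DD f b a := by
    intro a b
    have h0 : DD f a b + DD f b a = 0 := by
      simp only [DD]
      rw [← sub_eq_zero_of_eq (hJ a b)]
      noncomm_ring
    exact eq_neg_of_add_eq_zero_left h0
  -- step L0
  have hL0 : ∀ x y z : X, DD f x y * z * CC x y + CC x y * z * DD f x y = 0 := by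
    intro x y z
    have e1 := hT' (x*y) (y*x) z
    have e2 := congrArg f (show (x*y)*z*(y*x) + (y*x)*z*(x*y)
        = x*(y*z*y)*x + y*(x*z*x)*y by noncomm_ring)
    rw [hadd (x*(y*z*y)*x) (y*(x*z*x)*y), htriple x (y*z*y), htriple y (x*z*x),
        htriple y z, htriple x z] at e2
    have e3 : f (y*x) = f x*y + x*f y + f y*x + y*f x - f (x*y) := by
      have h := hJ x y
      exact eq_sub_of_add_eq' h
    rw [e3] at e1
    have e12 := e1.symm.trans e2
    simp only [DD, CC]
    rw [← sub_eq_zero_of_eq e12.symm]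
    noncomm_ring
  -- step R1
  have hR1 : ∀ x y z : X, DD f x y * z * CC x y = 0 := by
    intro x y
    exact aux_lemmaA hsp hhalf _ _ (hL0 x y)
  -- additivity of DD in each slot
  have hDadd1 : ∀ x u y : X, DD f (x+u) y = DD f x y + DD f u y := by
    intro x u y
    simp only [DD]
    rw [show (x+u)*y = x*y + u*y by noncomm_ring, hadd (x*y) (u*y), hadd x u]
    noncomm_ring
  have hDadd2 : ∀ x y v : X, DD f x (y+v) = DD f x y + DD f x v := by
    intro x y v
    simp only [DD]
    rw [show x*(y+v) = x*y + x*v by noncomm_ring, hadd (x*y) (x*v), hadd y v]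
    noncomm_ring
  have hCadd1 : ∀ x u y : X, CC (x+u) y = CC x y + CC u y := by
    intro x u y; simp only [CC]; noncomm_ring
  have hCadd2 : ∀ x y v : X, CC x (y+v) = CC x y + CC x v := by
    intro x y v; simp only [CC]; noncomm_ring
  -- step R2
  have hR2 : ∀ x y u z : X, DD f x y * z * CC u y = 0 := by
    intro x y u z
    have lin : ∀ w : X, DD f x y * w * CC u y + DD f u y * w * CC x y = 0 := by
      intro w
      have e := hR1 (x+u) y w
      rw [hDadd1 x u y, hCadd1 x u y] at e
      have e2 : DD f x y * w * CC u y + DD f u y * w * CC x y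
          = (DD f x y + DD f u y)*w*(CC x y + CC u y) - DD f x y*w*CC x y - DD f u y*w*CC u y := by
        noncomm_ring
      rw [e2, e, hR1 x y w, hR1 u y w, sub_zero, sub_zero]
    apply hsp
    intro w
    have g1 : (DD f x y*z*CC u y) * w * (DD f x y*z*CC u y)
        = DD f x y*(z*CC u y*w*DD f x y*z)*CC u y := by noncomm_ring
    have g2 : DD f x y*(z*CC u y*w*DD f x y*z)*CC u y
        = -(DD f u y*(z*CC u y*w*DD f x y*z)*CC x y) :=
      eq_neg_of_add_eq_zero_left (lin _)
    have g3 : DD f u y*(z*CC u y*w*DD f x y*z)*CC x y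
        = (DD f u y*z*CC u y*w) * (DD f x y*z*CC x y) := by noncomm_ring
    rw [g1, g2, g3, hR1 x y z, mul_zero, neg_zero]
  -- step R3
  have hR3 : ∀ x y u v z : X, DD f x y * z * CC u v = 0 := by
    intro x y u v z
    have lin : ∀ w : X, DD f x y * w * CC u v + DD f x v * w * CC u y = 0 := by
      intro w
      have e := hR2 x (y+v) u w
      rw [hDadd2 x y v, hCadd2 u y v] at e
      have e2 : DD f x y * w * CC u v + DD f x v * w * CC u y
          = (DD f x y + DD f x v)*w*(CC u y + CC u v) - DD f x y*w*CC u y - DD f x v*w*CC u v := by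
        noncomm_ring
      rw [e2, e, hR2 x y u w, hR2 x v u w, sub_zero, sub_zero]
    apply hsp
    intro w
    have g1 : (DD f x y*z*CC u v) * w * (DD f x y*z*CC u v)
        = DD f x y*(z*CC u v*w*DD f x y*z)*CC u v := by noncomm_ring
    have g2 : DD f x y*(z*CC u v*w*DD f x y*z)*CC u v
        = -(DD f x v*(z*CC u v*w*DD f x y*z)*CC u y) :=
      eq_neg_of_add_eq_zero_left (lin _)
    have g3 : DD f x v*(z*CC u v*w*DD f x y*z)*CC u y
        = (DD f x v*z*CC u v*w) * (DD f x y*z*CC u y) := by noncomm_ring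
    rw [g1, g2, g3, hR2 x y u z, mul_zero, neg_zero]
  -- centrality of DD values
  have hcen : ∀ x y w : X, DD f x y * w = w * DD f x y := by
    intro x y w
    have hc0 : ∀ z : X, (DD f x y * w - w * DD f x y) * z * (DD f x y * w - w * DD f x y) = 0 := by
      intro z
      have k1 := hR3 x y (DD f x y) w (w*z)
      have k2 := hR3 x y (DD f x y) w z
      simp only [CC] at k1 k2
      have g1 : (DD f x y * w - w * DD f x y) * z * (DD f x y * w - w * DD f x y)
          = DD f x y*(w*z)*(DD f x y*w - w*DD f x y) - w*(DD f x y*z*(DD f x y*w - w*DD f x y)) := by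
        noncomm_ring
      rw [g1, k1, k2, mul_zero, sub_zero]
    have := hsp _ hc0
    exact sub_eq_zero.mp this
  -- composition identity
  have hC1 : ∀ x y z : X, DD f x (y*z) = DD f (x*y) z + DD f x y * z - x * DD f y z := by
    intro x y z
    simp only [DD]
    rw [show x*(y*z) = x*y*z by noncomm_ring]
    noncomm_ring
  -- the key "biderivation" identity for central values
  have hstar : ∀ x y z : X, DD f x (y*z) = z * DD f x y - y * DD f z x := by
    intro x y z
    apply hhalfEq
    have e : DD f x (y*z) =
        -(-( -(DD f x (y*z)) + DD f y z * x - y * DD f z x) + DD f z x * y - z * DD f x y)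
          + DD f x y * z - x * DD f y z := by
      calc DD f x (y*z)
          = DD f (x*y) z + DD f x y * z - x * DD f y z := hC1 x y z
        _ = -(DD f z (x*y)) + DD f x y * z - x * DD f y z := by rw [hanti (x*y) z]
        _ = -(DD f (z*x) y + DD f z x * y - z * DD f x y) + DD f x y * z - x * DD f y z := by
            rw [hC1 z x y]
        _ = -(-(DD f y (z*x)) + DD f z x * y - z * DD f x y) + DD f x y * z - x * DD f y z := by
            rw [hanti (z*x) y]
        _ = -(-(DD f (y*z) x + DD f y z * x - y * DD f z x) + DD f z x * y - z * DD f x y)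
              + DD f x y * z - x * DD f y z := by rw [hC1 y z x]
        _ = -(-( -(DD f x (y*z)) + DD f y z * x - y * DD f z x) + DD f z x * y - z * DD f x y)
              + DD f x y * z - x * DD f y z := by rw [hanti (y*z) x]
    nth_rewrite 2 [e]
    rw [hcen y z x, hcen z x y, hcen x y z]
    abel
  -- sublemma : if all [a,x] are central then a is central
  have hcentral_comm : ∀ a : X,
      (∀ u w : X, (a*u - u*a)*w = w*(a*u - u*a)) → ∀ u : X, a*u - u*a = 0 := by
    intro a hc u
    have hcc : ∀ w : X, (a*u - u*a)*w = w*(a*u - u*a) := hc u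
    have hsq : a*(u*u) - (u*u)*a = u*(a*u - u*a) + u*(a*u - u*a) := by
      have h1 : (a*u - u*a)*u = u*(a*u - u*a) := hcc u
      calc a*(u*u) - (u*u)*a = u*(a*u - u*a) + (a*u - u*a)*u := by noncomm_ring
        _ = u*(a*u - u*a) + u*(a*u - u*a) := by rw [h1]
    have huc : ∀ w : X, (u*(a*u - u*a))*w = w*(u*(a*u - u*a)) := by
      intro w
      apply hhalfEq
      have h2 := hc (u*u) w
      rw [hsq] at h2
      calc (u*(a*u-u*a))*w + (u*(a*u-u*a))*w = (u*(a*u-u*a) + u*(a*u-u*a))*w := by noncomm_ring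
        _ = w*(u*(a*u-u*a) + u*(a*u-u*a)) := h2
        _ = w*(u*(a*u-u*a)) + w*(u*(a*u-u*a)) := by noncomm_ring
    have h4 : ∀ w : X, (u*w - w*u)*(a*u - u*a) = 0 := by
      intro w
      have h5 := huc w
      calc (u*w - w*u)*(a*u-u*a) = u*((a*u-u*a)*w) - w*(u*(a*u-u*a)) := by
            rw [hcc w]; noncomm_ring
        _ = (u*(a*u-u*a))*w - w*(u*(a*u-u*a)) := by noncomm_ring
        _ = 0 := by rw [h5, sub_self]
    have hc2 : (a*u - u*a)*(a*u - u*a) = 0 := by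
      have h6 := h4 a
      have h7 : (a*u - u*a)*(a*u - u*a) = -((u*a - a*u)*(a*u - u*a)) := by noncomm_ring
      rw [h7, h6, neg_zero]
    apply hsp
    intro z
    calc (a*u-u*a)*z*(a*u-u*a) = ((a*u-u*a)*z)*(a*u-u*a) := rfl
      _ = (z*(a*u-u*a))*(a*u-u*a) := by rw [hcc z]
      _ = z*((a*u-u*a)*(a*u-u*a)) := by rw [mul_assoc]
      _ = 0 := by rw [hc2, mul_zero]
  -- DD f u v = 0 whenever v is central
  have hDv0 : ∀ v : X, (∀ w : X, v*w = w*v) → ∀ u : X, DD f u v = 0 := by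
    intro v hv
    have h2d : ∀ u : X, DD f u v + DD f u v = f v * u - u * f v := by
      intro u
      have hj := hJ u v
      rw [hv u] at hj
      rw [hv (f u)] at hj
      have h0 : (f (u*v) - f u*v - u*f v) + (f (u*v) - f u*v - u*f v) - (f v*u - u*f v) = 0 := by
        rw [← sub_eq_zero_of_eq hj]
        noncomm_ring
      have := sub_eq_zero.mp h0
      simp only [DD]
      exact this
    have hfvcen : ∀ u w : X, (f v*u - u*f v)*w = w*(f v*u - u*f v) := by
      intro u w
      calc (f v*u - u*f v)*w = (DD f u v + DD f u v)*w := by rw [h2d u]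
        _ = w*(DD f u v + DD f u v) := by rw [add_mul, hcen u v w, mul_add]
        _ = w*(f v*u - u*f v) := by rw [h2d u]
    have hzero := hcentral_comm (f v) hfvcen
    intro u
    exact hhalf _ (by rw [h2d u, hzero u])
  -- final assembly
  intro x y
  have hAc : ∀ w : X, DD f x y * w = w * DD f x y := hcen x y
  have hAkill : ∀ p q : X, DD f x y * (p*q - q*p) = 0 := by
    intro p q
    have h := hR3 x y p q 1
    simp only [CC] at h
    rwa [mul_one] at h
  have hvc : ∀ w : X, (y * DD f x y) * w = w * (y * DD f x y) := by
    intro w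
    have hz : (y*w - w*y) * DD f x y = 0 := by
      rw [← hAc (y*w - w*y)]; exact hAkill y w
    have h7 : (y*DD f x y)*w - w*(y*DD f x y) = y*(DD f x y*w) - (w*y)*DD f x y := by
      noncomm_ring
    rw [hAc w] at h7
    have h8 : y*(w*DD f x y) - (w*y)*DD f x y = (y*w - w*y)*DD f x y := by noncomm_ring
    exact sub_eq_zero.mp ((h7.trans h8).trans hz)
  have hDxA : DD f x (DD f x y) = 0 := hDv0 (DD f x y) hAc x
  have hDyA : DD f x (y * DD f x y) = 0 := hDv0 (y*DD f x y) hvc x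
  have hA2 : DD f x y * DD f x y = 0 := by
    have h9 : DD f (DD f x y) x = 0 := by rw [hanti, hDxA, neg_zero]
    have h10 := hstar x y (DD f x y)
    rw [hDyA, h9, mul_zero, sub_zero] at h10
    exact h10.symm
  have hA0 : DD f x y = 0 := by
    apply hsp
    intro z
    calc DD f x y * z * DD f x y = (z * DD f x y) * DD f x y := by rw [hAc z]
      _ = z * (DD f x y * DD f x y) := by rw [mul_assoc]
      _ = 0 := by rw [hA2, mul_zero]
  have := hA0
  simp only [DD] at this
  rw [sub_sub] at this
  exact sub_eq_zero.mp this

/-- Theorem 2.11: on a unital semiprime complex Banach algebra, under the stated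
stability hypotheses (with scalars from `T¹_{n₀}`), `f` itself is a linear derivation. -/
theorem hyperstability_linear_derivation_semiprime_II
    (n₀ : ℕ) (hn₀ : 0 < n₀)
    {X : Type*} [NormedRing X] [NormedAlgebra ℂ X] [CompleteSpace X]
    (hsemiprime : ∀ a : X, (∀ x : X, a * x * a = 0) → a = 0)
    (f : X → X) (φ ψ : X → X → ℝ)
    (hφ0 : ∀ x y : X, 0 ≤ φ x y) (hψ0 : ∀ x y : X, 0 ≤ ψ x y)
    (hf0 : f 0 = 0)
    (h1 : ∀ x y : X, ‖f (x * y * x) - f x * y * x - x * f y * x - x * y * f x‖ ≤ ψ x y)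
    (h2 : ∀ (x y : X) (μ : ℂ),
      (∃ t : ℝ, 0 ≤ t ∧ t ≤ 2 * Real.pi / n₀ ∧ μ = Complex.exp (t * Complex.I)) →
      ‖f ((2 * μ) • x + μ • y) + f (μ • x + (2 * μ) • y) -
        μ • (f ((3 : ℂ) • x) + f ((3 : ℂ) • y))‖ ≤ φ x y)
    (L : ℝ) (hL0 : 0 < L) (hL1 : L < 1)
    (hφL : ∀ x y : X, (1 / 2) * φ (2 * x) (2 * y) ≤ L * φ x y)
    (hψlim1 : ∀ x y : X,
      Filter.Tendsto (fun k : ℕ => ((8 : ℝ) ^ k)⁻¹ * ψ ((2 : X) ^ k * x) ((2 : X) ^ k * y))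
        Filter.atTop (nhds 0))
    (hψlim2 : ∀ x y : X,
      Filter.Tendsto (fun k : ℕ => ((4 : ℝ) ^ k)⁻¹ * ψ ((2 : X) ^ k * x) y)
        Filter.atTop (nhds 0)) :
    (∀ x y : X, f (x + y) = f x + f y) ∧
      (∀ (c : ℂ) (x : X), f (c • x) = c • f x) ∧
      ∀ x y : X, f (x * y) = f x * y + x * f y := by
  -- basic scalar translation
  have h2smul : ∀ x : X, (2:X) * x = (2:ℂ) • x := by
    intro x; rw [Algebra.smul_def, map_ofNat]
  have hμ1 : ∃ t : ℝ, 0 ≤ t ∧ t ≤ 2 * Real.pi / n₀ ∧ (1:ℂ) = Complex.exp (t * Complex.I) :=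
    ⟨0, le_refl 0, by positivity, by simp⟩
  have hE : ∀ x y : X, ‖f ((2:ℂ)•x + y) + f (x + (2:ℂ)•y) - (f ((3:ℂ)•x) + f ((3:ℂ)•y))‖ ≤ φ x y := by
    intro x y
    have h := h2 x y 1 hμ1
    simp only [mul_one, one_smul] at h
    exact h
  have hφ2 : ∀ x y : X, φ ((2:ℂ)•x) ((2:ℂ)•y) ≤ 2*L*φ x y := by
    intro x y
    rw [← h2smul, ← h2smul]
    have := hφL x y
    linarith
  have hφpow : ∀ (k:ℕ) (x y : X), φ ((2:ℂ)^k•x) ((2:ℂ)^k•y) ≤ (2*L)^k * φ x y := by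
    intro k
    induction k with
    | zero => intro x y; simp
    | succ n ih =>
      intro x y
      have e1 : ∀ z : X, (2:ℂ)^(n+1) • z = (2:ℂ)^n • ((2:ℂ)•z) := by
        intro z; rw [smul_smul, ← pow_succ]
      rw [e1 x, e1 y]
      calc φ ((2:ℂ)^n • ((2:ℂ)•x)) ((2:ℂ)^n • ((2:ℂ)•y)) ≤ (2*L)^n * φ ((2:ℂ)•x) ((2:ℂ)•y) :=
            ih _ _
        _ ≤ (2*L)^n * (2*L*φ x y) :=
            mul_le_mul_of_nonneg_left (hφ2 x y) (by positivity)
        _ = (2*L)^(n+1) * φ x y := by ring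
  -- the basic approximate estimates
  have hp : ∀ u : X, ‖f u - f ((2:ℂ)•u) - f (-u)‖ ≤ pfun φ u := by
    intro u
    have h := hE (((2:ℂ)/3)•u) ((-(1:ℂ)/3)•u)
    rw [show (2:ℂ)•(((2:ℂ)/3)•u) + (-(1:ℂ)/3)•u = u by module,
        show ((2:ℂ)/3)•u + (2:ℂ)•((-(1:ℂ)/3)•u) = (0:X) by module,
        show (3:ℂ)•(((2:ℂ)/3)•u) = (2:ℂ)•u by module,
        show (3:ℂ)•((-(1:ℂ)/3)•u) = -u by module, hf0] at h
    have e : f u + 0 - (f ((2:ℂ)•u) + f (-u)) = f u - f ((2:ℂ)•u) - f (-u) := by abel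
    rw [e] at h
    exact h
  have hq : ∀ w : X, ‖f w + f (-w)‖ ≤ qfun φ w := by
    intro w
    have h1 := hp ((2⁻¹:ℂ)•w)
    have h2' := hp (-((2⁻¹:ℂ)•w))
    rw [show (2:ℂ)•((2⁻¹:ℂ)•w) = w by module] at h1
    rw [show (2:ℂ)•(-((2⁻¹:ℂ)•w)) = -w by module, neg_neg] at h2'
    calc ‖f w + f (-w)‖
        = ‖-((f ((2⁻¹:ℂ)•w) - f w - f (-((2⁻¹:ℂ)•w)))
            + (f (-((2⁻¹:ℂ)•w)) - f (-w) - f ((2⁻¹:ℂ)•w)))‖ := by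
          congr 1; abel
      _ = ‖(f ((2⁻¹:ℂ)•w) - f w - f (-((2⁻¹:ℂ)•w)))
            + (f (-((2⁻¹:ℂ)•w)) - f (-w) - f ((2⁻¹:ℂ)•w))‖ := norm_neg _
      _ ≤ ‖f ((2⁻¹:ℂ)•w) - f w - f (-((2⁻¹:ℂ)•w))‖
            + ‖f (-((2⁻¹:ℂ)•w)) - f (-w) - f ((2⁻¹:ℂ)•w)‖ := norm_add_le _ _
      _ ≤ qfun φ w := add_le_add h1 h2'
  have hχ : ∀ u : X, ‖f ((2:ℂ)•u) - (2:ℂ)•f u‖ ≤ χfun φ u := by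
    intro u
    have h1 := hp u
    have h2' := hq u
    calc ‖f ((2:ℂ)•u) - (2:ℂ)•f u‖
        = ‖(-(f u + f (-u))) + (-(f u - f ((2:ℂ)•u) - f (-u)))‖ := by
          congr 1; module
      _ ≤ ‖-(f u + f (-u))‖ + ‖-(f u - f ((2:ℂ)•u) - f (-u))‖ := norm_add_le _ _
      _ = ‖f u + f (-u)‖ + ‖f u - f ((2:ℂ)•u) - f (-u)‖ := by rw [norm_neg, norm_neg]
      _ ≤ χfun φ u := add_le_add h2' h1
  -- power bounds
  have hppow : ∀ (k:ℕ) (u : X), pfun φ ((2:ℂ)^k • u) ≤ (2*L)^k * pfun φ u := by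
    intro k u
    simp only [pfun]
    rw [show ((2:ℂ)/3)•((2:ℂ)^k•u) = (2:ℂ)^k • (((2:ℂ)/3)•u) from smul_comm _ _ _,
        show (-(1:ℂ)/3)•((2:ℂ)^k•u) = (2:ℂ)^k • ((-(1:ℂ)/3)•u) from smul_comm _ _ _]
    exact hφpow k _ _
  have hqpow : ∀ (k:ℕ) (u : X), qfun φ ((2:ℂ)^k • u) ≤ (2*L)^k * qfun φ u := by
    intro k u
    simp only [qfun]
    have a2 := hppow k ((2⁻¹:ℂ)•u)
    have a3 := hppow k (-((2⁻¹:ℂ)•u))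
    rw [show (2⁻¹:ℂ)•((2:ℂ)^k•u) = (2:ℂ)^k•((2⁻¹:ℂ)•u) from smul_comm _ _ _]
    rw [show -((2:ℂ)^k•((2⁻¹:ℂ)•u)) = (2:ℂ)^k•(-((2⁻¹:ℂ)•u)) from (smul_neg _ _).symm]
    have e : (2*L)^k * (pfun φ ((2⁻¹:ℂ)•u) + pfun φ (-((2⁻¹:ℂ)•u)))
        = (2*L)^k * pfun φ ((2⁻¹:ℂ)•u) + (2*L)^k * pfun φ (-((2⁻¹:ℂ)•u)) := by ring
    rw [e]
    exact add_le_add a2 a3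
  have hχpow : ∀ (k:ℕ) (u : X), χfun φ ((2:ℂ)^k • u) ≤ (2*L)^k * χfun φ u := by
    intro k u
    simp only [χfun]
    have e : (2*L)^k * (qfun φ u + pfun φ u) = (2*L)^k * qfun φ u + (2*L)^k * pfun φ u := by ring
    rw [e]
    exact add_le_add (hqpow k u) (hppow k u)
  -- norms of scalars
  have hnorm : ∀ (k:ℕ) (v : X), ‖((2:ℂ)^k)⁻¹ • v‖ = ((2:ℝ)^k)⁻¹ * ‖v‖ := by
    intro k v; rw [norm_smul, norm_inv, norm_pow]; norm_num
  have hχ0 : ∀ u : X, 0 ≤ χfun φ u := by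
    intro u
    have := hφ0 (((2:ℂ)/3)•u) ((-(1:ℂ)/3)•u)
    simp only [χfun, qfun, pfun]
    have b1 := hφ0 (((2:ℂ)/3)•((2⁻¹:ℂ)•u)) ((-(1:ℂ)/3)•((2⁻¹:ℂ)•u))
    have b2 := hφ0 (((2:ℂ)/3)•(-((2⁻¹:ℂ)•u))) ((-(1:ℂ)/3)•(-((2⁻¹:ℂ)•u)))
    positivity
  -- Cauchy estimate
  have hdist : ∀ (x : X) (k : ℕ), dist (sfun f k x) (sfun f (k+1) x) ≤ (χfun φ x / 2) * L^k := by
    intro x k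
    rw [dist_eq_norm]
    have e : sfun f k x - sfun f (k+1) x
        = ((2:ℂ)^(k+1))⁻¹ • ((2:ℂ)•f ((2:ℂ)^k•x) - f ((2:ℂ)^(k+1)•x)) := by
      simp only [sfun]
      rw [smul_sub]
      congr 1
      rw [smul_smul]
      congr 1
      rw [pow_succ, mul_inv, mul_assoc, inv_mul_cancel₀ (two_ne_zero), mul_one]
    rw [e, hnorm]
    have hb : ‖(2:ℂ)•f ((2:ℂ)^k•x) - f ((2:ℂ)^(k+1)•x)‖ ≤ χfun φ ((2:ℂ)^k • x) := by
      rw [norm_sub_rev]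
      have h := hχ ((2:ℂ)^k•x)
      rw [show (2:ℂ)•((2:ℂ)^k•x) = (2:ℂ)^(k+1)•x from by rw [smul_smul, ← pow_succ']] at h
      exact h
    calc ((2:ℝ)^(k+1))⁻¹ * ‖(2:ℂ)•f ((2:ℂ)^k•x) - f ((2:ℂ)^(k+1)•x)‖
        ≤ ((2:ℝ)^(k+1))⁻¹ * ((2*L)^k * χfun φ x) :=
          mul_le_mul_of_nonneg_left (hb.trans (hχpow k x)) (by positivity)
      _ = (χfun φ x / 2) * L^k := by
          rw [mul_pow, pow_succ]
          have h2k : (2:ℝ)^k ≠ 0 := by positivity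
          field_simp
  have hAex : ∀ x : X, ∃ a : X, Tendsto (fun k => sfun f k x) atTop (nhds a) := by
    intro x
    exact cauchySeq_tendsto_of_complete
      (cauchySeq_of_le_geometric L (χfun φ x / 2) hL1 (hdist x))
  obtain ⟨A, hA⟩ : ∃ A : X → X, ∀ x, Tendsto (fun k => sfun f k x) atTop (nhds (A x)) :=
    ⟨fun x => (hAex x).choose, fun x => (hAex x).choose_spec⟩
  -- generic limit-vanishing helper
  have hlim0 : ∀ (T : X) (S : ℕ → X) (b : ℕ → ℝ), Tendsto S atTop (nhds T) →
      (∀ k, ‖S k‖ ≤ b k) → Tendsto b atTop (nhds 0) → T = 0 := by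
    intro T S b hS hb hb0
    exact tendsto_nhds_unique hS (squeeze_zero_norm hb hb0)
  have hLk : ∀ c : ℝ, Tendsto (fun k : ℕ => L^k * c) atTop (nhds 0) := by
    intro c
    have := (tendsto_pow_atTop_nhds_zero_of_lt_one hL0.le hL1).mul_const c
    simpa using this
  have h2C : (2:ℂ) ≠ 0 := two_ne_zero
  have hA0 : A 0 = 0 := by
    have h0 : (fun k => sfun f k (0:X)) = fun _ => (0:X) := by
      funext k; simp [sfun, hf0]
    have h1 := hA 0
    rw [h0] at h1
    exact tendsto_nhds_unique h1 tendsto_const_nhds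
  have hA2 : ∀ x : X, A ((2:ℂ)•x) = (2:ℂ)•A x := by
    intro x
    have h1 : (fun k => sfun f k ((2:ℂ)•x)) = fun k => (2:ℂ) • sfun f (k+1) x := by
      funext k
      simp only [sfun]
      have e1 : (2:ℂ)^k • (2:ℂ) • x = (2:ℂ)^(k+1) • x := by rw [smul_smul, ← pow_succ]
      rw [e1, smul_smul]
      congr 1
      rw [pow_succ, mul_inv, ← mul_assoc, mul_comm (2:ℂ), mul_assoc, mul_inv_cancel₀ h2C, mul_one]
    have h3 : Tendsto (fun k => (2:ℂ)•sfun f (k+1) x) atTop (nhds ((2:ℂ)•A x)) :=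
      ((hA x).comp (tendsto_add_atTop_nat 1)).const_smul _
    rw [← h1] at h3
    exact tendsto_nhds_unique (hA _) h3
  have hAμ : ∀ (x y : X) (μ : ℂ),
      (∃ t : ℝ, 0 ≤ t ∧ t ≤ 2 * Real.pi / n₀ ∧ μ = Complex.exp (t * Complex.I)) →
      A ((2*μ)•x + μ•y) + A (μ•x + (2*μ)•y) = μ•(A ((3:ℂ)•x) + A ((3:ℂ)•y)) := by
    intro x y μ hμ
    have hS : ∀ k, sfun f k ((2*μ)•x + μ•y) + sfun f k (μ•x + (2*μ)•y)
        - μ•(sfun f k ((3:ℂ)•x) + sfun f k ((3:ℂ)•y))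
        = ((2:ℂ)^k)⁻¹ • (f ((2*μ)•((2:ℂ)^k•x) + μ•((2:ℂ)^k•y))
            + f (μ•((2:ℂ)^k•x) + (2*μ)•((2:ℂ)^k•y))
            - μ•(f ((3:ℂ)•((2:ℂ)^k•x)) + f ((3:ℂ)•((2:ℂ)^k•y)))) := by
      intro k
      simp only [sfun]
      rw [show (2:ℂ)^k•((2*μ)•x + μ•y) = (2*μ)•((2:ℂ)^k•x) + μ•((2:ℂ)^k•y) by module,
          show (2:ℂ)^k•(μ•x + (2*μ)•y) = μ•((2:ℂ)^k•x) + (2*μ)•((2:ℂ)^k•y) by module,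
          show (2:ℂ)^k•((3:ℂ)•x) = (3:ℂ)•((2:ℂ)^k•x) from smul_comm _ _ _,
          show (2:ℂ)^k•((3:ℂ)•y) = (3:ℂ)•((2:ℂ)^k•y) from smul_comm _ _ _]
      module
    have hSb : ∀ k, ‖sfun f k ((2*μ)•x + μ•y) + sfun f k (μ•x + (2*μ)•y)
        - μ•(sfun f k ((3:ℂ)•x) + sfun f k ((3:ℂ)•y))‖ ≤ L^k * φ x y := by
      intro k
      rw [hS k, hnorm]
      have hb := h2 ((2:ℂ)^k•x) ((2:ℂ)^k•y) μ hμ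
      calc ((2:ℝ)^k)⁻¹ * ‖f ((2*μ)•((2:ℂ)^k•x) + μ•((2:ℂ)^k•y))
            + f (μ•((2:ℂ)^k•x) + (2*μ)•((2:ℂ)^k•y))
            - μ•(f ((3:ℂ)•((2:ℂ)^k•x)) + f ((3:ℂ)•((2:ℂ)^k•y)))‖
          ≤ ((2:ℝ)^k)⁻¹ * ((2*L)^k * φ x y) :=
            mul_le_mul_of_nonneg_left (hb.trans (hφpow k x y)) (by positivity)
        _ = L^k * φ x y := by
            rw [mul_pow]
            have h2k : (2:ℝ)^k ≠ 0 := by positivity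
            field_simp
    have hT : Tendsto (fun k => sfun f k ((2*μ)•x + μ•y) + sfun f k (μ•x + (2*μ)•y)
        - μ•(sfun f k ((3:ℂ)•x) + sfun f k ((3:ℂ)•y))) atTop
        (nhds (A ((2*μ)•x + μ•y) + A (μ•x + (2*μ)•y) - μ•(A ((3:ℂ)•x) + A ((3:ℂ)•y)))) :=
      ((hA _).add (hA _)).sub (((hA _).add (hA _)).const_smul μ)
    have h0 := hlim0 _ _ _ hT hSb (hLk (φ x y))
    exact sub_eq_zero.mp h0
  have hAodd : ∀ u : X, A (-u) = - A u := by
    intro u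
    have hS : ∀ k, sfun f k u + sfun f k (-u)
        = ((2:ℂ)^k)⁻¹ • (f ((2:ℂ)^k•u) + f (-((2:ℂ)^k•u))) := by
      intro k
      simp only [sfun]
      rw [smul_neg]
      module
    have hSb : ∀ k, ‖sfun f k u + sfun f k (-u)‖ ≤ L^k * qfun φ u := by
      intro k
      rw [hS k, hnorm]
      have hb := (hq ((2:ℂ)^k•u)).trans (hqpow k u)
      calc ((2:ℝ)^k)⁻¹ * ‖f ((2:ℂ)^k•u) + f (-((2:ℂ)^k•u))‖
          ≤ ((2:ℝ)^k)⁻¹ * ((2*L)^k * qfun φ u) :=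
            mul_le_mul_of_nonneg_left hb (by positivity)
        _ = L^k * qfun φ u := by
            rw [mul_pow]
            have h2k : (2:ℝ)^k ≠ 0 := by positivity
            field_simp
    have hT : Tendsto (fun k => sfun f k u + sfun f k (-u)) atTop (nhds (A u + A (-u))) :=
      (hA u).add (hA (-u))
    have h0 := hlim0 _ _ _ hT hSb (hLk (qfun φ u))
    exact eq_neg_of_add_eq_zero_right h0
  have hhalfX : ∀ t : X, t + t = 0 → t = 0 := by
    intro t h
    have h2' : (2:ℂ) • t = 0 := by rw [two_smul]; exact h
    have h4 : t = (2:ℂ)⁻¹ • ((2:ℂ) • t) := (inv_smul_smul₀ h2C t).symm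
    rw [h4, h2', smul_zero]
  have hhalfEqX : ∀ t s : X, t + t = s + s → t = s := by
    intro t s h
    have := hhalfX (t - s) (by rw [sub_add_sub_comm, h, sub_self])
    exact sub_eq_zero.mp this
  have hAeq1 : ∀ x y : X, A ((2:ℂ)•x + y) + A (x + (2:ℂ)•y) = A ((3:ℂ)•x) + A ((3:ℂ)•y) := by
    intro x y
    have h := hAμ x y 1 hμ1
    simpa only [mul_one, one_smul] using h
  have hA3 : ∀ x : X, A ((3:ℂ)•x) = (3:ℂ)•A x := by
    intro x
    have h := hAeq1 x 0
    simp only [smul_zero, add_zero, hA0] at h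
    rw [hA2] at h
    rw [← h]
    module
  have hJ1 : ∀ s t : X, A s + A t = A ((2:ℂ)•s - t) + A ((2:ℂ)•t - s) := by
    intro s t
    have h := hAeq1 ((3⁻¹:ℂ)•((2:ℂ)•s - t)) ((3⁻¹:ℂ)•((2:ℂ)•t - s))
    rw [show (2:ℂ)•((3⁻¹:ℂ)•((2:ℂ)•s - t)) + (3⁻¹:ℂ)•((2:ℂ)•t - s) = s by module,
        show (3⁻¹:ℂ)•((2:ℂ)•s - t) + (2:ℂ)•((3⁻¹:ℂ)•((2:ℂ)•t - s)) = t by module,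
        show (3:ℂ)•((3⁻¹:ℂ)•((2:ℂ)•s - t)) = (2:ℂ)•s - t by module,
        show (3:ℂ)•((3⁻¹:ℂ)•((2:ℂ)•t - s)) = (2:ℂ)•t - s by module] at h
    exact h
  have hK : ∀ s t : X, A ((2:ℂ)•s + t) = (2:ℂ)•A s + A t := by
    intro s t
    have j1 := hJ1 s (-t)
    rw [hAodd t, show (2:ℂ)•s - -t = (2:ℂ)•s + t by module,
        show (2:ℂ)•(-t) - s = -(s + (2:ℂ)•t) by module, hAodd (s + (2:ℂ)•t)] at j1
    have j3 := hAeq1 s t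
    rw [hA3 s, hA3 t] at j3
    apply hhalfEqX
    calc A ((2:ℂ)•s + t) + A ((2:ℂ)•s + t)
        = (A ((2:ℂ)•s + t) + A (s + (2:ℂ)•t)) + (A ((2:ℂ)•s + t) + -A (s + (2:ℂ)•t)) := by abel
      _ = ((3:ℂ)•A s + (3:ℂ)•A t) + (A s + -A t) := by rw [j3, ← j1]
      _ = ((2:ℂ)•A s + A t) + ((2:ℂ)•A s + A t) := by module
  have hAadd : ∀ a b : X, A (a+b) = A a + A b := by
    intro a b
    have h := hK ((2⁻¹:ℂ)•a) b
    rw [show (2:ℂ)•((2⁻¹:ℂ)•a) = a by module] at h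
    have h2' := hA2 ((2⁻¹:ℂ)•a)
    rw [show (2:ℂ)•((2⁻¹:ℂ)•a) = a by module] at h2'
    rw [h, ← h2']
  have hT1 : ∀ (μ : ℂ),
      (∃ t : ℝ, 0 ≤ t ∧ t ≤ 2 * Real.pi / n₀ ∧ μ = Complex.exp (t * Complex.I)) →
      ∀ x : X, A (μ•x) = μ • A x := by
    intro μ hμ x
    have h := hAμ ((3⁻¹:ℂ)•x) ((3⁻¹:ℂ)•x) μ hμ
    rw [show (2*μ)•((3⁻¹:ℂ)•x) + μ•((3⁻¹:ℂ)•x) = μ•x by module,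
        show μ•((3⁻¹:ℂ)•x) + (2*μ)•((3⁻¹:ℂ)•x) = μ•x by module,
        show (3:ℂ)•((3⁻¹:ℂ)•x) = x by module] at h
    apply hhalfEqX
    rw [h]
    module
  have hπpos : (0:ℝ) < 2 * Real.pi / n₀ := by
    have : (0:ℝ) < n₀ := by exact_mod_cast hn₀
    positivity
  have hcircpos : ∀ (θ : ℝ), 0 ≤ θ → ∀ x : X,
      A (Complex.exp (θ * Complex.I)•x) = Complex.exp (θ * Complex.I) • A x := by
    have hind : ∀ (m : ℕ) (θ : ℝ), 0 ≤ θ → θ ≤ m * (2 * Real.pi / n₀) → ∀ x : X,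
        A (Complex.exp (θ * Complex.I)•x) = Complex.exp (θ * Complex.I) • A x := by
      intro m
      induction m with
      | zero =>
        intro θ h0 h1 x
        have : θ = 0 := le_antisymm (by simpa using h1) h0
        subst this
        simp
      | succ m ih =>
        intro θ h0 h1 x
        by_cases hc : θ ≤ 2 * Real.pi / n₀
        · exact hT1 _ ⟨θ, h0, hc, rfl⟩ x
        · push_neg at hc
          have hd : 0 ≤ θ - 2 * Real.pi / n₀ := by linarith
          have he : θ - 2 * Real.pi / n₀ ≤ m * (2 * Real.pi / n₀) := by
            have : (↑(m+1):ℝ) = m + 1 := by push_cast; ring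
            rw [this] at h1
            linarith
          have hsplit : Complex.exp (↑θ * Complex.I)
              = Complex.exp (↑(2*Real.pi/n₀ : ℝ) * Complex.I)
                * Complex.exp (↑(θ - 2*Real.pi/n₀) * Complex.I) := by
            rw [← Complex.exp_add]
            congr 1
            push_cast
            ring
          rw [hsplit, mul_smul,
              hT1 _ ⟨2*Real.pi/n₀, le_of_lt hπpos, le_refl _, rfl⟩,
              ih _ hd he x, smul_smul]
    intro θ h0 x
    obtain ⟨m, hm⟩ := exists_nat_ge (θ / (2 * Real.pi / n₀))
    have : θ ≤ m * (2 * Real.pi / n₀) := by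
      rw [div_le_iff₀ hπpos] at hm
      linarith
    exact hind m θ h0 this x
  have hcirc : ∀ (θ : ℝ) (x : X),
      A (Complex.exp (θ * Complex.I)•x) = Complex.exp (θ * Complex.I) • A x := by
    intro θ x
    rcases le_or_gt 0 θ with h|h
    · exact hcircpos θ h x
    · have hp' := hcircpos (-θ) (by linarith) (Complex.exp (↑θ * Complex.I)•x)
      rw [smul_smul, ← Complex.exp_add,
          show (↑(-θ):ℂ)*Complex.I + ↑θ*Complex.I = 0 by push_cast; ring,
          Complex.exp_zero, one_smul] at hp'
      have h2' := congrArg (fun z => Complex.exp (↑θ * Complex.I) • z) hp'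
      rw [smul_smul, ← Complex.exp_add,
          show (↑θ:ℂ)*Complex.I + ↑(-θ)*Complex.I = 0 by push_cast; ring,
          Complex.exp_zero, one_smul] at h2'
      exact h2'.symm
  have hAnat : ∀ (n : ℕ) (z : X), A ((n:ℂ)•z) = (n:ℂ)•A z := by
    intro n
    induction n with
    | zero => intro z; simp [hA0]
    | succ m ih =>
      intro z
      have e : ((m+1:ℕ):ℂ)•z = (m:ℂ)•z + z := by push_cast; module
      rw [e, hAadd, ih]
      push_cast
      module
  have hsmall : ∀ (t : ℝ), |t| ≤ 2 → ∀ x : X, A ((t:ℂ)•x) = (t:ℂ)•A x := by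
    intro t ht x
    have hcos : Real.cos (Real.arccos (t/2)) = t/2 := by
      rcases abs_le.mp ht with ⟨ha, hb⟩
      exact Real.cos_arccos (by linarith) (by linarith)
    have hsum : Complex.exp (↑(Real.arccos (t/2))*Complex.I)
        + Complex.exp (↑(-Real.arccos (t/2))*Complex.I) = (t:ℂ) := by
      rw [Complex.exp_mul_I, Complex.exp_mul_I]
      push_cast
      rw [Complex.cos_neg, Complex.sin_neg, ← Complex.ofReal_cos, hcos]
      push_cast
      ring
    have e : (t:ℂ)•x = Complex.exp (↑(Real.arccos (t/2))*Complex.I)•x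
        + Complex.exp (↑(-Real.arccos (t/2))*Complex.I)•x := by
      rw [← add_smul, hsum]
    rw [e, hAadd, hcirc, hcirc, ← add_smul, hsum]
  have hreal : ∀ (r : ℝ) (x : X), A ((r:ℂ)•x) = (r:ℂ)•A x := by
    intro r x
    have hn1 : (0:ℝ) < ((⌈|r|⌉₊ + 1 : ℕ) : ℝ) := by positivity
    have hnne : ((⌈|r|⌉₊ + 1 : ℕ) : ℝ) ≠ 0 := ne_of_gt hn1
    have habs : |r / ((⌈|r|⌉₊ + 1 : ℕ) : ℝ)| ≤ 2 := by
      rw [abs_div, abs_of_pos hn1, div_le_iff₀ hn1]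
      have h1 : |r| ≤ ((⌈|r|⌉₊ : ℕ) : ℝ) := Nat.le_ceil _
      have h2' : ((⌈|r|⌉₊ : ℕ) : ℝ) + 1 ≤ ((⌈|r|⌉₊ + 1 : ℕ) : ℝ) := by push_cast; linarith
      nlinarith [abs_nonneg r]
    have hr : (r:ℂ) = ((⌈|r|⌉₊ + 1 : ℕ):ℂ) * ((r / ((⌈|r|⌉₊ + 1 : ℕ) : ℝ) : ℝ):ℂ) := by
      push_cast
      rw [mul_div_cancel₀]
      exact_mod_cast hnne
    rw [show (r:ℂ)•x = ((⌈|r|⌉₊ + 1 : ℕ):ℂ)•(((r / ((⌈|r|⌉₊ + 1 : ℕ) : ℝ) : ℝ):ℂ)•x) by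
          rw [smul_smul, ← hr]]
    rw [hAnat, hsmall _ habs, smul_smul, ← hr]
  have hsmulA : ∀ (c : ℂ) (x : X), A (c•x) = c•A x := by
    intro c x
    rcases eq_or_ne c 0 with h|h
    · subst h; simp [hA0]
    · have habs := Complex.norm_mul_exp_arg_mul_I c
      rw [show c•x = ((‖c‖ : ℝ):ℂ)•(Complex.exp (↑c.arg*Complex.I)•x) by
            rw [smul_smul, habs]]
      rw [hreal, hcirc, smul_smul, habs]
  -- product rescaling helpers
  have hLmul : ∀ (a : ℂ) (u v w : X), (a•u)*v*w = a•(u*v*w) := by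
    intro a u v w; rw [smul_mul_assoc, smul_mul_assoc]
  have hMmul : ∀ (a : ℂ) (u v w : X), u*(a•v)*w = a•(u*v*w) := by
    intro a u v w; rw [mul_smul_comm, smul_mul_assoc]
  have hRmul : ∀ (a : ℂ) (u v w : X), u*v*(a•w) = a•(u*v*w) := by
    intro a u v w; rw [mul_smul_comm]
  have h2kne : ∀ k:ℕ, ((2:ℂ)^k) ≠ 0 := fun k => pow_ne_zero _ two_ne_zero
  have hinv3 : ∀ k:ℕ, ((2:ℂ)^(3*k))⁻¹ * ((2:ℂ)^k*(2:ℂ)^k) = ((2:ℂ)^k)⁻¹ := by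
    intro k
    have h := h2kne k
    rw [show 3*k = k + (k+k) by ring, pow_add, pow_add]
    field_simp
  have hinv2 : ∀ k:ℕ, ((2:ℂ)^(2*k))⁻¹ * (2:ℂ)^k = ((2:ℂ)^k)⁻¹ := by
    intro k
    have h := h2kne k
    rw [two_mul, pow_add]
    field_simp
  have hinv2' : ∀ k:ℕ, ((2:ℂ)^(2*k))⁻¹ * ((2:ℂ)^k*(2:ℂ)^k) = 1 := by
    intro k
    have h := h2kne k
    rw [two_mul, pow_add]
    field_simp
  have hnorm8 : ∀ (k:ℕ) (v:X), ‖((2:ℂ)^(3*k))⁻¹ • v‖ = ((8:ℝ)^k)⁻¹ * ‖v‖ := by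
    intro k v
    rw [hnorm (3*k) v]
    congr 2
    rw [pow_mul]
    norm_num
  have hnorm4 : ∀ (k:ℕ) (v:X), ‖((2:ℂ)^(2*k))⁻¹ • v‖ = ((4:ℝ)^k)⁻¹ * ‖v‖ := by
    intro k v
    rw [hnorm (2*k) v]
    congr 2
    rw [pow_mul]
    norm_num
  have hkmul : ∀ (k:ℕ) (x:X), (2:X)^k * x = ((2:ℂ)^k) • x := by
    intro k x; rw [Algebra.smul_def, map_pow, map_ofNat]
  -- A is a Jordan triple derivation
  have htA : ∀ x y : X, A (x*y*x) = A x*y*x + x*A y*x + x*y*A x := by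
    intro x y
    have hSk : ∀ k, sfun f (3*k) (x*y*x) - sfun f k x*y*x - x*sfun f k y*x - x*y*sfun f k x
        = ((2:ℂ)^(3*k))⁻¹ • (f (((2:ℂ)^k•x)*((2:ℂ)^k•y)*((2:ℂ)^k•x))
            - f ((2:ℂ)^k•x)*((2:ℂ)^k•y)*((2:ℂ)^k•x)
            - ((2:ℂ)^k•x)*f ((2:ℂ)^k•y)*((2:ℂ)^k•x)
            - ((2:ℂ)^k•x)*((2:ℂ)^k•y)*f ((2:ℂ)^k•x)) := by
      intro k
      have e1 : ((2:ℂ)^k•x)*((2:ℂ)^k•y)*((2:ℂ)^k•x) = (2:ℂ)^(3*k)•(x*y*x) := by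
        rw [hLmul, hMmul, hRmul, smul_smul, smul_smul]
        congr 1
        ring
      have e2 : f ((2:ℂ)^k•x)*((2:ℂ)^k•y)*((2:ℂ)^k•x)
          = ((2:ℂ)^k*(2:ℂ)^k)•(f ((2:ℂ)^k•x)*y*x) := by
        rw [hMmul, hRmul, smul_smul]
      have e3 : ((2:ℂ)^k•x)*f ((2:ℂ)^k•y)*((2:ℂ)^k•x)
          = ((2:ℂ)^k*(2:ℂ)^k)•(x*f ((2:ℂ)^k•y)*x) := by
        rw [hLmul, hRmul, smul_smul]
      have e4 : ((2:ℂ)^k•x)*((2:ℂ)^k•y)*f ((2:ℂ)^k•x)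
          = ((2:ℂ)^k*(2:ℂ)^k)•(x*y*f ((2:ℂ)^k•x)) := by
        rw [hLmul, hMmul, smul_smul]
      rw [e1, e2, e3, e4, smul_sub, smul_sub, smul_sub,
          smul_smul, smul_smul, smul_smul, hinv3 k]
      simp only [sfun]
      rw [hLmul, hMmul, hRmul]
    have hb : ∀ k, ‖sfun f (3*k) (x*y*x) - sfun f k x*y*x - x*sfun f k y*x - x*y*sfun f k x‖
        ≤ ((8:ℝ)^k)⁻¹ * ψ ((2:X)^k*x) ((2:X)^k*y) := by
      intro k
      rw [hSk k, hnorm8, hkmul, hkmul]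
      exact mul_le_mul_of_nonneg_left (h1 ((2:ℂ)^k•x) ((2:ℂ)^k•y)) (by positivity)
    have t1 : Tendsto (fun k => sfun f (3*k) (x*y*x)) atTop (nhds (A (x*y*x))) :=
      (hA _).comp (Filter.tendsto_atTop_atTop.mpr (fun b => ⟨b, fun a ha => by omega⟩))
    have t2 : Tendsto (fun k => sfun f k x*y*x) atTop (nhds (A x*y*x)) :=
      ((hA x).mul tendsto_const_nhds).mul tendsto_const_nhds
    have t3 : Tendsto (fun k => x*sfun f k y*x) atTop (nhds (x*A y*x)) :=
      (tendsto_const_nhds.mul (hA y)).mul tendsto_const_nhds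
    have t4 : Tendsto (fun k => x*y*sfun f k x) atTop (nhds (x*y*A x)) :=
      tendsto_const_nhds.mul (hA x)
    have h0 := hlim0 _ _ _ (((t1.sub t2).sub t3).sub t4) hb (hψlim1 x y)
    rw [sub_sub, sub_sub, sub_eq_zero] at h0
    rw [h0]
    abel
  -- second triple identity, with f in the middle
  have hId2 : ∀ y x : X, A (x*y*x) = A x*y*x + x*f y*x + x*y*A x := by
    intro y x
    have hSk : ∀ k, sfun f (2*k) (x*y*x) - sfun f k x*y*x - x*f y*x - x*y*sfun f k x
        = ((2:ℂ)^(2*k))⁻¹ • (f (((2:ℂ)^k•x)*y*((2:ℂ)^k•x))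
            - f ((2:ℂ)^k•x)*y*((2:ℂ)^k•x)
            - ((2:ℂ)^k•x)*f y*((2:ℂ)^k•x)
            - ((2:ℂ)^k•x)*y*f ((2:ℂ)^k•x)) := by
      intro k
      have e1 : ((2:ℂ)^k•x)*y*((2:ℂ)^k•x) = (2:ℂ)^(2*k)•(x*y*x) := by
        rw [hLmul, hRmul, smul_smul]
        congr 1
        ring
      have e2 : f ((2:ℂ)^k•x)*y*((2:ℂ)^k•x) = (2:ℂ)^k•(f ((2:ℂ)^k•x)*y*x) := by
        rw [hRmul]
      have e3 : ((2:ℂ)^k•x)*f y*((2:ℂ)^k•x) = ((2:ℂ)^k*(2:ℂ)^k)•(x*f y*x) := by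
        rw [hLmul, hRmul, smul_smul]
      have e4 : ((2:ℂ)^k•x)*y*f ((2:ℂ)^k•x) = (2:ℂ)^k•(x*y*f ((2:ℂ)^k•x)) := by
        rw [hLmul]
      rw [e1, e2, e3, e4, smul_sub, smul_sub, smul_sub,
          smul_smul, smul_smul, smul_smul, hinv2 k, hinv2' k, one_smul]
      simp only [sfun]
      rw [hLmul, hRmul]
    have hb : ∀ k, ‖sfun f (2*k) (x*y*x) - sfun f k x*y*x - x*f y*x - x*y*sfun f k x‖
        ≤ ((4:ℝ)^k)⁻¹ * ψ ((2:X)^k*x) y := by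
      intro k
      rw [hSk k, hnorm4, hkmul]
      exact mul_le_mul_of_nonneg_left (h1 ((2:ℂ)^k•x) y) (by positivity)
    have t1 : Tendsto (fun k => sfun f (2*k) (x*y*x)) atTop (nhds (A (x*y*x))) :=
      (hA _).comp (Filter.tendsto_atTop_atTop.mpr (fun b => ⟨b, fun a ha => by omega⟩))
    have t2 : Tendsto (fun k => sfun f k x*y*x) atTop (nhds (A x*y*x)) :=
      ((hA x).mul tendsto_const_nhds).mul tendsto_const_nhds
    have t3 : Tendsto (fun _ : ℕ => x*f y*x) atTop (nhds (x*f y*x)) := tendsto_const_nhds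
    have t4 : Tendsto (fun k => x*y*sfun f k x) atTop (nhds (x*y*A x)) :=
      tendsto_const_nhds.mul (hA x)
    have h0 := hlim0 _ _ _ (((t1.sub t2).sub t3).sub t4) hb (hψlim2 x y)
    rw [sub_sub, sub_sub, sub_eq_zero] at h0
    rw [h0]
    abel
  -- hyperstability : f = A
  have hfA : ∀ y : X, f y = A y := by
    intro y
    have hxy : ∀ x : X, x * (A y - f y) * x = 0 := by
      intro x
      have h5 := (htA x y).symm.trans (hId2 y x)
      have h6 : x*A y*x = x*f y*x := add_left_cancel (add_right_cancel h5)
      rw [mul_sub, sub_mul, h6, sub_self]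
    have h7 := aux_sandwich hsemiprime _ hxy
    exact (sub_eq_zero.mp h7).symm
  refine ⟨?_, ?_, ?_⟩
  · intro x y
    rw [hfA (x+y), hfA x, hfA y]
    exact hAadd x y
  · intro c x
    rw [hfA (c•x), hfA x]
    exact hsmulA c x
  · exact aux_bresar hsemiprime hhalfX f
      (fun a b => by rw [hfA (a+b), hfA a, hfA b]; exact hAadd a b)
      (fun a z => by rw [hfA (a*z*a), hfA a, hfA z]; exact htA a z)
end

section
/- Let n₀ be a positive integer and let X be a complex Banach algebra. Let φ, ψ : X² → [0,∞) and f : X → X with f(0) = 0 satisfy ‖f(xyx) − f(x)yx − xf(y)x − xyf(x)‖ ≤ ψ(x,y) for all x,y ∈ X, and ‖f(2μx + μy) + f(μx + 2μy) − μ[f(3x) + f(3y)]‖ ≤ φ(x,y) for all x,y ∈ X and all μ ∈ T¹_{n₀}. Assume that there exists 0 < L < 1 such that (1/2)φ(2x,2y) ≤ L·φ(x,y) and lim_{k→∞} 8^{-k} ψ(2ᵏx, 2ᵏy) = 0 for all x,y ∈ X. Then there exists a unique linear Jordan triple derivation H : X → X such that ‖f(x) − H(x)‖ ≤ Φ(x)/(2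 − 2L) for all x ∈ X, where Φ(x) = φ(x/2, 0) + φ(−x/2, 0) + φ(x/2, −x/2) + φ(−x/3, 2x/3). -/
open Filter Topology Complex

section AlgebraHelpers
variable {M : Type*} [AddCommGroup M] [Module ℂ M]

lemma half_cancel {a b : M} (h : a + a = b + b) : a = b := by
  have h2 : (2:ℂ) • a = (2:ℂ) • b := by rw [two_smul, two_smul]; exact h
  exact smul_right_injective M (two_ne_zero (α := ℂ)) h2

lemma eq_zero_of_norm_le_tendsto {E : Type*} [NormedAddCommGroup E]
    {v : ℕ → E} {w : E} {a : ℕ → ℝ}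
    (hv : Tendsto v atTop (𝓝 w)) (ha : Tendsto a atTop (𝓝 0))
    (h : ∀ k, ‖v k‖ ≤ a k) : w = 0 := by
  have h1 : Tendsto (fun k => ‖v k‖) atTop (𝓝 ‖w‖) := hv.norm
  have h2 : ‖w‖ ≤ 0 := le_of_tendsto_of_tendsto' h1 ha h
  exact norm_le_zero_iff.mp h2

lemma additive_of_funceq (H : M → M) (h0 : H 0 = 0)
    (hP : ∀ x y : M, H ((2:ℂ)•x + y) + H (x + (2:ℂ)•y) = H ((3:ℂ)•x) + H ((3:ℂ)•y)) :
    ∀ x y : M, H (x + y) = H x + H y := by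
  have h3 : ∀ x : M, H ((3:ℂ)•x) = H ((2:ℂ)•x) + H x := by
    intro x
    have h := hP x 0
    rw [smul_zero, add_zero, add_zero, smul_zero, h0, add_zero] at h
    exact h.symm
  have hP' : ∀ x y : M, H ((2:ℂ)•x + y) + H (x + (2:ℂ)•y)
      = H ((2:ℂ)•x) + H x + (H ((2:ℂ)•y) + H y) := by
    intro x y; rw [hP, h3, h3]
  have hodd2 : ∀ x : M, H (-((2:ℂ)•x)) = - H ((2:ℂ)•x) := by
    intro x
    have h := hP' x (-x)
    rw [show (2:ℂ)•x + -x = x by module, show x + (2:ℂ)•(-x) = -x by module,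
      show (2:ℂ)•(-x) = -((2:ℂ)•x) by module] at h
    have key : H ((2:ℂ)•x) + H (-((2:ℂ)•x))
        = (H ((2:ℂ)•x) + H x + (H (-((2:ℂ)•x)) + H (-x))) - (H x + H (-x)) := by abel
    rw [← h, sub_self] at key
    exact eq_neg_of_add_eq_zero_right key
  have hodd : ∀ x : M, H (-x) = - H x := by
    intro x
    have := hodd2 ((1/2 : ℂ) • x)
    rw [show (2:ℂ) • ((1/2 : ℂ) • x) = x by module] at this; exact this
  have hG : ∀ x y : M, H ((2:ℂ)•(x+y)) + H (x+y)
      = (H ((2:ℂ)•x) + H x) + (H ((2:ℂ)•y) + H y) := by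
    intro x y
    have hS := hP' (x + y) (-y)
    have hT := hP' (x + y) (-x)
    rw [show (2:ℂ)•(x+y) + -y = (2:ℂ)•x + y by module,
      show (x+y) + (2:ℂ)•(-y) = x - y by module,
      show (2:ℂ)•(-y) = -((2:ℂ)•y) by module, hodd2, hodd] at hS
    rw [show (2:ℂ)•(x+y) + -x = x + (2:ℂ)•y by module,
      show (x+y) + (2:ℂ)•(-x) = -(x - y) by module,
      show (2:ℂ)•(-x) = -((2:ℂ)•x) by module, hodd2, hodd, hodd] at hT
    have hsum : H ((2:ℂ)•x) + H x + (H ((2:ℂ)•y) + H y)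
        = (H ((2:ℂ)•(x+y)) + H (x+y)) + (H ((2:ℂ)•(x+y)) + H (x+y))
          - (H ((2:ℂ)•x) + H x) - (H ((2:ℂ)•y) + H y) := by
      rw [← hP' x y]
      calc H ((2:ℂ)•x + y) + H (x + (2:ℂ)•y)
          = (H ((2:ℂ)•x + y) + H (x - y)) + (H (x + (2:ℂ)•y) + - H (x - y)) := by abel
        _ = _ := by rw [hS, hT]; abel
    apply half_cancel
    calc (H ((2:ℂ)•(x+y)) + H (x+y)) + (H ((2:ℂ)•(x+y)) + H (x+y))
        = (H ((2:ℂ)•x) + H x + (H ((2:ℂ)•y) + H y)) +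
          ((H ((2:ℂ)•(x+y)) + H (x+y)) + (H ((2:ℂ)•(x+y)) + H (x+y))
          - (H ((2:ℂ)•x) + H x) - (H ((2:ℂ)•y) + H y)) := by abel
      _ = _ := by rw [← hsum]
  intro x y
  have key : ∀ z : M, H z = H ((2:ℂ)•((1/3:ℂ)•z)) + H ((1/3:ℂ)•z) := by
    intro z
    have := h3 ((1/3:ℂ)•z)
    rw [show (3:ℂ) • ((1/3:ℂ)•z) = z by module] at this; exact this
  rw [key (x+y), show (1/3:ℂ)•(x+y) = (1/3:ℂ)•x + (1/3:ℂ)•y by module, hG,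
    ← key x, ← key y]

lemma clinear_of_circle (H : M → M)
    (hadd : ∀ x y : M, H (x + y) = H x + H y)
    (hcirc : ∀ t : ℝ, 0 ≤ t → ∀ x : M,
      H (Complex.exp (t * Complex.I) • x) = Complex.exp (t * Complex.I) • H x) :
    ∀ (c : ℂ) (x : M), H (c • x) = c • H x := by
  have h0 : H 0 = 0 := by
    have h := hadd 0 0; rw [add_zero] at h; exact add_eq_right.mp h.symm
  have hnsmul : ∀ (n : ℕ) (x : M), H (n • x) = n • H x := by
    intro n x
    induction n with
    | zero => simp [h0]
    | succ k ih => rw [succ_nsmul, succ_nsmul, hadd, ih]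
  have hsmall : ∀ r : ℝ, |r| ≤ 1 → ∀ x : M, H ((r:ℂ) • x) = (r:ℂ) • H x := by
    intro r hr x
    have hr1 : (-1:ℝ) ≤ r/2 := by have := neg_le_of_abs_le hr; linarith
    have hr2 : r/2 ≤ 1 := by have := le_of_abs_le hr; linarith
    set θ := Real.arccos (r/2) with hθdef
    have hθ0 : 0 ≤ θ := Real.arccos_nonneg _
    have hθπ : θ ≤ Real.pi := Real.arccos_le_pi _
    have hθ2 : 0 ≤ 2 * Real.pi - θ := by have := Real.pi_pos; linarith
    have hper : Complex.exp (((2*Real.pi - θ) : ℝ) * Complex.I)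
        = Complex.exp (-(θ:ℂ) * Complex.I) := by
      rw [show (((2*Real.pi - θ) : ℝ) : ℂ) * Complex.I
          = 2 * (Real.pi : ℂ) * Complex.I + (-(θ:ℂ)) * Complex.I by push_cast; ring,
        Complex.exp_add, Complex.exp_two_pi_mul_I, one_mul]
    have hmain : Complex.exp ((θ:ℝ) * Complex.I)
        + Complex.exp (((2*Real.pi - θ):ℝ) * Complex.I) = (r:ℂ) := by
      rw [hper]
      have hcos : Complex.cos (θ : ℂ) = (Complex.exp ((θ:ℂ) * Complex.I)
          + Complex.exp (-(θ:ℂ) * Complex.I)) / 2 := by rw [Complex.cos]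
      have hc : Complex.cos (θ:ℂ) = ((r/2 : ℝ):ℂ) := by
        rw [← Complex.ofReal_cos, hθdef, Real.cos_arccos hr1 hr2]
      rw [hc] at hcos
      push_cast at hcos ⊢
      linear_combination 2 * hcos.symm
    have h1 := hcirc θ hθ0 x
    have h2 := hcirc (2*Real.pi - θ) hθ2 x
    have e : (r:ℂ) • x = Complex.exp ((θ:ℝ) * Complex.I) • x
        + Complex.exp (((2*Real.pi - θ):ℝ) * Complex.I) • x := by
      rw [← add_smul, hmain]
    rw [e, hadd, h1, h2, ← add_smul, hmain]
  have hreal : ∀ (r : ℝ) (x : M), H ((r:ℂ) • x) = (r:ℂ) • H x := by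
    intro r x
    obtain ⟨n, hn⟩ := exists_nat_ge |r|
    set m : ℕ := n + 1 with hm
    have hm0 : (0:ℝ) < m := by positivity
    have hrm : |r / m| ≤ 1 := by
      rw [abs_div, abs_of_pos hm0, div_le_one hm0]
      calc |r| ≤ n := hn
        _ ≤ m := by exact_mod_cast Nat.le_succ n
    have hne : ((n:ℂ)+1) ≠ 0 := Nat.cast_add_one_ne_zero n
    have e : (r:ℂ) • x = (m:ℂ) • (((r/m : ℝ):ℂ) • x) := by
      rw [smul_smul]
      congr 1
      push_cast
      rw [mul_comm, div_mul_cancel₀ _ (Nat.cast_ne_zero.mpr (Nat.succ_ne_zero n))]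
    rw [e, Nat.cast_smul_eq_nsmul ℂ, hnsmul, hsmall _ hrm,
      ← Nat.cast_smul_eq_nsmul ℂ, smul_smul]
    congr 1
    push_cast
    rw [mul_comm, div_mul_cancel₀ _ (Nat.cast_ne_zero.mpr (Nat.succ_ne_zero n))]
  have hI : ∀ z : M, H (Complex.I • z) = Complex.I • H z := by
    have hpi : (0:ℝ) ≤ Real.pi / 2 := by have := Real.pi_pos; linarith
    have hexp : Complex.exp ((Real.pi/2 : ℝ) * Complex.I) = Complex.I := by
      rw [Complex.exp_mul_I, ← Complex.ofReal_cos, ← Complex.ofReal_sin,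
        Real.cos_pi_div_two, Real.sin_pi_div_two]
      simp
    intro z
    have := hcirc (Real.pi/2) hpi z
    rwa [hexp] at this
  intro c x
  have e : c • x = (c.re : ℂ) • x + (c.im : ℂ) • (Complex.I • x) := by
    rw [smul_smul, ← add_smul, Complex.re_add_im]
  rw [e, hadd, hreal, hreal, hI, smul_smul, ← add_smul, Complex.re_add_im]

end AlgebraHelpers

/-- Remark 2.14: with scalars from `T¹_{n₀}` in the additive-type control inequality,
there is a unique linear Jordan triple derivation `H` near `f`. -/
theorem stability_linear_jordan_triple_derivation
    (n₀ : ℕ) (hn₀ : 0 < n₀)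
    {X : Type*} [NormedRing X] [NormedAlgebra ℂ X] [CompleteSpace X]
    (f : X → X) (φ ψ : X → X → ℝ)
    (hφ0 : ∀ x y : X, 0 ≤ φ x y) (hψ0 : ∀ x y : X, 0 ≤ ψ x y)
    (hf0 : f 0 = 0)
    (h1 : ∀ x y : X, ‖f (x * y * x) - f x * y * x - x * f y * x - x * y * f x‖ ≤ ψ x y)
    (h2 : ∀ (x y : X) (μ : ℂ),
      (∃ t : ℝ, 0 ≤ t ∧ t ≤ 2 * Real.pi / n₀ ∧ μ = Complex.exp (t * Complex.I)) →
      ‖f ((2 * μ) • x + μ • y) + f (μ • x + (2 * μ) • y) -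
        μ • (f ((3 : ℂ) • x) + f ((3 : ℂ) • y))‖ ≤ φ x y)
    (L : ℝ) (hL0 : 0 < L) (hL1 : L < 1)
    (hφL : ∀ x y : X, (1 / 2) * φ (2 * x) (2 * y) ≤ L * φ x y)
    (hψlim : ∀ x y : X,
      Filter.Tendsto (fun k : ℕ => ((8 : ℝ) ^ k)⁻¹ * ψ ((2 : X) ^ k * x) ((2 : X) ^ k * y))
        Filter.atTop (nhds 0)) :
    ∃! H : X → X,
      ((∀ x y : X, H (x + y) = H x + H y) ∧
        (∀ (c : ℂ) (x : X), H (c • x) = c • H x) ∧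
        ∀ x y : X, H (x * y * x) = H x * y * x + x * H y * x + x * y * H x) ∧
      ∀ x : X, ‖f x - H x‖ ≤
        (φ (((1 : ℂ) / 2) • x) 0 + φ ((-(1 : ℂ) / 2) • x) 0 +
          φ (((1 : ℂ) / 2) • x) ((-(1 : ℂ) / 2) • x) +
          φ ((-(1 : ℂ) / 3) • x) (((2 : ℂ) / 3) • x)) / (2 - 2 * L) := by
  have pi_pos := Real.pi_pos
  have hn₀' : (0:ℝ) < n₀ := by exact_mod_cast hn₀
  have arc1 : ∃ t : ℝ, 0 ≤ t ∧ t ≤ 2 * Real.pi / n₀ ∧ (1:ℂ) = Complex.exp (t * Complex.I) := by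
    refine ⟨0, le_rfl, by positivity, by simp⟩
  have hP : ∀ x y : X, ‖f ((2:ℂ)•x + y) + f (x + (2:ℂ)•y) -
      (f ((3:ℂ)•x) + f ((3:ℂ)•y))‖ ≤ φ x y := by
    intro x y
    have := h2 x y 1 arc1
    simpa using this
  have smul2 : ∀ z : X, (2:X) * z = (2:ℂ) • z := by
    intro z; rw [two_mul, two_smul]
  have hφ2 : ∀ x y : X, φ ((2:ℂ)•x) ((2:ℂ)•y) ≤ (2*L) * φ x y := by
    intro x y
    have h := hφL x y
    rw [smul2 x, smul2 y] at h
    linarith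
  set Φ : X → ℝ := fun x =>
    φ (((1 : ℂ) / 2) • x) 0 + φ ((-(1 : ℂ) / 2) • x) 0 +
      φ (((1 : ℂ) / 2) • x) ((-(1 : ℂ) / 2) • x) +
      φ ((-(1 : ℂ) / 3) • x) (((2 : ℂ) / 3) • x) with hΦdef
  have hΦ0 : ∀ x : X, 0 ≤ Φ x := by
    intro x
    have t1 := hφ0 (((1 : ℂ) / 2) • x) 0
    have t2 := hφ0 ((-(1 : ℂ) / 2) • x) 0
    have t3 := hφ0 (((1 : ℂ) / 2) • x) ((-(1 : ℂ) / 2) • x)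
    have t4 := hφ0 ((-(1 : ℂ) / 3) • x) (((2 : ℂ) / 3) • x)
    simp only [hΦdef]
    linarith
  have hΦ2 : ∀ x : X, Φ ((2:ℂ)•x) ≤ (2*L) * Φ x := by
    intro x
    have t1 := hφ2 (((1 : ℂ) / 2) • x) 0
    have t2 := hφ2 ((-(1 : ℂ) / 2) • x) 0
    have t3 := hφ2 (((1 : ℂ) / 2) • x) ((-(1 : ℂ) / 2) • x)
    have t4 := hφ2 ((-(1 : ℂ) / 3) • x) (((2 : ℂ) / 3) • x)
    rw [smul_zero] at t1 t2
    rw [show (2:ℂ) • (((1:ℂ)/2) • x) = ((1:ℂ)/2) • ((2:ℂ) • x) by module] at t1 t3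
    rw [show (2:ℂ) • ((-(1:ℂ)/2) • x) = (-(1:ℂ)/2) • ((2:ℂ) • x) by module] at t2 t3
    rw [show (2:ℂ) • ((-(1:ℂ)/3) • x) = (-(1:ℂ)/3) • ((2:ℂ) • x) by module,
      show (2:ℂ) • (((2:ℂ)/3) • x) = ((2:ℂ)/3) • ((2:ℂ) • x) by module] at t4
    simp only [hΦdef]
    linarith
  have hΦpow : ∀ (k : ℕ) (x : X), Φ ((2:ℂ)^k • x) ≤ (2*L)^k * Φ x := by
    intro k
    induction k with
    | zero => intro x; simp
    | succ m ih =>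
      intro x
      rw [show ((2:ℂ)^(m+1)) • x = (2:ℂ) • ((2:ℂ)^m • x) by
        rw [pow_succ, mul_comm, mul_smul]]
      calc Φ ((2:ℂ) • ((2:ℂ)^m • x)) ≤ (2*L) * Φ ((2:ℂ)^m • x) := hΦ2 _
        _ ≤ (2*L) * ((2*L)^m * Φ x) := by
            apply mul_le_mul_of_nonneg_left (ih x) (by linarith)
        _ = (2*L)^(m+1) * Φ x := by ring
  have hφpow : ∀ (k : ℕ) (x y : X), φ ((2:ℂ)^k • x) ((2:ℂ)^k • y) ≤ (2*L)^k * φ x y := by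
    intro k
    induction k with
    | zero => intro x y; simp
    | succ m ih =>
      intro x y
      rw [show ((2:ℂ)^(m+1)) • x = (2:ℂ) • ((2:ℂ)^m • x) by
          rw [pow_succ, mul_comm, mul_smul],
        show ((2:ℂ)^(m+1)) • y = (2:ℂ) • ((2:ℂ)^m • y) by
          rw [pow_succ, mul_comm, mul_smul]]
      calc φ ((2:ℂ) • ((2:ℂ)^m • x)) ((2:ℂ) • ((2:ℂ)^m • y))
          ≤ (2*L) * φ ((2:ℂ)^m • x) ((2:ℂ)^m • y) := hφ2 _ _
        _ ≤ (2*L) * ((2*L)^m * φ x y) := by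
            apply mul_le_mul_of_nonneg_left (ih x y) (by linarith)
        _ = (2*L)^(m+1) * φ x y := by ring
  -- key inequality
  have hkey : ∀ x : X, ‖(2:ℂ) • f x - f ((2:ℂ) • x)‖ ≤ Φ x := by
    intro x
    have hA := hP (((1:ℂ)/2) • x) 0
    rw [smul_zero, add_zero, add_zero, smul_zero,
      show (2:ℂ) • (((1:ℂ)/2) • x) = x by module,
      show (3:ℂ) • (((1:ℂ)/2) • x) = ((3:ℂ)/2) • x by module] at hA
    have hB := hP ((-(1:ℂ)/2) • x) 0
    rw [smul_zero, add_zero, add_zero, smul_zero,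
      show (2:ℂ) • ((-(1:ℂ)/2) • x) = -x by module,
      show (3:ℂ) • ((-(1:ℂ)/2) • x) = (-(3:ℂ)/2) • x by module] at hB
    have hC := hP (((1:ℂ)/2) • x) ((-(1:ℂ)/2) • x)
    rw [show (2:ℂ) • (((1:ℂ)/2) • x) + ((-(1:ℂ)/2) • x) = ((1:ℂ)/2) • x by module,
      show ((1:ℂ)/2) • x + (2:ℂ) • ((-(1:ℂ)/2) • x) = (-(1:ℂ)/2) • x by module,
      show (3:ℂ) • (((1:ℂ)/2) • x) = ((3:ℂ)/2) • x by module,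
      show (3:ℂ) • ((-(1:ℂ)/2) • x) = (-(3:ℂ)/2) • x by module] at hC
    have hD := hP ((-(1:ℂ)/3) • x) (((2:ℂ)/3) • x)
    rw [show (2:ℂ) • ((-(1:ℂ)/3) • x) + ((2:ℂ)/3) • x = 0 by module,
      show (-(1:ℂ)/3) • x + (2:ℂ) • (((2:ℂ)/3) • x) = x by module,
      show (3:ℂ) • ((-(1:ℂ)/3) • x) = -x by module,
      show (3:ℂ) • (((2:ℂ)/3) • x) = (2:ℂ) • x by module, hf0, zero_add] at hD
    set A := f x + f (((1:ℂ)/2) • x) - (f (((3:ℂ)/2) • x) + f 0) with hAdef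
    set B := f (-x) + f ((-(1:ℂ)/2) • x) - (f ((-(3:ℂ)/2) • x) + f 0) with hBdef
    set C := f (((1:ℂ)/2) • x) + f ((-(1:ℂ)/2) • x)
      - (f (((3:ℂ)/2) • x) + f ((-(3:ℂ)/2) • x)) with hCdef
    set D := f x - (f (-x) + f ((2:ℂ) • x)) with hDdef
    have hid : (2:ℂ) • f x - f ((2:ℂ) • x) = A + B - C + D + f 0 + f 0 := by
      rw [hAdef, hBdef, hCdef, hDdef, two_smul]; abel
    rw [hid, hf0, add_zero, add_zero]
    calc ‖A + B - C + D‖ ≤ ‖A + B - C‖ + ‖D‖ := norm_add_le _ _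
      _ ≤ ‖A + B‖ + ‖C‖ + ‖D‖ := by
          have := norm_sub_le (A + B) C; linarith
      _ ≤ ‖A‖ + ‖B‖ + ‖C‖ + ‖D‖ := by
          have := norm_add_le A B; linarith
      _ ≤ Φ x := by
          simp only [hΦdef]
          linarith
  -- geometric sequence
  set g : ℕ → X → X := fun k x => ((1:ℂ)/2)^k • f ((2:ℂ)^k • x) with hgdef
  have hg0 : ∀ x : X, g 0 x = f x := by intro x; simp [hgdef]
  have hnorm_half : ‖((1:ℂ)/2)‖ = 1/2 := by simp
  have hpowhalf : ∀ k : ℕ, ((1:ℝ)/2)^k * (2*L)^k = L^k := by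
    intro k
    rw [← mul_pow, show (1/2:ℝ) * (2*L) = L from by ring]
  have hdist : ∀ (x : X) (k : ℕ), dist (g k x) (g (k+1) x) ≤ (Φ x / 2) * L^k := by
    intro x k
    have e : g k x - g (k+1) x = ((1:ℂ)/2)^(k+1) •
        ((2:ℂ) • f ((2:ℂ)^k • x) - f ((2:ℂ) • ((2:ℂ)^k • x))) := by
      rw [hgdef]
      simp only []
      rw [show ((2:ℂ)^(k+1)) • x = (2:ℂ) • ((2:ℂ)^k • x) by
        rw [pow_succ, mul_comm, mul_smul]]
      module
    rw [dist_eq_norm, e, norm_smul, norm_pow, hnorm_half]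
    calc (1/2:ℝ)^(k+1) * ‖(2:ℂ) • f ((2:ℂ)^k • x) - f ((2:ℂ) • ((2:ℂ)^k • x))‖
        ≤ (1/2:ℝ)^(k+1) * Φ ((2:ℂ)^k • x) := by
          apply mul_le_mul_of_nonneg_left (hkey _) (by positivity)
      _ ≤ (1/2:ℝ)^(k+1) * ((2*L)^k * Φ x) := by
          apply mul_le_mul_of_nonneg_left (hΦpow k x) (by positivity)
      _ = ((1/2:ℝ)^k * (2*L)^k) * Φ x * (1/2) := by rw [pow_succ]; ring
      _ = (Φ x / 2) * L^k := by rw [hpowhalf]; ring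
  have hex : ∀ x : X, ∃ l : X, Tendsto (fun k => g k x) atTop (𝓝 l) := by
    intro x
    exact cauchySeq_tendsto_of_complete
      (cauchySeq_of_le_geometric L (Φ x / 2) hL1 (hdist x))
  choose H hH using hex
  have hbound : ∀ x : X, ‖f x - H x‖ ≤ Φ x / (2 - 2*L) := by
    intro x
    have hd := dist_le_of_le_geometric_of_tendsto₀ L (Φ x / 2) hL1 (hdist x) (hH x)
    rw [hg0, dist_eq_norm] at hd
    calc ‖f x - H x‖ ≤ (Φ x / 2) / (1 - L) := hd
      _ = Φ x / (2 - 2*L) := by rw [div_div]; ring_nf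
  have hLpow : Tendsto (fun k : ℕ => (L:ℝ)^k) atTop (𝓝 0) :=
    tendsto_pow_atTop_nhds_zero_of_lt_one (by linarith) hL1
  have hEμ : ∀ (μ : ℂ),
      (∃ t : ℝ, 0 ≤ t ∧ t ≤ 2 * Real.pi / n₀ ∧ μ = Complex.exp (t * Complex.I)) →
      ∀ x y : X, H ((2*μ)•x + μ•y) + H (μ•x + (2*μ)•y)
        = μ • (H ((3:ℂ)•x) + H ((3:ℂ)•y)) := by
    intro μ harcμ x y
    have hv : Tendsto (fun k => g k ((2*μ)•x + μ•y) + g k (μ•x + (2*μ)•y)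
        - μ • (g k ((3:ℂ)•x) + g k ((3:ℂ)•y))) atTop
        (𝓝 (H ((2*μ)•x + μ•y) + H (μ•x + (2*μ)•y)
          - μ • (H ((3:ℂ)•x) + H ((3:ℂ)•y)))) := by
      exact ((hH _).add (hH _)).sub (((hH _).add (hH _)).const_smul μ)
    have ha : Tendsto (fun k : ℕ => L^k * φ x y) atTop (𝓝 0) := by
      have := hLpow.mul_const (φ x y)
      simpa using this
    have hb : ∀ k : ℕ, ‖g k ((2*μ)•x + μ•y) + g k (μ•x + (2*μ)•y)
        - μ • (g k ((3:ℂ)•x) + g k ((3:ℂ)•y))‖ ≤ L^k * φ x y := by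
      intro k
      have e : g k ((2*μ)•x + μ•y) + g k (μ•x + (2*μ)•y)
          - μ • (g k ((3:ℂ)•x) + g k ((3:ℂ)•y))
          = ((1:ℂ)/2)^k • (f ((2*μ)•((2:ℂ)^k • x) + μ•((2:ℂ)^k • y))
            + f (μ•((2:ℂ)^k • x) + (2*μ)•((2:ℂ)^k • y))
            - μ • (f ((3:ℂ)•((2:ℂ)^k • x)) + f ((3:ℂ)•((2:ℂ)^k • y)))) := by
        rw [hgdef]
        simp only []
        rw [show (2:ℂ)^k • ((2*μ)•x + μ•y)
            = (2*μ)•((2:ℂ)^k • x) + μ•((2:ℂ)^k • y) by module,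
          show (2:ℂ)^k • (μ•x + (2*μ)•y)
            = μ•((2:ℂ)^k • x) + (2*μ)•((2:ℂ)^k • y) by module,
          show (2:ℂ)^k • ((3:ℂ)•x) = (3:ℂ)•((2:ℂ)^k • x) by module,
          show (2:ℂ)^k • ((3:ℂ)•y) = (3:ℂ)•((2:ℂ)^k • y) by module]
        module
      rw [e, norm_smul, norm_pow, hnorm_half]
      calc (1/2:ℝ)^k * ‖f ((2*μ)•((2:ℂ)^k • x) + μ•((2:ℂ)^k • y))
            + f (μ•((2:ℂ)^k • x) + (2*μ)•((2:ℂ)^k • y))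
            - μ • (f ((3:ℂ)•((2:ℂ)^k • x)) + f ((3:ℂ)•((2:ℂ)^k • y)))‖
          ≤ (1/2:ℝ)^k * φ ((2:ℂ)^k • x) ((2:ℂ)^k • y) := by
            apply mul_le_mul_of_nonneg_left (h2 _ _ μ harcμ) (by positivity)
        _ ≤ (1/2:ℝ)^k * ((2*L)^k * φ x y) := by
            apply mul_le_mul_of_nonneg_left (hφpow k x y) (by positivity)
        _ = ((1/2:ℝ)^k * (2*L)^k) * φ x y := by ring
        _ = L^k * φ x y := by rw [hpowhalf]
    have := eq_zero_of_norm_le_tendsto hv ha hb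
    exact sub_eq_zero.mp this
  have hE1 : ∀ x y : X, H ((2:ℂ)•x + y) + H (x + (2:ℂ)•y)
      = H ((3:ℂ)•x) + H ((3:ℂ)•y) := by
    intro x y
    have := hEμ 1 arc1 x y
    simpa using this
  have hH0 : H 0 = 0 := by
    have hz : Tendsto (fun k => g k 0) atTop (𝓝 (0:X)) := by
      have : (fun k => g k 0) = fun _ => (0:X) := by
        funext k; simp [hgdef, hf0]
      rw [this]; exact tendsto_const_nhds
    exact tendsto_nhds_unique (hH 0) hz
  have hadd : ∀ x y : X, H (x + y) = H x + H y := additive_of_funceq H hH0 hE1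
  have harc : ∀ (μ : ℂ),
      (∃ t : ℝ, 0 ≤ t ∧ t ≤ 2 * Real.pi / n₀ ∧ μ = Complex.exp (t * Complex.I)) →
      ∀ x : X, H (μ • x) = μ • H x := by
    intro μ harcμ x
    have h := hEμ μ harcμ ((1/3:ℂ) • x) ((1/3:ℂ) • x)
    rw [show (2*μ)•((1/3:ℂ)•x) + μ•((1/3:ℂ)•x) = μ • x by module,
      show μ•((1/3:ℂ)•x) + (2*μ)•((1/3:ℂ)•x) = μ • x by module,
      show (3:ℂ)•((1/3:ℂ)•x) = x by module] at h
    rw [smul_add] at h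
    exact half_cancel h
  have hcirc : ∀ t : ℝ, 0 ≤ t → ∀ x : X,
      H (Complex.exp (t * Complex.I) • x) = Complex.exp (t * Complex.I) • H x := by
    intro t ht x
    obtain ⟨n, hn⟩ := exists_nat_ge (t * n₀ / (2 * Real.pi))
    set m : ℕ := n + 1 with hm
    have hm0 : (0:ℝ) < m := by positivity
    set s : ℝ := t / m with hs
    have hs0 : 0 ≤ s := by positivity
    have hsle : s ≤ 2 * Real.pi / n₀ := by
      rw [hs, div_le_div_iff₀ hm0 hn₀']
      have h1' : t * n₀ / (2 * Real.pi) ≤ m := by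
        calc t * n₀ / (2 * Real.pi) ≤ n := hn
          _ ≤ m := by exact_mod_cast Nat.le_succ n
      rw [div_le_iff₀ (by positivity)] at h1'
      linarith
    set μ : ℂ := Complex.exp (s * Complex.I) with hμ
    have harcμ : ∃ t' : ℝ, 0 ≤ t' ∧ t' ≤ 2 * Real.pi / n₀
        ∧ μ = Complex.exp (t' * Complex.I) := ⟨s, hs0, hsle, rfl⟩
    have hstep := harc μ harcμ
    have hiter : ∀ (j : ℕ) (z : X), H ((μ^j) • z) = (μ^j) • H z := by
      intro j
      induction j with
      | zero => intro z; simp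
      | succ i ih =>
        intro z
        rw [pow_succ, mul_comm, mul_smul, hstep, ih, mul_smul]
    have hexp : Complex.exp (t * Complex.I) = μ^m := by
      rw [hμ, ← Complex.exp_nat_mul]
      congr 1
      have e : (t:ℂ) = (m:ℂ) * (s:ℂ) := by
        rw [hs]
        push_cast
        rw [mul_comm, div_mul_cancel₀]
        push_cast
        exact Nat.cast_ne_zero.mpr (Nat.succ_ne_zero n)
      rw [e]
      ring
    rw [hexp]
    exact hiter m x
  have hsmul : ∀ (c : ℂ) (x : X), H (c • x) = c • H x := clinear_of_circle H hadd hcirc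
  have ePow : ∀ (k : ℕ) (z : X), (2:X)^k * z = (2:ℂ)^k • z := by
    intro k z
    rw [Algebra.smul_def, map_pow, map_ofNat]
  have hsc : ∀ k : ℕ, ((1:ℂ)/2)^(3*k) * ((2:ℂ)^k * (2:ℂ)^k) = ((1:ℂ)/2)^k := by
    intro k
    have h2 : ((1:ℂ)/2) * 2 = 1 := by norm_num
    calc ((1:ℂ)/2)^(3*k) * ((2:ℂ)^k*(2:ℂ)^k)
        = (((1:ℂ)/2)^k * 2^k) * (((1:ℂ)/2)^k * 2^k) * ((1:ℂ)/2)^k := by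
          rw [show 3*k = k+(k+k) from by ring, pow_add, pow_add]; ring
      _ = ((1:ℂ)/2)^k := by rw [← mul_pow, h2, one_pow]; ring
  have hjordan : ∀ x y : X, H (x*y*x) = H x * y * x + x * H y * x + x * y * H x := by
    intro x y
    have h3k : Tendsto (fun k : ℕ => 3*k) atTop atTop :=
      tendsto_atTop_atTop.mpr (fun b => ⟨b, fun a ha => by omega⟩)
    have hv : Tendsto (fun k => g (3*k) (x*y*x) - (g k x) * y * x - x * (g k y) * x
        - x * y * (g k x)) atTop
        (𝓝 (H (x*y*x) - H x * y * x - x * H y * x - x * y * H x)) := by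
      refine Tendsto.sub (Tendsto.sub (Tendsto.sub ?_ ?_) ?_) ?_
      · exact (hH (x*y*x)).comp h3k
      · exact ((hH x).mul_const y).mul_const x
      · exact (tendsto_const_nhds.mul (hH y)).mul_const x
      · exact (tendsto_const_nhds.mul tendsto_const_nhds).mul (hH x)
    have ha : Tendsto (fun k : ℕ => ((8:ℝ)^k)⁻¹ * ψ ((2:X)^k * x) ((2:X)^k * y)) atTop
        (𝓝 0) := hψlim x y
    have hb : ∀ k : ℕ, ‖g (3*k) (x*y*x) - (g k x) * y * x - x * (g k y) * x
        - x * y * (g k x)‖ ≤ ((8:ℝ)^k)⁻¹ * ψ ((2:X)^k * x) ((2:X)^k * y) := by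
      intro k
      have ebig : (2:ℂ)^(3*k) • (x*y*x)
          = ((2:ℂ)^k • x) * ((2:ℂ)^k • y) * ((2:ℂ)^k • x) := by
        simp only [smul_mul_assoc, mul_smul_comm, smul_smul]
        congr 1
        rw [show 3*k = k + (k + k) from by ring, pow_add, pow_add]
      have e : g (3*k) (x*y*x) - (g k x) * y * x - x * (g k y) * x - x * y * (g k x)
          = ((1:ℂ)/2)^(3*k) • (f (((2:ℂ)^k • x) * ((2:ℂ)^k • y) * ((2:ℂ)^k • x))
            - f ((2:ℂ)^k • x) * ((2:ℂ)^k • y) * ((2:ℂ)^k • x)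
            - ((2:ℂ)^k • x) * f ((2:ℂ)^k • y) * ((2:ℂ)^k • x)
            - ((2:ℂ)^k • x) * ((2:ℂ)^k • y) * f ((2:ℂ)^k • x)) := by
        rw [hgdef]
        simp only []
        rw [ebig]
        simp only [smul_sub, smul_mul_assoc, mul_smul_comm, smul_smul]
        rw [hsc k]
      rw [e, norm_smul, norm_pow, hnorm_half,
        show ((1:ℝ)/2)^(3*k) = ((8:ℝ)^k)⁻¹ from by
          rw [pow_mul, show ((1:ℝ)/2)^(3:ℕ) = (8:ℝ)⁻¹ from by norm_num, inv_pow]]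
      apply mul_le_mul_of_nonneg_left _ (by positivity)
      rw [ePow k x, ePow k y]
      exact h1 ((2:ℂ)^k • x) ((2:ℂ)^k • y)
    have hz := eq_zero_of_norm_le_tendsto hv ha hb
    have h' : H (x*y*x) - (H x * y * x + x * H y * x + x * y * H x) = 0 := by
      rw [show H (x*y*x) - (H x * y * x + x * H y * x + x * y * H x)
        = H (x*y*x) - H x * y * x - x * H y * x - x * y * H x from by abel, hz]
    exact sub_eq_zero.mp h'
  -- assemble
  refine ⟨H, ⟨⟨hadd, hsmul, hjordan⟩, fun x => hbound x⟩, ?_⟩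
  rintro H' ⟨⟨hadd', hsmul', hjordan'⟩, hbound'⟩
  funext x
  have hbound'' : ∀ z : X, ‖f z - H' z‖ ≤ Φ z / (2 - 2*L) := fun z => hbound' z
  have h2L : (0:ℝ) < 2 - 2*L := by linarith
  have key : ∀ k : ℕ, ‖H' x - H x‖ ≤ L^k * (2 * Φ x / (2 - 2*L)) := by
    intro k
    have e1 : H' x - H x = ((1:ℂ)/2)^k • (H' ((2:ℂ)^k • x) - H ((2:ℂ)^k • x)) := by
      rw [hsmul', hsmul, smul_sub, smul_smul, smul_smul,
        show ((1:ℂ)/2)^k * (2:ℂ)^k = 1 from by rw [← mul_pow]; norm_num,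
        one_smul, one_smul]
    rw [e1, norm_smul, norm_pow, hnorm_half]
    have hh1 : ‖H' ((2:ℂ)^k • x) - H ((2:ℂ)^k • x)‖
        ≤ ‖f ((2:ℂ)^k • x) - H' ((2:ℂ)^k • x)‖ + ‖f ((2:ℂ)^k • x) - H ((2:ℂ)^k • x)‖ := by
      have hns := norm_sub_le (H' ((2:ℂ)^k • x) - f ((2:ℂ)^k • x))
        (H ((2:ℂ)^k • x) - f ((2:ℂ)^k • x))
      rw [show H' ((2:ℂ)^k • x) - f ((2:ℂ)^k • x) - (H ((2:ℂ)^k • x) - f ((2:ℂ)^k • x))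
        = H' ((2:ℂ)^k • x) - H ((2:ℂ)^k • x) from by abel,
        norm_sub_rev (H' _) (f _), norm_sub_rev (H _) (f _)] at hns
      exact hns
    have b1 := hbound'' ((2:ℂ)^k • x)
    have b2 := hbound ((2:ℂ)^k • x)
    have hΦk := hΦpow k x
    calc (1/2:ℝ)^k * ‖H' ((2:ℂ)^k • x) - H ((2:ℂ)^k • x)‖
        ≤ (1/2:ℝ)^k * (2 * ((2*L)^k * Φ x) / (2 - 2*L)) := by
          apply mul_le_mul_of_nonneg_left _ (by positivity)
          calc ‖H' ((2:ℂ)^k • x) - H ((2:ℂ)^k • x)‖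
              ≤ Φ ((2:ℂ)^k • x) / (2 - 2*L) + Φ ((2:ℂ)^k • x) / (2 - 2*L) := by linarith
            _ = 2 * Φ ((2:ℂ)^k • x) / (2 - 2*L) := by ring
            _ ≤ 2 * ((2*L)^k * Φ x) / (2 - 2*L) := by gcongr
      _ = ((1/2:ℝ)^k * (2*L)^k) * (2 * Φ x / (2 - 2*L)) := by ring
      _ = L^k * (2 * Φ x / (2 - 2*L)) := by rw [hpowhalf]
  have ha : Tendsto (fun k : ℕ => L^k * (2 * Φ x / (2 - 2*L))) atTop (𝓝 0) := by
    have := hLpow.mul_const (2 * Φ x / (2 - 2*L))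
    simpa using this
  have : ‖H' x - H x‖ ≤ 0 := ge_of_tendsto' ha key
  have := norm_le_zero_iff.mp this
  exact sub_eq_zero.mp this
end
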